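/- arXiv:math/0511381 — 8 statements merged into one kernel-verified Lean document; each statement's English description precedes it below -/
import Mathlib

section
/- For every n ≥ 1, every 1 ≤ l ≤ n, and all nonnegative integers k_1,…,k_l with M_l := ∑_{j=1}^l j·k_j ≤ n, the marginal probability of the multiplicative measure satisfies P_n(k_1,…,k_l) = (∏_{j=1}^l ã_{k_j}^{(j)}) · T̃^{(l)}_{n−M_l} / c̃_n. -/
open Finset Filter Topology

/-- The partition function `c_n = ∑_{η ∈ Ω_n} ∏_{j=1}^n a_{k_j}^{(j)}`, where `a j k`
denotes `a_k^{(j)}` and partitions of `n` are identified with their part-count functions. -/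
noncomputable def c (a : ℕ → ℕ → ℝ) (n : ℕ) : ℝ :=
  ∑ P : Nat.Partition n, ∏ j ∈ Finset.Icc 1 n, a j (Multiset.count j P.parts)

/-- The scaled partition function `c̃_n = c_n / ∏_{j=1}^n a_0^{(j)}` (so `c̃_0 = 1`). -/
noncomputable def ctil (a : ℕ → ℕ → ℝ) (n : ℕ) : ℝ :=
  c a n / ∏ j ∈ Finset.Icc 1 n, a j 0

/-- The scaled tail sums `T̃^{(l)}_m`: the sum over partitions of `m` with all parts `> l`
of `∏_{j=l+1}^m ã_{k_j}^{(j)}`, with `ã_k^{(j)} = a_k^{(j)}/a_0^{(j)}`. -/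
noncomputable def Ttil (a : ℕ → ℕ → ℝ) (l m : ℕ) : ℝ :=
  ∑ P : Nat.Partition m,
    if ∀ j ∈ P.parts, l < j
    then ∏ j ∈ Finset.Icc (l + 1) m, a j (Multiset.count j P.parts) / a j 0 else 0

/-- The marginal probability `P_n(k_1,…,k_l) = μ_n({η : η_j = k_j, j = 1,…,l})` of the
multiplicative measure `μ_n(η) = c_n⁻¹ ∏_{j=1}^n a_{k_j}^{(j)}`. -/
noncomputable def Pmarg (a : ℕ → ℕ → ℝ) (l : ℕ) (k : Fin l → ℕ) (n : ℕ) : ℝ :=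
  (c a n)⁻¹ * ∑ P : Nat.Partition n,
    if ∀ i : Fin l, Multiset.count ((i : ℕ) + 1) P.parts = k i
    then ∏ j ∈ Finset.Icc 1 n, a j (Multiset.count j P.parts) else 0

lemma prodIoc (l : ℕ) (f : ℕ → ℝ) :
    ∏ j ∈ Finset.Ioc 0 l, f j = ∏ i : Fin l, f ((i : ℕ) + 1) := by
  rw [Fin.prod_univ_eq_prod_range (fun i => f (i + 1)) l, ← Finset.Icc_add_one_left_eq_Ioc]
  induction l with
  | zero => simp
  | succ m ih => rw [Finset.prod_range_succ, ← ih, Finset.prod_Icc_succ_top (by omega)]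


/-- For every `n ≥ 1`, `1 ≤ l ≤ n` and nonnegative integers `k_1,…,k_l` with
`M_l = ∑_{j=1}^l j k_j ≤ n`, one has
`P_n(k_1,…,k_l) = (∏_{j=1}^l ã_{k_j}^{(j)}) · T̃^{(l)}_{n-M_l} / c̃_n`. -/
theorem stmt0 (a : ℕ → ℕ → ℝ)
    (hnn : ∀ j k, 0 ≤ a j k) (h0 : ∀ j, 1 ≤ j → 0 < a j 0)
    (hc : ∀ n, 1 ≤ n → 0 < c a n)
    (n l : ℕ) (hn : 1 ≤ n) (hl : 1 ≤ l) (hln : l ≤ n)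
    (k : Fin l → ℕ) (hM : ∑ i : Fin l, ((i : ℕ) + 1) * k i ≤ n) :
    Pmarg a l k n
      = (∏ i : Fin l, a ((i : ℕ) + 1) (k i) / a ((i : ℕ) + 1) 0)
        * Ttil a l (n - ∑ i : Fin l, ((i : ℕ) + 1) * k i) / ctil a n := by
  classical
  set M : ℕ := ∑ i : Fin l, ((i : ℕ) + 1) * k i with hMdef
  set D : Multiset ℕ := ∑ i : Fin l, Multiset.replicate (k i) ((i : ℕ) + 1) with hDdef
  have hDcount : ∀ j : ℕ,
      Multiset.count j D = ∑ i : Fin l, if ((i : ℕ) + 1) = j then k i else 0 := by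
    intro j; rw [hDdef, Multiset.count_sum']
    simp [Multiset.count_replicate]
  have hDc1 : ∀ i : Fin l, Multiset.count ((i : ℕ) + 1) D = k i := by
    intro i
    rw [hDcount, Finset.sum_eq_single i]
    · simp
    · intro i' _ hne
      have : ((i' : ℕ) + 1) ≠ ((i : ℕ) + 1) := by
        intro h; exact hne (Fin.ext (by omega))
      simp [this]
      intro h; exact absurd (Fin.ext h) hne
    · simp
  have hDc2 : ∀ j : ℕ, l < j → Multiset.count j D = 0 := by
    intro j hj; rw [hDcount]
    apply Finset.sum_eq_zero
    intro i _
    have : ((i : ℕ) + 1) ≠ j := by have := i.isLt; omega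
    simp [this]
  have hDc0 : Multiset.count 0 D = 0 := by
    rw [hDcount]; apply Finset.sum_eq_zero; intro i _; simp
  have hDsum : D.sum = M := by
    rw [hDdef, hMdef]
    exact (map_sum Multiset.sumAddMonoidHom
        (fun i : Fin l => Multiset.replicate (k i) ((i : ℕ) + 1)) Finset.univ).trans
      (by simp [Multiset.sum_replicate, mul_comm])
  have hDelem : ∀ x ∈ D, 1 ≤ x ∧ x ≤ l := by
    intro x hx
    rw [hDdef, Multiset.mem_sum] at hx
    obtain ⟨i, _, hx⟩ := hx
    have := Multiset.eq_of_mem_replicate hx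
    subst this
    exact ⟨by omega, by have := i.isLt; omega⟩
  -- splitting of a constrained partition
  have hsplit : ∀ P : Nat.Partition n,
      (∀ i : Fin l, Multiset.count ((i : ℕ) + 1) P.parts = k i) →
      P.parts = D + P.parts.filter (fun j => l < j) := by
    intro P hP
    rw [Multiset.ext]
    intro j
    rw [Multiset.count_add, Multiset.count_filter]
    rcases Nat.lt_or_ge l j with hj | hj
    · rw [hDc2 j hj, if_pos hj, zero_add]
    · rw [if_neg (by omega), add_zero]
      rcases Nat.eq_zero_or_pos j with hj0 | hj0
      · subst hj0
        rw [hDc0, Multiset.count_eq_zero]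
        intro hmem
        exact absurd (P.parts_pos hmem) (by omega)
      · have hi : j - 1 < l := by omega
        have := hP ⟨j - 1, hi⟩
        have h1 := hDc1 ⟨j - 1, hi⟩
        simp only at this h1
        have hj1 : (j - 1) + 1 = j := by omega
        rw [hj1] at this h1
        rw [this, h1]
  have hfsum : ∀ P : Nat.Partition n,
      (∀ i : Fin l, Multiset.count ((i : ℕ) + 1) P.parts = k i) →
      (P.parts.filter (fun j => l < j)).sum = n - M := by
    intro P hP
    have h := congrArg Multiset.sum (hsplit P hP)
    rw [Multiset.sum_add, hDsum, P.parts_sum] at h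
    omega
  have key : (∑ P : Nat.Partition n,
        if ∀ i : Fin l, Multiset.count ((i : ℕ) + 1) P.parts = k i
        then ∏ j ∈ Finset.Icc 1 n, a j (Multiset.count j P.parts) else 0)
      = ∑ Q : Nat.Partition (n - M),
        if ∀ j ∈ Q.parts, l < j
        then (∏ i : Fin l, a ((i : ℕ) + 1) (k i))
          * ∏ j ∈ Finset.Icc (l + 1) n, a j (Multiset.count j Q.parts) else 0 := by
    rw [← Finset.sum_filter, ← Finset.sum_filter]
    refine Finset.sum_bij'
      (fun P hP => Nat.Partition.mk (P.parts.filter (fun j => l < j))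
        (fun hj => P.parts_pos (Multiset.mem_of_mem_filter hj))
        (hfsum P ((Finset.mem_filter.mp hP).2)))
      (fun Q hQ => Nat.Partition.mk (D + Q.parts)
        (by
          intro x hx
          rcases Multiset.mem_add.mp hx with h | h
          · exact (hDelem x h).1
          · exact Q.parts_pos h)
        (by rw [Multiset.sum_add, hDsum, Q.parts_sum]; omega))
      ?_ ?_ ?_ ?_ ?_
    · intro P hP
      simp only [Finset.mem_filter, Finset.mem_univ, true_and]
      intro j hj
      exact (Multiset.mem_filter.mp hj).2
    · intro Q hQ
      simp only [Finset.mem_filter, Finset.mem_univ, true_and] at hQ ⊢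
      intro i
      rw [Multiset.count_add, hDc1 i]
      have : Multiset.count ((i : ℕ) + 1) Q.parts = 0 := by
        rw [Multiset.count_eq_zero]
        intro hmem
        have := hQ _ hmem
        have := i.isLt
        omega
      rw [this, add_zero]
    · intro P hP
      apply Nat.Partition.ext
      exact (hsplit P ((Finset.mem_filter.mp hP).2)).symm
    · intro Q hQ
      simp only [Finset.mem_filter, Finset.mem_univ, true_and] at hQ
      apply Nat.Partition.ext
      show (D + Q.parts).filter (fun j => l < j) = Q.parts
      rw [Multiset.filter_add, Multiset.filter_eq_nil.mpr
        (fun x hx => by have := hDelem x hx; omega), Multiset.filter_eq_self.mpr hQ, zero_add]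
    · intro P hP
      have hP' := (Finset.mem_filter.mp hP).2
      show (∏ j ∈ Finset.Icc 1 n, a j (Multiset.count j P.parts))
        = (∏ i : Fin l, a ((i : ℕ) + 1) (k i))
          * ∏ j ∈ Finset.Icc (l + 1) n, a j (Multiset.count j (P.parts.filter (fun j => l < j)))
      have h1 : Finset.Icc 1 n = Finset.Ioc 0 n := Finset.Icc_add_one_left_eq_Ioc 0 n
      have h2 : Finset.Icc (l + 1) n = Finset.Ioc l n := Finset.Icc_add_one_left_eq_Ioc l n
      rw [h1, h2, ← Finset.prod_Ioc_consecutive _ (Nat.zero_le l) hln]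
      congr 1
      · rw [prodIoc]
        exact Finset.prod_congr rfl (fun i _ => by rw [hP' i])
      · apply Finset.prod_congr rfl
        intro j hj
        have hjl : l < j := (Finset.mem_Ioc.mp hj).1
        rw [Multiset.count_filter, if_pos hjl]
  have tail : (∑ Q : Nat.Partition (n - M),
        if ∀ j ∈ Q.parts, l < j
        then ∏ j ∈ Finset.Icc (l + 1) n, a j (Multiset.count j Q.parts) else 0)
      = Ttil a l (n - M) * ∏ j ∈ Finset.Icc (l + 1) n, a j 0 := by
    rw [Ttil, Finset.sum_mul]
    apply Finset.sum_congr rfl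
    intro Q _
    by_cases hQ : ∀ j ∈ Q.parts, l < j
    · rw [if_pos hQ, if_pos hQ]
      have hcount0 : ∀ j : ℕ, n - M < j → Multiset.count j Q.parts = 0 := by
        intro j hj
        rw [Multiset.count_eq_zero]
        intro hmem
        have := Multiset.single_le_sum (fun x _ => Nat.zero_le x) j hmem
        rw [Q.parts_sum] at this
        omega
      have hsub : Finset.Icc (l + 1) (n - M) ⊆ Finset.Icc (l + 1) n :=
        Finset.Icc_subset_Icc_right (Nat.sub_le n M)
      rw [Finset.prod_subset hsub (by
        intro j hjn hjm
        have h1 := Finset.mem_Icc.mp hjn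
        have hj : n - M < j := by
          simp only [Finset.mem_Icc, not_and, not_le] at hjm
          exact hjm h1.1
        rw [hcount0 j hj, div_self (ne_of_gt (h0 j (by omega)))])]
      rw [← Finset.prod_mul_distrib]
      apply Finset.prod_congr rfl
      intro j hj
      have hj1 : 1 ≤ j := le_trans (by omega) (Finset.mem_Icc.mp hj).1
      rw [div_mul_cancel₀ _ (ne_of_gt (h0 j hj1))]
    · rw [if_neg hQ, if_neg hQ, zero_mul]
  have pull : (∑ Q : Nat.Partition (n - M),
        if ∀ j ∈ Q.parts, l < j
        then (∏ i : Fin l, a ((i : ℕ) + 1) (k i))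
          * ∏ j ∈ Finset.Icc (l + 1) n, a j (Multiset.count j Q.parts) else 0)
      = (∏ i : Fin l, a ((i : ℕ) + 1) (k i))
        * ∑ Q : Nat.Partition (n - M),
          if ∀ j ∈ Q.parts, l < j
          then ∏ j ∈ Finset.Icc (l + 1) n, a j (Multiset.count j Q.parts) else 0 := by
    rw [Finset.mul_sum]
    exact Finset.sum_congr rfl (fun Q _ => by rw [mul_ite, mul_zero])
  -- product decompositions
  have hB : (∏ j ∈ Finset.Icc 1 n, a j 0)
      = (∏ j ∈ Finset.Ioc 0 l, a j 0) * ∏ j ∈ Finset.Icc (l + 1) n, a j 0 := by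
    rw [show Finset.Icc 1 n = Finset.Ioc 0 n from Finset.Icc_add_one_left_eq_Ioc 0 n, Finset.Icc_add_one_left_eq_Ioc l n,
      ← Finset.prod_Ioc_consecutive _ (Nat.zero_le l) hln]
  have hA : (∏ i : Fin l, a ((i : ℕ) + 1) (k i) / a ((i : ℕ) + 1) 0)
      * (∏ j ∈ Finset.Ioc 0 l, a j 0) = ∏ i : Fin l, a ((i : ℕ) + 1) (k i) := by
    rw [prodIoc l (fun j => a j 0), ← Finset.prod_mul_distrib]
    exact Finset.prod_congr rfl (fun i _ =>
      div_mul_cancel₀ _ (ne_of_gt (h0 ((i : ℕ) + 1) (by omega))))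
  have hB1ne : (∏ j ∈ Finset.Ioc 0 l, a j 0) ≠ 0 :=
    Finset.prod_ne_zero_iff.mpr (fun j hj =>
      ne_of_gt (h0 j (Finset.mem_Ioc.mp hj).1))
  have hB2ne : (∏ j ∈ Finset.Icc (l + 1) n, a j 0) ≠ 0 :=
    Finset.prod_ne_zero_iff.mpr (fun j hj =>
      ne_of_gt (h0 j (le_trans (by omega) (Finset.mem_Icc.mp hj).1)))
  have hcne : c a n ≠ 0 := ne_of_gt (hc n hn)
  rw [Pmarg, key, pull, tail, ctil, hB, ← hA]
  field_simp
end

section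
/- Suppose (c̃_n)_{n≥0} ∈ RT_ρ for some ρ ∈ [0,∞) and that for every l ≥ 1 the limit q^{(l)} := lim_{n→∞} T̃^{(l)}_n/c̃_n exists with 0 < q^{(l)} < ∞. Then for every l ≥ 1 and every tuple (k_1,…,k_l) ∈ ℕ^l, lim_{n→∞} P_n(k_1,…,k_l) = q^{(l)} · ∏_{j=1}^l ã_{k_j}^{(j)} ρ^{j·k_j} (with 0^0 = 1); in particular the limiting finite-dimensional laws are product measures, i.e., the counts of small components are asymptotically independent. -/
open Finset Filter Topology

/-- A sequence of nonnegative reals is in `RT_ρ` if `d_n/d_{n+1} → ρ`. -/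
def RT (d : ℕ → ℝ) (ρ : ℝ) : Prop :=
  Tendsto (fun n => d n / d (n + 1)) atTop (nhds ρ)

def smallM (l : ℕ) (k : Fin l → ℕ) : Multiset ℕ :=
  ∑ i : Fin l, Multiset.replicate (k i) ((i : ℕ) + 1)
lemma count_smallM_of_gt {l : ℕ} (k : Fin l → ℕ) {j : ℕ} (h : l < j) :
    Multiset.count j (smallM l k) = 0 := by
  rw [smallM, Multiset.count_sum']
  refine Finset.sum_eq_zero fun i _ => ?_
  rw [Multiset.count_replicate, if_neg (by have := i.2; omega)]
lemma count_smallM_zero {l : ℕ} (k : Fin l → ℕ) :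
    Multiset.count 0 (smallM l k) = 0 := by
  rw [smallM, Multiset.count_sum']
  refine Finset.sum_eq_zero fun i _ => ?_
  rw [Multiset.count_replicate, if_neg (by omega)]
lemma count_smallM_fin {l : ℕ} (k : Fin l → ℕ) (i : Fin l) :
    Multiset.count ((i : ℕ) + 1) (smallM l k) = k i := by
  rw [smallM, Multiset.count_sum']
  rw [Finset.sum_eq_single i]
  · rw [Multiset.count_replicate, if_pos rfl]
  · intro b _ hb
    rw [Multiset.count_replicate, if_neg (fun h => hb (Fin.ext (by omega)))]
  · simp
lemma mem_smallM {l : ℕ} (k : Fin l → ℕ) {j : ℕ} (h : j ∈ smallM l k) : 1 ≤ j ∧ j ≤ l := by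
  rw [smallM, Multiset.mem_sum] at h
  obtain ⟨i, _, hi⟩ := h
  have := Multiset.eq_of_mem_replicate hi
  have := i.2; omega
lemma sum_smallM {l : ℕ} (k : Fin l → ℕ) :
    (smallM l k).sum = ∑ i : Fin l, ((i : ℕ) + 1) * k i := by
  rw [smallM]
  rw [Multiset.sum_sum]
  simp [Multiset.sum_replicate, mul_comm]
lemma parts_decomp {l : ℕ} (k : Fin l → ℕ) {n : ℕ} (P : Nat.Partition n)
    (hP : ∀ i : Fin l, Multiset.count ((i : ℕ) + 1) P.parts = k i) :
    P.parts = P.parts.filter (l < ·) + smallM l k := by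
  ext j
  rw [Multiset.count_add, Multiset.count_filter]
  rcases lt_or_ge l j with h | h
  · rw [if_pos h, count_smallM_of_gt k h, add_zero]
  · rw [if_neg (by omega)]
    rcases Nat.eq_zero_or_pos j with rfl | hj
    · have h1 : Multiset.count 0 P.parts = 0 :=
        Multiset.count_eq_zero.2 (fun hmem => absurd (P.parts_pos hmem) (by omega))
      rw [h1, count_smallM_zero]
    · have hi : j - 1 < l := by omega
      have h1 := hP ⟨j - 1, hi⟩
      have h2 := count_smallM_fin k ⟨j - 1, hi⟩
      simp only [Fin.val_mk] at h1 h2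
      rw [show j - 1 + 1 = j by omega] at h1 h2
      omega
lemma filter_sum_eq {l : ℕ} (k : Fin l → ℕ) {n : ℕ} (P : Nat.Partition n)
    (hP : ∀ i : Fin l, Multiset.count ((i : ℕ) + 1) P.parts = k i) :
    (P.parts.filter (l < ·)).sum = n - ∑ i : Fin l, ((i : ℕ) + 1) * k i := by
  have h1 := congrArg Multiset.sum (parts_decomp k P hP)
  rw [Multiset.sum_add, sum_smallM, P.parts_sum] at h1
  omega
lemma prod_fin_eq_prod_Icc (g : ℕ → ℝ) (l : ℕ) :
    ∏ i : Fin l, g ((i : ℕ) + 1) = ∏ j ∈ Finset.Icc 1 l, g j := by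
  rw [Fin.prod_univ_eq_prod_range (fun i => g (i + 1)) l]
  refine Finset.prod_bij (fun i _ => i + 1) ?_ ?_ ?_ ?_
  · intro i hi; simp at hi ⊢; omega
  · intro i _ j _ h; simpa using h
  · intro j hj; simp at hj; exact ⟨j - 1, by simp; omega, by omega⟩
  · intro i _; rfl
lemma Icc_succ_eq_Ioc (u v : ℕ) : Finset.Icc (u + 1) v = Finset.Ioc u v := by
  ext x; simp [Finset.mem_Icc, Finset.mem_Ioc]
lemma pointwise (a : ℕ → ℕ → ℝ) (h0 : ∀ j, 1 ≤ j → 0 < a j 0)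
    {l : ℕ} (k : Fin l → ℕ) {n : ℕ} (P : Nat.Partition n)
    (hP : ∀ i : Fin l, Multiset.count ((i : ℕ) + 1) P.parts = k i)
    (hl : l ≤ n) :
    ∏ j ∈ Finset.Icc 1 n, a j (Multiset.count j P.parts)
    = (∏ i : Fin l, a ((i : ℕ) + 1) (k i)) * (∏ j ∈ Finset.Icc (l + 1) n, a j 0)
      * ∏ j ∈ Finset.Icc (l + 1) (n - ∑ i : Fin l, ((i : ℕ) + 1) * k i),
          a j (Multiset.count j (P.parts.filter (l < ·))) / a j 0 := by
  set s := ∑ i : Fin l, ((i : ℕ) + 1) * k i with hsdef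
  set m := n - s with hmdef
  set t := P.parts.filter (l < ·) with htdef
  have hIcc1 : Finset.Icc 1 n = Finset.Ioc 0 n := Icc_succ_eq_Ioc 0 n
  have hIcc1l : Finset.Icc 1 l = Finset.Ioc 0 l := Icc_succ_eq_Ioc 0 l
  rw [hIcc1, Icc_succ_eq_Ioc, Icc_succ_eq_Ioc,
    ← Finset.prod_Ioc_consecutive _ (Nat.zero_le l) hl]
  have hfirst : ∏ j ∈ Finset.Ioc 0 l, a j (Multiset.count j P.parts)
      = ∏ i : Fin l, a ((i : ℕ) + 1) (k i) := by
    rw [← hIcc1l, ← prod_fin_eq_prod_Icc (fun j => a j (Multiset.count j P.parts)) l]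
    exact Finset.prod_congr rfl fun i _ => by rw [hP i]
  have hcnt : ∀ j ∈ Finset.Ioc l n, Multiset.count j P.parts = Multiset.count j t := by
    intro j hj
    rw [htdef, Multiset.count_filter, if_pos (Finset.mem_Ioc.1 hj).1]
  have hcnt0 : ∀ j ∈ Finset.Ioc l n, j ∉ Finset.Ioc l m → Multiset.count j t = 0 := by
    intro j hj hj'
    simp only [Finset.mem_Ioc] at hj hj'
    have hjm : m < j := by omega
    refine Multiset.count_eq_zero.2 fun hmem => ?_
    have hle : j ≤ t.sum := Multiset.le_sum_of_mem hmem
    rw [htdef, filter_sum_eq k P hP] at hle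
    omega
  have hsecond : ∏ j ∈ Finset.Ioc l n, a j (Multiset.count j P.parts)
      = (∏ j ∈ Finset.Ioc l m, a j (Multiset.count j t) / a j 0)
        * ∏ j ∈ Finset.Ioc l n, a j 0 := by
    have step1 : ∏ j ∈ Finset.Ioc l n, a j (Multiset.count j P.parts)
        = ∏ j ∈ Finset.Ioc l n, (a j (Multiset.count j t) / a j 0 * a j 0) := by
      refine Finset.prod_congr rfl fun j hj => ?_
      rw [hcnt j hj, div_mul_cancel₀]
      exact (h0 j (by have := (Finset.mem_Ioc.1 hj).1; omega)).ne'
    rw [step1, Finset.prod_mul_distrib]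
    congr 1
    refine (Finset.prod_subset (Finset.Ioc_subset_Ioc le_rfl (Nat.sub_le n s)) ?_).symm
    intro j hj hj'
    rw [hcnt0 j hj hj', div_self]
    exact (h0 j (by have := (Finset.mem_Ioc.1 hj).1; omega)).ne'
  rw [hfirst, hsecond]; ring
lemma key (a : ℕ → ℕ → ℝ) (h0 : ∀ j, 1 ≤ j → 0 < a j 0)
    {l : ℕ} (k : Fin l → ℕ) {n : ℕ}
    (hl : l ≤ n) (hs : (∑ i : Fin l, ((i : ℕ) + 1) * k i) ≤ n) :
    (∑ P : Nat.Partition n,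
      if ∀ i : Fin l, Multiset.count ((i : ℕ) + 1) P.parts = k i
      then ∏ j ∈ Finset.Icc 1 n, a j (Multiset.count j P.parts) else 0)
    = (∏ i : Fin l, a ((i : ℕ) + 1) (k i)) * (∏ j ∈ Finset.Icc (l + 1) n, a j 0)
        * Ttil a l (n - ∑ i : Fin l, ((i : ℕ) + 1) * k i) := by
  set s := ∑ i : Fin l, ((i : ℕ) + 1) * k i with hsdef
  set m := n - s with hmdef
  rw [Ttil, ← Finset.sum_filter, ← Finset.sum_filter, Finset.mul_sum]
  refine Finset.sum_bij'
    (fun P hP => (⟨P.parts.filter (l < ·),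
        fun {j} hj => P.parts_pos (Multiset.mem_of_mem_filter hj),
        filter_sum_eq k P (Finset.mem_filter.1 hP).2⟩ : Nat.Partition m))
    (fun Q hQ => (⟨Q.parts + smallM l k,
        fun {j} hj => by
          rcases Multiset.mem_add.1 hj with h | h
          · exact Q.parts_pos h
          · have := mem_smallM k h; omega,
        by rw [Multiset.sum_add, Q.parts_sum, sum_smallM]; omega⟩ : Nat.Partition n))
    ?_ ?_ ?_ ?_ ?_
  · intro P hP
    simp only [Finset.mem_filter, Finset.mem_univ, true_and]
    intro j hj
    exact Multiset.of_mem_filter hj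
  · intro Q hQ
    simp only [Finset.mem_filter, Finset.mem_univ, true_and] at hQ ⊢
    intro i
    rw [Multiset.count_add, count_smallM_fin k i]
    have h1 : Multiset.count ((i : ℕ) + 1) Q.parts = 0 := by
      refine Multiset.count_eq_zero.2 fun hmem => ?_
      have := hQ _ hmem
      have := i.2
      omega
    omega
  · intro P hP
    apply Nat.Partition.ext
    exact (parts_decomp k P (Finset.mem_filter.1 hP).2).symm
  · intro Q hQ
    simp only [Finset.mem_filter, Finset.mem_univ, true_and] at hQ
    apply Nat.Partition.ext
    simp only
    rw [Multiset.filter_add]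
    have h1 : Q.parts.filter (l < ·) = Q.parts := Multiset.filter_eq_self.2 hQ
    have h2 : (smallM l k).filter (l < ·) = 0 := by
      rw [Multiset.filter_eq_nil]
      intro j hj
      have := mem_smallM k hj
      omega
    rw [h1, h2, add_zero]
  · intro P hP
    have hP' := (Finset.mem_filter.1 hP).2
    exact pointwise a h0 k P hP' hl
lemma prod_a0_pos (a : ℕ → ℕ → ℝ) (h0 : ∀ j, 1 ≤ j → 0 < a j 0) (u n : ℕ) :
    0 < ∏ j ∈ Finset.Icc (u + 1) n, a j 0 :=
  Finset.prod_pos fun j hj => h0 j (by have := (Finset.mem_Icc.1 hj).1; omega)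
lemma ctil_pos (a : ℕ → ℕ → ℝ) (h0 : ∀ j, 1 ≤ j → 0 < a j 0)
    (hc : ∀ n, 1 ≤ n → 0 < c a n) (n : ℕ) : 0 < ctil a n := by
  rcases Nat.eq_zero_or_pos n with rfl | hn
  · have : c a 0 = 1 := by simp [c]
    rw [ctil, this]; norm_num
  · exact div_pos (hc n hn) (prod_a0_pos a h0 0 n)
lemma PmargEq (a : ℕ → ℕ → ℝ) (h0 : ∀ j, 1 ≤ j → 0 < a j 0)
    (hc : ∀ n, 1 ≤ n → 0 < c a n)
    {l : ℕ} (k : Fin l → ℕ) {n : ℕ}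
    (hl : l ≤ n) (hs : (∑ i : Fin l, ((i : ℕ) + 1) * k i) ≤ n) (hn : 1 ≤ n) :
    Pmarg a l k n = (∏ i : Fin l, a ((i : ℕ) + 1) (k i) / a ((i : ℕ) + 1) 0)
      * (Ttil a l (n - ∑ i : Fin l, ((i : ℕ) + 1) * k i) / ctil a n) := by
  rw [Pmarg, key a h0 k hl hs, ctil]
  have hA : ∏ j ∈ Finset.Icc 1 n, a j 0
      = (∏ j ∈ Finset.Icc 1 l, a j 0) * ∏ j ∈ Finset.Icc (l + 1) n, a j 0 := by
    rw [Icc_succ_eq_Ioc 0 n, Icc_succ_eq_Ioc 0 l, Icc_succ_eq_Ioc l n]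
    exact (Finset.prod_Ioc_consecutive _ (Nat.zero_le l) hl).symm
  have hprod : ∏ i : Fin l, a ((i : ℕ) + 1) (k i) / a ((i : ℕ) + 1) 0
      = (∏ i : Fin l, a ((i : ℕ) + 1) (k i)) / ∏ j ∈ Finset.Icc 1 l, a j 0 := by
    rw [Finset.prod_div_distrib, prod_fin_eq_prod_Icc (fun j => a j 0) l]
  rw [hA, hprod]
  have hC : c a n ≠ 0 := (hc n hn).ne'
  have hAL : (∏ j ∈ Finset.Icc 1 l, a j 0) ≠ 0 := by
    have := prod_a0_pos a h0 0 l
    rw [Icc_succ_eq_Ioc] at this ⊢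
    exact this.ne'
  have hB : (∏ j ∈ Finset.Icc (l + 1) n, a j 0) ≠ 0 := (prod_a0_pos a h0 l n).ne'
  field_simp
lemma ratio_tendsto (d : ℕ → ℝ) (hd : ∀ n, 0 < d n) (ρ : ℝ) (h : RT d ρ) (s : ℕ) :
    Tendsto (fun n => d (n - s) / d n) atTop (nhds (ρ ^ s)) := by
  induction s with
  | zero =>
    simp only [Nat.sub_zero, pow_zero]
    exact tendsto_const_nhds.congr fun n => (div_self (hd n).ne').symm
  | succ s ih =>
    have h1 : Tendsto (fun n => d (n - (s + 1)) / d (n - s)) atTop (nhds ρ) := by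
      refine (h.comp (tendsto_sub_atTop_nat (s + 1))).congr' ?_
      filter_upwards [eventually_ge_atTop (s + 1)] with n hn
      simp only [Function.comp_apply]
      congr 2
      omega
    have h2 := h1.mul ih
    rw [show ρ * ρ ^ s = ρ ^ (s + 1) by ring] at h2
    refine h2.congr fun n => ?_
    rw [div_mul_div_cancel₀]
    exact (hd (n - s)).ne'

set_option maxHeartbeats 1000000 in
/-- Suppose `(c̃_n) ∈ RT_ρ` for some `ρ ∈ [0,∞)` and for each `l ≥ 1` the limit
`q^{(l)} = lim T̃^{(l)}_n/c̃_n` exists with `0 < q^{(l)} < ∞`. Then for every `l ≥ 1` and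
every tuple `(k_1,…,k_l) ∈ ℕ^l`,
`lim_{n→∞} P_n(k_1,…,k_l) = q^{(l)} ∏_{j=1}^l ã_{k_j}^{(j)} ρ^{j k_j}` (with `0^0 = 1`);
in particular the limiting finite-dimensional laws are product measures, i.e. the counts
of small components are asymptotically independent. -/
theorem stmt3 (a : ℕ → ℕ → ℝ)
    (hnn : ∀ j k, 0 ≤ a j k) (h0 : ∀ j, 1 ≤ j → 0 < a j 0)
    (hc : ∀ n, 1 ≤ n → 0 < c a n)
    (ρ : ℝ) (hρ : 0 ≤ ρ) (hRT : RT (ctil a) ρ)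
    (q : ℕ → ℝ)
    (hq : ∀ l, 1 ≤ l → 0 < q l ∧
      Tendsto (fun n => Ttil a l n / ctil a n) atTop (nhds (q l))) :
    ∀ l, 1 ≤ l → ∀ k : Fin l → ℕ,
      Tendsto (fun n => Pmarg a l k n) atTop
        (nhds (q l * ∏ i : Fin l,
          (a ((i : ℕ) + 1) (k i) / a ((i : ℕ) + 1) 0) * ρ ^ (((i : ℕ) + 1) * k i))) := by
  intro l hl k
  set s := ∑ i : Fin l, ((i : ℕ) + 1) * k i with hsdef
  have hct : ∀ n, 0 < ctil a n := ctil_pos a h0 hc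
  have hT : Tendsto (fun n => Ttil a l (n - s) / ctil a (n - s)) atTop (nhds (q l)) :=
    (hq l hl).2.comp (tendsto_sub_atTop_nat s)
  have hR : Tendsto (fun n => ctil a (n - s) / ctil a n) atTop (nhds (ρ ^ s)) :=
    ratio_tendsto (ctil a) hct ρ hRT s
  have hconst : Tendsto (fun _ : ℕ => ∏ i : Fin l, a ((i : ℕ) + 1) (k i) / a ((i : ℕ) + 1) 0)
      atTop (nhds (∏ i : Fin l, a ((i : ℕ) + 1) (k i) / a ((i : ℕ) + 1) 0)) :=
    tendsto_const_nhds
  have hlim := hconst.mul (hT.mul hR)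
  have hval : (∏ i : Fin l, a ((i : ℕ) + 1) (k i) / a ((i : ℕ) + 1) 0) * (q l * ρ ^ s)
      = q l * ∏ i : Fin l,
          (a ((i : ℕ) + 1) (k i) / a ((i : ℕ) + 1) 0) * ρ ^ (((i : ℕ) + 1) * k i) := by
    rw [Finset.prod_mul_distrib, Finset.prod_pow_eq_pow_sum]
    ring
  rw [hval] at hlim
  refine hlim.congr' ?_
  filter_upwards [eventually_ge_atTop (l + s + 1)] with n hn
  have hln : l ≤ n := by omega
  have hsn : s ≤ n := by omega
  have h1n : 1 ≤ n := by omega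
  rw [PmargEq a h0 hc k hln hsn h1n]
  congr 1
  rw [div_mul_div_cancel₀]
  exact (hct (n - s)).ne'
end

section
/- Suppose the counting process is convergent (for every l ≥ 1 and (k_1,…,k_l) ∈ ℕ^l the limit of P_n(k_1,…,k_l) exists and for each l these limits sum to 1 over ℕ^l) and (c̃_n)_{n≥0} ∈ RT_ρ for some ρ ∈ [0,∞). Then for every l ≥ 1 and (k_1,…,k_l) ∈ ℕ^l, lim_{n→∞} P_n(k_1,…,k_l) = ∏_{j=1}^l a^{(j)}_{k_j}(ρ), where for ρ > 0 the tilted probabilities are a^{(j)}_k(ρ) = ρ^{jk} a_k^{(j)}/S^{(j)}(ρ) with S^{(j)}(ρ) = ∑_{k≥0} ρ^{jk} a_k^{(j)} < ∞, and for ρ = 0 one sets a^{(j)}_k(0) = 1 if k = 0 and 0 otherwise. -/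
open Finset Filter Topology

/-- The counting process is convergent: all finite-dimensional marginals converge and the
limits form probability laws. -/
def Convergent (a : ℕ → ℕ → ℝ) : Prop :=
  ∃ F : (l : ℕ) → (Fin l → ℕ) → ℝ,
    (∀ l, 1 ≤ l → ∀ k : Fin l → ℕ,
      Tendsto (fun n => Pmarg a l k n) atTop (nhds (F l k))) ∧
    (∀ l, 1 ≤ l → HasSum (F l) 1)

/-- The tilted probabilities: `a_k^{(j)}(ρ) = ρ^{jk} a_k^{(j)} / S^{(j)}(ρ)` for `ρ > 0`
(where `S^{(j)}(ρ) = ∑_k ρ^{jk} a_k^{(j)}`), and for `ρ = 0`, `a_k^{(j)}(0) = 1` if `k = 0`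
and `0` otherwise. -/
noncomputable def tilt (a : ℕ → ℕ → ℝ) (ρ : ℝ) (j k : ℕ) : ℝ :=
  if ρ = 0 then (if k = 0 then 1 else 0)
  else ρ ^ (j * k) * a j k / ∑' m : ℕ, ρ ^ (j * m) * a j m


namespace Stmt6Aux


def msum (l : ℕ) (k : Fin l → ℕ) : ℕ := ∑ i : Fin l, ((i : ℕ) + 1) * k i

def Rml (l : ℕ) (k : Fin l → ℕ) : Multiset ℕ := ∑ i : Fin l, Multiset.replicate (k i) ((i : ℕ) + 1)

lemma count_Rml (l : ℕ) (k : Fin l → ℕ) (i : Fin l) :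
    Multiset.count ((i : ℕ) + 1) (Rml l k) = k i := by
  rw [Rml, Multiset.count_sum']
  rw [Finset.sum_eq_single i]
  · simp [Multiset.count_replicate]
  · intro b _ hb
    rw [Multiset.count_replicate, if_neg]
    intro h
    exact hb (by ext; omega)
  · simp

lemma count_Rml_of (l : ℕ) (k : Fin l → ℕ) (j : ℕ) (h : ∀ i : Fin l, (i : ℕ) + 1 ≠ j) :
    Multiset.count j (Rml l k) = 0 := by
  rw [Rml, Multiset.count_sum']
  refine Finset.sum_eq_zero fun i _ => ?_
  rw [Multiset.count_replicate, if_neg (h i)]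

lemma Rml_sum (l : ℕ) (k : Fin l → ℕ) : (Rml l k).sum = msum l k := by
  rw [Rml, msum, Multiset.sum_sum]
  refine Finset.sum_congr rfl fun i _ => ?_
  rw [Multiset.sum_replicate, smul_eq_mul, mul_comm]

lemma Rml_pos (l : ℕ) (k : Fin l → ℕ) : ∀ x ∈ Rml l k, 0 < x := by
  intro x hx
  rw [Rml, Multiset.mem_sum] at hx
  obtain ⟨i, _, hi⟩ := hx
  rw [Multiset.eq_of_mem_replicate hi]
  omega

lemma part_count_eq_zero {N : ℕ} (Q : Nat.Partition N) {j : ℕ} (h : N < j) :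
    Multiset.count j Q.parts = 0 := by
  by_contra hc
  have hj : j ∈ Q.parts := by rw [← Multiset.count_pos]; omega
  have := Multiset.le_sum_of_mem hj
  rw [Q.parts_sum] at this
  omega

/-- adding the fixed parts to a partition -/
def addP (l : ℕ) (k : Fin l → ℕ) {N n : ℕ} (Q : Nat.Partition N) (h : N + msum l k = n) :
    Nat.Partition n where
  parts := Q.parts + Rml l k
  parts_pos := by
    intro i hi
    rcases Multiset.mem_add.1 hi with h' | h'
    exacts [Q.parts_pos h', Rml_pos l k i h']
  parts_sum := by rw [Multiset.sum_add, Q.parts_sum, Rml_sum, h]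

lemma prod_fin_eq_prod_Ioc {M : Type*} [CommMonoid M] (l : ℕ) (f : Fin l → M) (g : ℕ → M)
    (h : ∀ i : Fin l, f i = g ((i : ℕ) + 1)) : ∏ i : Fin l, f i = ∏ j ∈ Finset.Ioc 0 l, g j := by
  apply Finset.prod_bij (fun (i : Fin l) _ => (i : ℕ) + 1)
  · intro i _; simp only [Finset.mem_Ioc]; omega
  · intro i1 _ i2 _ hh; exact Fin.ext (by omega)
  · intro j hj
    simp only [Finset.mem_Ioc] at hj
    exact ⟨⟨j - 1, by omega⟩, Finset.mem_univ _, by simp; omega⟩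
  · intro i _; exact h i

lemma Icc_one (N : ℕ) : Finset.Icc 1 N = Finset.Ioc 0 N := by
  ext x; simp only [Finset.mem_Icc, Finset.mem_Ioc]; omega

lemma num_shift (a : ℕ → ℕ → ℝ) (h0 : ∀ j, 1 ≤ j → 0 < a j 0)
    (l : ℕ) (k : Fin l → ℕ) (n : ℕ) (hn : l + msum l k ≤ n) :
    (∑ P : Nat.Partition n, if ∀ i : Fin l, Multiset.count ((i : ℕ) + 1) P.parts = k i
      then ∏ j ∈ Finset.Icc 1 n, a j (Multiset.count j P.parts) else 0)
    = ((∏ i : Fin l, a ((i : ℕ) + 1) (k i) / a ((i : ℕ) + 1) 0)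
        * ∏ j ∈ Finset.Ioc (n - msum l k) n, a j 0)
      * ∑ Q : Nat.Partition (n - msum l k),
          if ∀ i : Fin l, Multiset.count ((i : ℕ) + 1) Q.parts = 0
          then ∏ j ∈ Finset.Icc 1 (n - msum l k), a j (Multiset.count j Q.parts) else 0 := by
  classical
  set m := msum l k with hmdef
  have hmn : m ≤ n := by omega
  have hln : l ≤ n - m := by omega
  rw [← Finset.sum_filter, ← Finset.sum_filter, Finset.mul_sum]
  refine (Finset.sum_bij (fun (Q : Nat.Partition (n - m)) _ => addP l k Q (by omega))
    ?_ ?_ ?_ ?_).symm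
  · -- maps into
    intro Q hQ
    rw [Finset.mem_filter] at hQ ⊢
    refine ⟨Finset.mem_univ _, fun i => ?_⟩
    show Multiset.count _ (Q.parts + Rml l k) = k i
    rw [Multiset.count_add, hQ.2 i, count_Rml, zero_add]
  · -- injective
    intro Q1 _ Q2 _ hh
    have : Q1.parts + Rml l k = Q2.parts + Rml l k := congrArg Nat.Partition.parts hh
    exact Nat.Partition.ext (add_right_cancel this)
  · -- surjective
    intro P hP
    rw [Finset.mem_filter] at hP
    have hP2 := hP.2
    have hR : Rml l k ≤ P.parts := by
      rw [Multiset.le_iff_count]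
      intro j
      by_cases hj : ∃ i : Fin l, (i : ℕ) + 1 = j
      · obtain ⟨i, rfl⟩ := hj
        rw [count_Rml, hP2 i]
      · rw [count_Rml_of l k j (fun i hi => hj ⟨i, hi⟩)]
        exact Nat.zero_le _
    refine ⟨⟨P.parts - Rml l k, ?_, ?_⟩, ?_, ?_⟩
    · intro i hi
      exact P.parts_pos (Multiset.mem_of_le (Multiset.sub_le_self _ _) hi)
    · have h1 : P.parts - Rml l k + Rml l k = P.parts := tsub_add_cancel_of_le hR
      have h2 := congrArg Multiset.sum h1
      rw [Multiset.sum_add, P.parts_sum, Rml_sum] at h2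
      omega
    · rw [Finset.mem_filter]
      refine ⟨Finset.mem_univ _, fun i => ?_⟩
      show Multiset.count _ (P.parts - Rml l k) = 0
      rw [Multiset.count_sub, count_Rml, hP2 i, Nat.sub_self]
    · apply Nat.Partition.ext
      show P.parts - Rml l k + Rml l k = P.parts
      exact tsub_add_cancel_of_le hR
  · -- weights
    intro Q hQ
    rw [Finset.mem_filter] at hQ
    have hQ2 := hQ.2
    show _ = ∏ j ∈ Finset.Icc 1 n, a j (Multiset.count j (Q.parts + Rml l k))
    -- RHS computation
    have hsplit : ∏ j ∈ Finset.Icc 1 n, a j (Multiset.count j (Q.parts + Rml l k))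
        = (∏ i : Fin l, a ((i : ℕ) + 1) (k i))
          * ((∏ j ∈ Finset.Ioc l (n - m), a j (Multiset.count j Q.parts))
             * ∏ j ∈ Finset.Ioc (n - m) n, a j 0) := by
      rw [Icc_one, ← Finset.prod_Ioc_consecutive _ (Nat.zero_le l) (by omega : l ≤ n)]
      congr 1
      · rw [prod_fin_eq_prod_Ioc l _ (fun j => a j (Multiset.count j (Q.parts + Rml l k)))]
        intro i
        rw [Multiset.count_add, hQ2 i, count_Rml, zero_add]
      · rw [← Finset.prod_Ioc_consecutive _ hln (by omega : n - m ≤ n)]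
        congr 1
        · refine Finset.prod_congr rfl fun j hj => ?_
          rw [Finset.mem_Ioc] at hj
          rw [Multiset.count_add, count_Rml_of l k j (fun i => by omega), Nat.add_zero]
        · refine Finset.prod_congr rfl fun j hj => ?_
          rw [Finset.mem_Ioc] at hj
          rw [Multiset.count_add, count_Rml_of l k j (fun i => by omega),
            part_count_eq_zero Q (by omega : n - m < j)]
    rw [hsplit]
    -- LHS computation
    have hQsplit : ∏ j ∈ Finset.Icc 1 (n - m), a j (Multiset.count j Q.parts)
        = (∏ i : Fin l, a ((i : ℕ) + 1) 0)
          * ∏ j ∈ Finset.Ioc l (n - m), a j (Multiset.count j Q.parts) := by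
      rw [Icc_one, ← Finset.prod_Ioc_consecutive _ (Nat.zero_le l) hln]
      congr 1
      rw [prod_fin_eq_prod_Ioc l _ (fun j => a j (Multiset.count j Q.parts))]
      intro i
      rw [hQ2 i]
    rw [hQsplit]
    have hprod : (∏ i : Fin l, a ((i : ℕ) + 1) (k i) / a ((i : ℕ) + 1) 0)
        * ∏ i : Fin l, a ((i : ℕ) + 1) 0 = ∏ i : Fin l, a ((i : ℕ) + 1) (k i) := by
      rw [Finset.prod_div_distrib]
      rw [div_mul_cancel₀]
      exact Finset.prod_ne_zero_iff.2 fun i _ => (h0 _ (by omega)).ne'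
    calc (∏ i : Fin l, a ((i : ℕ) + 1) (k i) / a ((i : ℕ) + 1) 0)
          * (∏ j ∈ Finset.Ioc (n - m) n, a j 0)
          * ((∏ i : Fin l, a ((i : ℕ) + 1) 0)
            * ∏ j ∈ Finset.Ioc l (n - m), a j (Multiset.count j Q.parts))
        = ((∏ i : Fin l, a ((i : ℕ) + 1) (k i) / a ((i : ℕ) + 1) 0)
            * ∏ i : Fin l, a ((i : ℕ) + 1) 0)
          * ((∏ j ∈ Finset.Ioc l (n - m), a j (Multiset.count j Q.parts))
             * ∏ j ∈ Finset.Ioc (n - m) n, a j 0) := by ring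
      _ = _ := by rw [hprod]


lemma Pmarg_shift (a : ℕ → ℕ → ℝ) (h0 : ∀ j, 1 ≤ j → 0 < a j 0)
    (hc : ∀ n, 1 ≤ n → 0 < c a n)
    (l : ℕ) (hl : 1 ≤ l) (k : Fin l → ℕ) (n : ℕ) (hn : l + msum l k ≤ n) :
    Pmarg a l k n = (∏ i : Fin l, a ((i : ℕ) + 1) (k i) / a ((i : ℕ) + 1) 0)
      * (ctil a (n - msum l k) / ctil a n) * Pmarg a l 0 (n - msum l k) := by
  have hn1 : 1 ≤ n := by omega
  have hnm1 : 1 ≤ n - msum l k := by omega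
  have hcn := (hc n hn1).ne'
  have hcnm := (hc _ hnm1).ne'
  have hprodne : ∀ N, (∏ j ∈ Finset.Icc 1 N, a j 0) ≠ 0 := fun N =>
    Finset.prod_ne_zero_iff.2 fun j hj => (h0 j (Finset.mem_Icc.1 hj).1).ne'
  have hEne : (∏ j ∈ Finset.Ioc (n - msum l k) n, a j 0) ≠ 0 :=
    Finset.prod_ne_zero_iff.2 fun j hj => (h0 j (by have := (Finset.mem_Ioc.1 hj).1; omega)).ne'
  have hsplitprod : (∏ j ∈ Finset.Icc 1 n, a j 0)
      = (∏ j ∈ Finset.Icc 1 (n - msum l k), a j 0)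
        * ∏ j ∈ Finset.Ioc (n - msum l k) n, a j 0 := by
    rw [Icc_one, Icc_one, Finset.prod_Ioc_consecutive _ (Nat.zero_le _) (Nat.sub_le n _)]
  simp only [Pmarg, Pi.zero_apply]
  rw [num_shift a h0 l k n hn, ctil, ctil, hsplitprod]
  set A := ∏ i : Fin l, a ((i : ℕ) + 1) (k i) / a ((i : ℕ) + 1) 0
  set E := ∏ j ∈ Finset.Ioc (n - msum l k) n, a j 0
  set Pm := ∏ j ∈ Finset.Icc 1 (n - msum l k), a j 0
  have hPm : Pm ≠ 0 := hprodne _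
  field_simp

lemma ctil_pos (a : ℕ → ℕ → ℝ) (h0 : ∀ j, 1 ≤ j → 0 < a j 0)
    (hc : ∀ n, 1 ≤ n → 0 < c a n) (n : ℕ) (hn : 1 ≤ n) : 0 < ctil a n :=
  div_pos (hc n hn) (Finset.prod_pos fun j hj => h0 j (Finset.mem_Icc.1 hj).1)

lemma tendsto_ctil_ratio (a : ℕ → ℕ → ℝ) (h0 : ∀ j, 1 ≤ j → 0 < a j 0)
    (hc : ∀ n, 1 ≤ n → 0 < c a n) (ρ : ℝ) (hRT : RT (ctil a) ρ) (m : ℕ) :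
    Tendsto (fun n => ctil a (n - m) / ctil a n) atTop (𝓝 (ρ ^ m)) := by
  induction m with
  | zero =>
    simp only [Nat.sub_zero, pow_zero]
    apply Tendsto.congr' _ (tendsto_const_nhds (x := (1:ℝ)))
    filter_upwards [eventually_ge_atTop 1] with n hn
    rw [div_self (ctil_pos a h0 hc n hn).ne']
  | succ m ih =>
    have h1 : Tendsto (fun n => ctil a (n - (m + 1)) / ctil a (n - (m + 1) + 1)) atTop (𝓝 ρ) :=
      hRT.comp (tendsto_sub_atTop_nat (m + 1))
    have h2 := h1.mul ih
    rw [pow_succ, mul_comm]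
    apply Tendsto.congr' _ h2
    filter_upwards [eventually_ge_atTop (m + 1)] with n hn
    have he : n - (m + 1) + 1 = n - m := by omega
    rw [he, div_mul_div_cancel₀ (ctil_pos a h0 hc (n - m) (by omega)).ne']

lemma hasSum_pi_prod : ∀ {l : ℕ} (f : Fin l → ℕ → ℝ), (∀ i, Summable (f i)) →
    (∀ i kk, 0 ≤ f i kk) →
    HasSum (fun k : Fin l → ℕ => ∏ i, f i (k i)) (∏ i, ∑' kk, f i kk) := by
  intro l
  induction l with
  | zero =>
    intro f _ _
    have h1 : (fun k : Fin 0 → ℕ => ∏ i, f i (k i)) = fun _ => 1 := by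
      funext kk; simp
    rw [h1]
    simp only [Finset.univ_eq_empty, Finset.prod_empty]
    have := hasSum_fintype (fun _ : Fin 0 → ℕ => (1 : ℝ))
    simpa using this
  | succ l ih =>
    intro f hs hnn
    have hihs := ih (fun i => f i.succ) (fun i => hs _) (fun i => hnn _)
    have h0 : HasSum (fun p : ℕ × (Fin l → ℕ) => f 0 p.1 * ∏ i : Fin l, f i.succ (p.2 i))
        ((∑' kk, f 0 kk) * ∏ i : Fin l, ∑' kk, f i.succ kk) := by
      apply HasSum.mul (hs 0).hasSum hihs
      apply Summable.mul_of_nonneg (hs 0) hihs.summable (fun kk => hnn 0 kk)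
      intro kk
      exact Finset.prod_nonneg fun i _ => hnn _ _
    rw [Fin.prod_univ_succ]
    apply (Equiv.hasSum_iff (Fin.consEquiv (fun _ : Fin (l + 1) => ℕ))).mp
    have hfe : ((fun k : Fin (l + 1) → ℕ => ∏ i : Fin (l + 1), f i (k i))
        ∘ ⇑(Fin.consEquiv (fun _ : Fin (l + 1) => ℕ)))
        = fun p : ℕ × (Fin l → ℕ) => f 0 p.1 * ∏ i : Fin l, f i.succ (p.2 i) := by
      funext p
      simp [Function.comp, Fin.consEquiv, Fin.prod_univ_succ]
    rw [hfe]
    exact h0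


end Stmt6Aux

open Stmt6Aux

/-- If the counting process is convergent and `(c̃_n) ∈ RT_ρ` for some `ρ ∈ [0,∞)`, then
(for `ρ > 0`) each series `S^{(j)}(ρ)` converges, and for every `l ≥ 1` and every tuple
`(k_1,…,k_l) ∈ ℕ^l`, `lim_{n→∞} P_n(k_1,…,k_l) = ∏_{j=1}^l a_{k_j}^{(j)}(ρ)`,
the product of the tilted probabilities. -/
theorem stmt6 (a : ℕ → ℕ → ℝ)
    (hnn : ∀ j k, 0 ≤ a j k) (h0 : ∀ j, 1 ≤ j → 0 < a j 0)
    (hc : ∀ n, 1 ≤ n → 0 < c a n)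
    (hconv : Convergent a)
    (ρ : ℝ) (hρ : 0 ≤ ρ) (hRT : RT (ctil a) ρ) :
    (∀ j, 1 ≤ j → 0 < ρ → Summable (fun k : ℕ => ρ ^ (j * k) * a j k)) ∧
    ∀ l, 1 ≤ l → ∀ k : Fin l → ℕ,
      Tendsto (fun n => Pmarg a l k n) atTop
        (nhds (∏ i : Fin l, tilt a ρ ((i : ℕ) + 1) (k i))) := by
  classical
  obtain ⟨F, hF, hFsum⟩ := hconv
  set g : ℕ → ℕ → ℝ := fun j kk => ρ ^ (j * kk) * a j kk / a j 0 with hgdef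
  have hg0 : ∀ j, 1 ≤ j → g j 0 = 1 := by
    intro j hj
    simp only [hgdef, Nat.mul_zero, pow_zero, one_mul]
    exact div_self (h0 j hj).ne'
  have hgnn : ∀ j kk, 0 ≤ g j kk := fun j kk =>
    div_nonneg (mul_nonneg (pow_nonneg hρ _) (hnn _ _)) (hnn _ _)
  -- Step 1
  have step1 : ∀ l, 1 ≤ l → ∀ k : Fin l → ℕ,
      F l k = (∏ i : Fin l, g ((i : ℕ) + 1) (k i)) * F l 0 := by
    intro l hl k
    set m := msum l k with hmdef
    have htend0 : Tendsto (fun n => Pmarg a l 0 (n - m)) atTop (𝓝 (F l 0)) :=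
      (hF l hl 0).comp (tendsto_sub_atTop_nat m)
    have htend : Tendsto (fun n => (∏ i : Fin l, a ((i : ℕ) + 1) (k i) / a ((i : ℕ) + 1) 0)
        * (ctil a (n - m) / ctil a n) * Pmarg a l 0 (n - m)) atTop
        (𝓝 ((∏ i : Fin l, a ((i : ℕ) + 1) (k i) / a ((i : ℕ) + 1) 0) * ρ ^ m * F l 0)) :=
      (Tendsto.mul tendsto_const_nhds (tendsto_ctil_ratio a h0 hc ρ hRT m)).mul htend0
    have heq : (fun n => (∏ i : Fin l, a ((i : ℕ) + 1) (k i) / a ((i : ℕ) + 1) 0)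
        * (ctil a (n - m) / ctil a n) * Pmarg a l 0 (n - m)) =ᶠ[atTop]
        (fun n => Pmarg a l k n) := by
      filter_upwards [eventually_ge_atTop (l + m)] with n hn
      exact (Pmarg_shift a h0 hc l hl k n hn).symm
    have huniq := tendsto_nhds_unique (htend.congr' heq) (hF l hl k)
    rw [← huniq]
    congr 1
    rw [hmdef, msum, ← Finset.prod_pow_eq_pow_sum, ← Finset.prod_mul_distrib]
    exact Finset.prod_congr rfl fun i _ => by rw [hgdef]; ring
  -- Step 3 : F l 0 ≠ 0
  have hFl0 : ∀ l, 1 ≤ l → F l 0 ≠ 0 := by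
    intro l hl h
    have hz : F l = fun _ => (0 : ℝ) := funext fun k => by rw [step1 l hl k, h, mul_zero]
    have h1 := hFsum l hl
    rw [hz] at h1
    exact one_ne_zero (h1.unique hasSum_zero)
  -- Step 4 : HasSum of the product function
  have hG : ∀ l, 1 ≤ l → HasSum (fun k : Fin l → ℕ => ∏ i : Fin l, g ((i : ℕ) + 1) (k i))
      (F l 0)⁻¹ := by
    intro l hl
    have h1 : HasSum (fun k : Fin l → ℕ => F l 0 * ∏ i : Fin l, g ((i : ℕ) + 1) (k i)) 1 := by
      have : F l = fun k => F l 0 * ∏ i : Fin l, g ((i : ℕ) + 1) (k i) :=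
        funext fun k => by rw [step1 l hl k, mul_comm]
      rw [← this]
      exact hFsum l hl
    have h2 := h1.mul_left (F l 0)⁻¹
    simp only [← mul_assoc, inv_mul_cancel₀ (hFl0 l hl), one_mul, mul_one] at h2
    exact h2
  -- Step 5 : summability of each coordinate
  have hgsum : ∀ l, 1 ≤ l → ∀ i₀ : Fin l, Summable (g ((i₀ : ℕ) + 1)) := by
    intro l hl i₀
    have hsum := (hG l hl).summable
    have hcomp := hsum.comp_injective (Function.update_injective (0 : Fin l → ℕ) i₀)
    apply hcomp.congr
    intro kk
    show (∏ i : Fin l, g ((i : ℕ) + 1) (Function.update (0 : Fin l → ℕ) i₀ kk i))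
        = g ((i₀ : ℕ) + 1) kk
    rw [Fintype.prod_eq_single i₀ ?_, Function.update_self]
    intro i hi
    rw [Function.update_of_ne hi]
    exact hg0 _ (by omega)
  have hSummable : ∀ j, 1 ≤ j → Summable (fun kk : ℕ => ρ ^ (j * kk) * a j kk) := by
    intro j hj
    have h1 : Summable (g ((( ⟨j - 1, by omega⟩ : Fin j) : ℕ) + 1)) := hgsum j hj _
    have h2 : ((⟨j - 1, by omega⟩ : Fin j) : ℕ) + 1 = j := by simp; omega
    rw [h2] at h1
    apply (h1.mul_right (a j 0)).congr
    intro kk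
    show g j kk * a j 0 = _
    rw [hgdef]
    field_simp
    rw [mul_div_assoc, div_self (h0 j hj).ne', mul_one]
  -- value of tsum product
  have hGval : ∀ l, 1 ≤ l → (F l 0)⁻¹ = ∏ i : Fin l, ∑' kk, g ((i : ℕ) + 1) kk := by
    intro l hl
    exact (hG l hl).unique
      (hasSum_pi_prod (fun i => g ((i : ℕ) + 1)) (fun i => hgsum l hl i) (fun i kk => hgnn _ _))
  refine ⟨fun j hj _ => hSummable j hj, ?_⟩
  intro l hl k
  suffices hFk : F l k = ∏ i : Fin l, tilt a ρ ((i : ℕ) + 1) (k i) by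
    rw [← hFk]; exact hF l hl k
  rw [step1 l hl k]
  have hF0 : F l 0 = ∏ i : Fin l, (∑' kk, g ((i : ℕ) + 1) kk)⁻¹ := by
    rw [← inv_inv (F l 0), hGval l hl, ← Finset.prod_inv_distrib]
  rw [hF0, ← Finset.prod_mul_distrib]
  refine Finset.prod_congr rfl fun i _ => ?_
  have hj : 1 ≤ (i : ℕ) + 1 := by omega
  by_cases hρ0 : ρ = 0
  · subst hρ0
    have hgind : g ((i : ℕ) + 1) = fun kk => if kk = 0 then 1 else 0 := by
      funext kk
      rcases Nat.eq_zero_or_pos kk with rfl | hkk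
      · rw [hg0 _ hj]; simp
      · rw [hgdef]
        simp only []
        rw [zero_pow (by positivity), zero_mul, zero_div, if_neg (by omega)]
    rw [tilt, if_pos rfl, hgind]; simp
  · rw [tilt, if_neg hρ0]
    have hts : (∑' kk, g ((i : ℕ) + 1) kk)
        = (∑' kk, ρ ^ (((i : ℕ) + 1) * kk) * a ((i : ℕ) + 1) kk) * (a ((i : ℕ) + 1) 0)⁻¹ := by
      simp only [hgdef, div_eq_mul_inv]
      rw [tsum_mul_right]
    rw [hts]
    have hT : (0 : ℝ) < ∑' kk, ρ ^ (((i : ℕ) + 1) * kk) * a ((i : ℕ) + 1) kk := by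
      have hle := Summable.le_tsum (hSummable _ hj) 0
        (fun kk _ => mul_nonneg (pow_nonneg hρ _) (hnn _ _))
      simp only [Nat.mul_zero, pow_zero, one_mul] at hle
      linarith [h0 _ hj]
    rw [hgdef]
    field_simp
    rw [mul_div_assoc, div_self (h0 _ hj).ne', mul_one]
end

section
/- (Schur's tauberian lemma) Let (d_n^{(1)})_{n≥0} be a sequence of positive reals with d_n^{(1)}/d_{n+1}^{(1)} → ρ for some ρ ∈ [0,∞), let (d_n^{(2)})_{n≥0} be a sequence of reals such that the power series ∑_{n≥0} d_n^{(2)} x^n has radius of convergence strictly greater than ρ, and let d_n = ∑_{m=0}^n d_m^{(2)} d_{n−m}^{(1)} be the Cauchy product coefficients. Then lim_{n→∞} d_n/d_n^{(1)} = ∑_{m=0}^∞ d_m^{(2)} ρ^m. -/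
open Finset Filter Topology

/-- **Schur's tauberian lemma.** Let `(d_n^{(1)})` be a sequence of positive reals with
`d_n^{(1)}/d_{n+1}^{(1)} → ρ` for some `ρ ∈ [0,∞)`, and let `(d_n^{(2)})` be a sequence of
reals whose power series `∑ d_n^{(2)} x^n` has radius of convergence strictly greater than
`ρ` (i.e. it converges absolutely at some `r > ρ`). Let
`d_n = ∑_{m=0}^n d_m^{(2)} d_{n-m}^{(1)}` be the Cauchy product coefficients. Then
`d_n/d_n^{(1)} → ∑_{m=0}^∞ d_m^{(2)} ρ^m` as `n → ∞`. -/
theorem stmt7 (d1 d2 : ℕ → ℝ) (ρ : ℝ) (hρ : 0 ≤ ρ)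
    (hpos : ∀ n, 0 < d1 n)
    (hRT : Tendsto (fun n => d1 n / d1 (n + 1)) atTop (nhds ρ))
    (hrad : ∃ r : ℝ, ρ < r ∧ Summable (fun n => |d2 n| * r ^ n)) :
    Tendsto
      (fun n => (∑ m ∈ Finset.range (n + 1), d2 m * d1 (n - m)) / d1 n)
      atTop (nhds (∑' m : ℕ, d2 m * ρ ^ m)) := by
  obtain ⟨r, hρr, hsum⟩ := hrad
  have hr0 : 0 < r := lt_of_le_of_lt hρ hρr
  set r' : ℝ := (ρ + r) / 2 with hr'def
  have hρr' : ρ < r' := by simp only [hr'def]; linarith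
  have hr'r : r' < r := by simp only [hr'def]; linarith
  have hr'0 : 0 < r' := lt_of_le_of_lt hρ hρr'
  obtain ⟨N, hN⟩ := eventually_atTop.mp (hRT.eventually_lt_const hρr')
  set e : ℕ → ℝ := fun n => d1 n * r' ^ n with he
  have hepos : ∀ n, 0 < e n := fun n => mul_pos (hpos n) (pow_pos hr'0 n)
  -- e is monotone from N on
  have estep : ∀ k, N ≤ k → e k ≤ e (k + 1) := by
    intro k hk
    have h1 : d1 k < r' * d1 (k + 1) := by
      have := hN k hk
      rw [div_lt_iff₀ (hpos (k + 1))] at this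
      linarith [this]
    have h2 : d1 k * r' ^ k ≤ (r' * d1 (k + 1)) * r' ^ k :=
      mul_le_mul_of_nonneg_right h1.le (pow_pos hr'0 k).le
    calc e k = d1 k * r' ^ k := rfl
      _ ≤ (r' * d1 (k + 1)) * r' ^ k := h2
      _ = d1 (k + 1) * r' ^ (k + 1) := by ring
  have emono : ∀ j n, N ≤ j → j ≤ n → e j ≤ e n := by
    intro j n hj hjn
    induction n, hjn using Nat.le_induction with
    | base => exact le_refl _
    | succ n hn ih => exact ih.trans (estep n (hj.trans hn))
  -- uniform bound constants
  have hne : (Finset.range (N + 1)).Nonempty := ⟨0, by simp⟩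
  set B : ℝ := (Finset.range (N + 1)).sup' hne e with hB
  set c : ℝ := (Finset.range (N + 1)).inf' hne e with hc
  have hc0 : 0 < c := by
    rw [hc, Finset.lt_inf'_iff]
    intro k _; exact hepos k
  have hcle : ∀ n, c ≤ e n := by
    intro n
    rcases le_or_gt n N with h | h
    · exact Finset.inf'_le e (by simp [Finset.mem_range]; omega)
    · exact (Finset.inf'_le e (by simp [Finset.mem_range] : N ∈ Finset.range (N + 1))).trans
        (emono N n le_rfl h.le)
  set C : ℝ := max (B / c) 1 with hCdef
  have hC1 : (1 : ℝ) ≤ C := le_max_right _ _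
  have hC0 : 0 < C := lt_of_lt_of_le one_pos hC1
  have hCe : ∀ j n, j ≤ n → e j ≤ C * e n := by
    intro j n hjn
    rcases le_or_gt j N with h | h
    · have h1 : e j ≤ B := Finset.le_sup' e (by simp [Finset.mem_range]; omega)
      have h2 : B / c ≤ C := le_max_left _ _
      calc e j ≤ B := h1
        _ = (B / c) * c := by field_simp
        _ ≤ C * c := by
            apply mul_le_mul_of_nonneg_right h2 hc0.le
        _ ≤ C * e n := mul_le_mul_of_nonneg_left (hcle n) hC0.le
    · calc e j ≤ e n := emono j n h.le hjn
        _ = 1 * e n := (one_mul _).symm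
        _ ≤ C * e n := mul_le_mul_of_nonneg_right hC1 (hepos n).le
  -- key uniform bound
  have hkey : ∀ n m, m ≤ n → d1 (n - m) / d1 n ≤ C * r' ^ m := by
    intro n m hm
    rw [div_le_iff₀ (hpos n)]
    have h1 : e (n - m) ≤ C * e n := hCe (n - m) n (Nat.sub_le n m)
    have hrn : r' ^ n = r' ^ (n - m) * r' ^ m := by
      rw [← pow_add, Nat.sub_add_cancel hm]
    have h2 : d1 (n - m) * r' ^ (n - m) ≤ (C * r' ^ m * d1 n) * r' ^ (n - m) := by
      calc d1 (n - m) * r' ^ (n - m) = e (n - m) := rfl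
        _ ≤ C * e n := h1
        _ = (C * r' ^ m * d1 n) * r' ^ (n - m) := by rw [he]; simp only []; rw [hrn]; ring
    exact le_of_mul_le_mul_right h2 (pow_pos hr'0 (n - m))
  -- pointwise limits
  have hlim : ∀ m, Tendsto (fun n => d1 (n - m) / d1 n) atTop (𝓝 (ρ ^ m)) := by
    intro m
    induction m with
    | zero =>
      simp only [Nat.sub_zero, pow_zero]
      exact Tendsto.congr (fun n => (div_self (hpos n).ne').symm) tendsto_const_nhds
    | succ m ih =>
      have h1 : Tendsto (fun n : ℕ => d1 (n - (m + 1)) / d1 (n - m)) atTop (𝓝 ρ) := by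
        have := hRT.comp (tendsto_sub_atTop_nat (m + 1))
        apply this.congr'
        filter_upwards [eventually_ge_atTop (m + 1)] with n hn
        have : n - (m + 1) + 1 = n - m := by omega
        simp [Function.comp, this]
      have h2 := h1.mul ih
      rw [show ρ * ρ ^ m = ρ ^ (m + 1) by ring] at h2
      apply h2.congr
      intro n
      rw [div_mul_div_cancel₀]
      exact (hpos (n - m)).ne'
  -- set up Tannery
  set F : ℕ → ℕ → ℝ := fun n m => if m ≤ n then d2 m * (d1 (n - m) / d1 n) else 0 with hF
  have hbound : Summable (fun m => C * (|d2 m| * r ^ m)) := hsum.mul_left C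
  have hmain : Tendsto (fun n => ∑' m, F n m) atTop (𝓝 (∑' m, d2 m * ρ ^ m)) := by
    apply tendsto_tsum_of_dominated_convergence hbound
    · intro m
      have : Tendsto (fun n => d2 m * (d1 (n - m) / d1 n)) atTop (𝓝 (d2 m * ρ ^ m)) :=
        (hlim m).const_mul (d2 m)
      apply this.congr'
      filter_upwards [eventually_ge_atTop m] with n hn
      simp [hF, hn]
    · apply Eventually.of_forall
      intro n m
      rcases le_or_gt m n with h | h
      · simp only [hF, if_pos h]
        rw [norm_mul, Real.norm_eq_abs, Real.norm_eq_abs,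
          abs_of_nonneg (div_nonneg (hpos (n - m)).le (hpos n).le)]
        calc |d2 m| * (d1 (n - m) / d1 n) ≤ |d2 m| * (C * r' ^ m) :=
              mul_le_mul_of_nonneg_left (hkey n m h) (abs_nonneg _)
          _ ≤ C * (|d2 m| * r ^ m) := by
              have h3 : r' ^ m ≤ r ^ m := pow_le_pow_left₀ hr'0.le hr'r.le m
              calc |d2 m| * (C * r' ^ m) = C * (|d2 m| * r' ^ m) := by ring
                _ ≤ C * (|d2 m| * r ^ m) := mul_le_mul_of_nonneg_left
                    (mul_le_mul_of_nonneg_left h3 (abs_nonneg _)) hC0.le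
      · simp only [hF, if_neg (by omega : ¬ m ≤ n), norm_zero]
        positivity
  apply hmain.congr
  intro n
  rw [tsum_eq_sum (s := Finset.range (n + 1))]
  · rw [Finset.sum_div]
    apply Finset.sum_congr rfl
    intro m hm
    rw [Finset.mem_range] at hm
    simp [hF, Nat.lt_succ_iff.mp hm, mul_div_assoc]
  · intro m hm
    rw [Finset.mem_range] at hm
    simp [hF]
    omega
end

section
/- (Reversibility of multiplicative measures) Fix n ≥ 1 and η = (k_1,…,k_n) ∈ Ω_n. (Case i ≠ j) Let 1 ≤ i, j with i ≠ j, k_i ≥ 1, k_j ≥ 1, and let η^{(i,j)} ∈ Ω_n be obtained from η by replacing k_i by k_i − 1, k_j by k_j − 1, and k_{i+j} by k_{i+j} + 1. If u_c, u_f > 0 satisfy u_c/u_f = a_{k_i−1}^{(i)} a_{k_j−1}^{(j)} a_{k_{i+j}+1}^{(i+j)} / (a_{k_i}^{(i)} a_{k_j}^{(j)} a_{k_{i+j}}^{(i+j)}) (where all the a's appearing are positive), then the detailed balance condition μ_n(η)·u_c = μ_n(η^{(i,j)})·u_f holds. (Case i = j) Similarly, if k_i ≥ 2 and η^{(i,i)}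 is obtained by replacing k_i by k_i − 2 and k_{2i} by k_{2i} + 1, and u_c/u_f = a_{k_i−2}^{(i)} a_{k_{2i}+1}^{(2i)} / (a_{k_i}^{(i)} a_{k_{2i}}^{(2i)}), then μ_n(η)·u_c = μ_n(η^{(i,i)})·u_f. -/
open Finset Filter Topology

/-- The multiplicative measure `μ_n(η) = c_n⁻¹ ∏_{j=1}^n a_{k_j}^{(j)}` on partitions
of `n`, identified with their part-count functions. -/
noncomputable def mu (a : ℕ → ℕ → ℝ) (n : ℕ) (P : Nat.Partition n) : ℝ :=
  (c a n)⁻¹ * ∏ j ∈ Finset.Icc 1 n, a j (Multiset.count j P.parts)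

/-
The normalising constant `c_n` is common to both sides and the factors `a_{k_m}^{(m)}` of the
unchanged sizes `m` coincide, so detailed balance reduces to an identity between the factors of
the at most three sizes the merge changes, which is the prescribed ratio `u_c / u_f` with its
denominators cleared.
-/
theorem Finset.prod_mul_eq_prod_mul_of_eqOn_sdiff {ι M : Type*} [DecidableEq ι] [CommMonoid M]
    {s t : Finset ι} {f g : ι → M} {x y : M} (hts : t ⊆ s) (hfg : ∀ m ∈ s \ t, f m = g m)
    (h : (∏ m ∈ t, f m) * x = (∏ m ∈ t, g m) * y) :
    (∏ m ∈ s, f m) * x = (∏ m ∈ s, g m) * y := by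
  rw [← prod_sdiff hts, ← prod_sdiff hts (f := g), prod_congr rfl hfg, mul_assoc, mul_assoc, h]

theorem mu_mul_eq_mu_mul_of_count_eq_of_notMem {a : ℕ → ℕ → ℝ} {n : ℕ} {P Q : Nat.Partition n}
    {t : Finset ℕ} {x y : ℝ} (ht : t ⊆ Icc 1 n)
    (hPQ : ∀ m ∉ t, Multiset.count m P.parts = Multiset.count m Q.parts)
    (h : (∏ m ∈ t, a m (Multiset.count m P.parts)) * x
      = (∏ m ∈ t, a m (Multiset.count m Q.parts)) * y) :
    mu a n P * x = mu a n Q * y := by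
  unfold mu
  rw [mul_assoc, mul_assoc, prod_mul_eq_prod_mul_of_eqOn_sdiff ht
    (fun m hm => by rw [hPQ m (mem_sdiff.mp hm).2]) h]

theorem stmt10_general (a : ℕ → ℕ → ℝ)
    (n : ℕ) (P : Nat.Partition n) :
    (∀ i j : ℕ, ∀ Q : Nat.Partition n, ∀ uc uf : ℝ,
      1 ≤ i → 1 ≤ j → i ≠ j → i + j ≤ n →
      1 ≤ Multiset.count i P.parts → 1 ≤ Multiset.count j P.parts →
      Multiset.count i Q.parts = Multiset.count i P.parts - 1 →
      Multiset.count j Q.parts = Multiset.count j P.parts - 1 →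
      Multiset.count (i + j) Q.parts = Multiset.count (i + j) P.parts + 1 →
      (∀ m : ℕ, m ≠ i → m ≠ j → m ≠ i + j →
        Multiset.count m Q.parts = Multiset.count m P.parts) →
      0 < uc → 0 < uf →
      0 < a i (Multiset.count i P.parts) →
      0 < a j (Multiset.count j P.parts) →
      0 < a (i + j) (Multiset.count (i + j) P.parts) →
      0 < a i (Multiset.count i P.parts - 1) →
      0 < a j (Multiset.count j P.parts - 1) →
      0 < a (i + j) (Multiset.count (i + j) P.parts + 1) →
      uc / uf
        = a i (Multiset.count i P.parts - 1) * a j (Multiset.count j P.parts - 1)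
            * a (i + j) (Multiset.count (i + j) P.parts + 1)
          / (a i (Multiset.count i P.parts) * a j (Multiset.count j P.parts)
            * a (i + j) (Multiset.count (i + j) P.parts)) →
      mu a n P * uc = mu a n Q * uf) ∧
    (∀ i : ℕ, ∀ Q : Nat.Partition n, ∀ uc uf : ℝ,
      1 ≤ i → i + i ≤ n →
      2 ≤ Multiset.count i P.parts →
      Multiset.count i Q.parts = Multiset.count i P.parts - 2 →
      Multiset.count (2 * i) Q.parts = Multiset.count (2 * i) P.parts + 1 →
      (∀ m : ℕ, m ≠ i → m ≠ 2 * i →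
        Multiset.count m Q.parts = Multiset.count m P.parts) →
      0 < uc → 0 < uf →
      0 < a i (Multiset.count i P.parts) →
      0 < a (2 * i) (Multiset.count (2 * i) P.parts) →
      0 < a i (Multiset.count i P.parts - 2) →
      0 < a (2 * i) (Multiset.count (2 * i) P.parts + 1) →
      uc / uf
        = a i (Multiset.count i P.parts - 2)
            * a (2 * i) (Multiset.count (2 * i) P.parts + 1)
          / (a i (Multiset.count i P.parts)
            * a (2 * i) (Multiset.count (2 * i) P.parts)) →
      mu a n P * uc = mu a n Q * uf) := by
  refine ⟨fun i j Q uc uf hi hj hij hijn _ _ hQi hQj hQij hQm _ huf hai haj haij _ _ _ hratio => ?_,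
    fun i Q uc uf hi hin _ hQi hQ2i hQm _ huf hai ha2i _ _ hratio => ?_⟩
  · rw [div_eq_div_iff huf.ne' (by positivity)] at hratio
    refine mu_mul_eq_mu_mul_of_count_eq_of_notMem (t := {i, j, i + j}) ?_ ?_ ?_
    · intro m; simp only [mem_insert, mem_singleton, mem_Icc]; omega
    · intro m hm; simp only [mem_insert, mem_singleton, not_or] at hm
      exact (hQm m hm.1 hm.2.1 hm.2.2).symm
    · rw [prod_insert (by simp; omega), prod_insert (by simp; omega), prod_singleton,
        prod_insert (by simp; omega), prod_insert (by simp; omega), prod_singleton, hQi, hQj, hQij]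
      linear_combination hratio
  · rw [div_eq_div_iff huf.ne' (by positivity)] at hratio
    refine mu_mul_eq_mu_mul_of_count_eq_of_notMem (t := {i, 2 * i}) ?_ ?_ ?_
    · intro m; simp only [mem_insert, mem_singleton, mem_Icc]; omega
    · intro m hm; simp only [mem_insert, mem_singleton, not_or] at hm
      exact (hQm m hm.1 hm.2).symm
    · rw [prod_insert (by simp; omega), prod_singleton, prod_insert (by simp; omega),
        prod_singleton, hQi, hQ2i]
      linear_combination hratio

/-- **Reversibility of multiplicative measures** (detailed balance). Fix `n ≥ 1` and
`η ∈ Ω_n`. (Case `i ≠ j`) if `η^{(i,j)}` is obtained from `η` by merging a cluster of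
size `i` with one of size `j` (so `k_i ↦ k_i − 1`, `k_j ↦ k_j − 1`,
`k_{i+j} ↦ k_{i+j} + 1`) and `u_c/u_f = a_{k_i−1}^{(i)} a_{k_j−1}^{(j)} a_{k_{i+j}+1}^{(i+j)}
/ (a_{k_i}^{(i)} a_{k_j}^{(j)} a_{k_{i+j}}^{(i+j)})` with all the `a`'s appearing positive,
then `μ_n(η) u_c = μ_n(η^{(i,j)}) u_f`. (Case `i = j`) similarly with
`k_i ↦ k_i − 2`, `k_{2i} ↦ k_{2i} + 1` and
`u_c/u_f = a_{k_i−2}^{(i)} a_{k_{2i}+1}^{(2i)} / (a_{k_i}^{(i)} a_{k_{2i}}^{(2i)})`. -/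
theorem stmt10 (a : ℕ → ℕ → ℝ)
    (hnn : ∀ j k, 0 ≤ a j k) (h0 : ∀ j, 1 ≤ j → 0 < a j 0)
    (hc : ∀ n, 1 ≤ n → 0 < c a n)
    (n : ℕ) (hn : 1 ≤ n) (P : Nat.Partition n) :
    (∀ i j : ℕ, ∀ Q : Nat.Partition n, ∀ uc uf : ℝ,
      1 ≤ i → 1 ≤ j → i ≠ j → i + j ≤ n →
      1 ≤ Multiset.count i P.parts → 1 ≤ Multiset.count j P.parts →
      Multiset.count i Q.parts = Multiset.count i P.parts - 1 →
      Multiset.count j Q.parts = Multiset.count j P.parts - 1 →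
      Multiset.count (i + j) Q.parts = Multiset.count (i + j) P.parts + 1 →
      (∀ m : ℕ, m ≠ i → m ≠ j → m ≠ i + j →
        Multiset.count m Q.parts = Multiset.count m P.parts) →
      0 < uc → 0 < uf →
      0 < a i (Multiset.count i P.parts) →
      0 < a j (Multiset.count j P.parts) →
      0 < a (i + j) (Multiset.count (i + j) P.parts) →
      0 < a i (Multiset.count i P.parts - 1) →
      0 < a j (Multiset.count j P.parts - 1) →
      0 < a (i + j) (Multiset.count (i + j) P.parts + 1) →
      uc / uf
        = a i (Multiset.count i P.parts - 1) * a j (Multiset.count j P.parts - 1)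
            * a (i + j) (Multiset.count (i + j) P.parts + 1)
          / (a i (Multiset.count i P.parts) * a j (Multiset.count j P.parts)
            * a (i + j) (Multiset.count (i + j) P.parts)) →
      mu a n P * uc = mu a n Q * uf) ∧
    (∀ i : ℕ, ∀ Q : Nat.Partition n, ∀ uc uf : ℝ,
      1 ≤ i → i + i ≤ n →
      2 ≤ Multiset.count i P.parts →
      Multiset.count i Q.parts = Multiset.count i P.parts - 2 →
      Multiset.count (2 * i) Q.parts = Multiset.count (2 * i) P.parts + 1 →
      (∀ m : ℕ, m ≠ i → m ≠ 2 * i →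
        Multiset.count m Q.parts = Multiset.count m P.parts) →
      0 < uc → 0 < uf →
      0 < a i (Multiset.count i P.parts) →
      0 < a (2 * i) (Multiset.count (2 * i) P.parts) →
      0 < a i (Multiset.count i P.parts - 2) →
      0 < a (2 * i) (Multiset.count (2 * i) P.parts + 1) →
      uc / uf
        = a i (Multiset.count i P.parts - 2)
            * a (2 * i) (Multiset.count (2 * i) P.parts + 1)
          / (a i (Multiset.count i P.parts)
            * a (2 * i) (Multiset.count (2 * i) P.parts)) →
      mu a n P * uc = mu a n Q * uf) :=
  stmt10_general a n P
end

section
/- (A divergent assembly) Let a_j = 1/j if j is odd and a_j = 1/j + 2^{j+1}/j if j is even, and let c̃_0 = 1, c̃_n = ∑_{η∈Ω_n} ∏_{j=1}^n a_j^{k_j}/k_j! for n ≥ 1. Then c̃_n = (4^{1+⌊n/2⌋} − 1)/3 for every n ≥ 1; consequently c̃_{2n−1}/c̃_{2n} → 1/4 and c̃_{2n}/c̃_{2n+1} → 1 as n → ∞, so the sequence (c̃_n) belongs to no class RT_ρ, 0 ≤ ρ ≤ ∞. -/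
open Finset Filter Topology

/-- The scaled partition function `c̃_n = ∑_{η ∈ Ω_n} ∏_{j=1}^n a_j^{k_j}/k_j!` of the
assembly with parameters `a_j` (so `c̃_0 = 1`). -/
noncomputable def ctilA (aseq : ℕ → ℝ) (n : ℕ) : ℝ :=
  ∑ P : Nat.Partition n, ∏ j ∈ Finset.Icc 1 n,
    aseq j ^ (Multiset.count j P.parts) / (Nat.factorial (Multiset.count j P.parts) : ℝ)

/-- The parameters `a_j = 1/j` for odd `j` and `a_j = 1/j + 2^{j+1}/j` for even `j`. -/
noncomputable def awild : ℕ → ℝ := fun j =>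
  if Odd j then 1 / (j : ℝ) else 1 / (j : ℝ) + 2 ^ (j + 1) / (j : ℝ)

/-! ### Auxiliary weight function -/

noncomputable def wgt (a : ℕ → ℝ) (m : ℕ) (s : Multiset ℕ) : ℝ :=
  ∏ j ∈ Finset.Icc 1 m, a j ^ (Multiset.count j s) / (Nat.factorial (Multiset.count j s) : ℝ)

lemma ctilA_eq_wgt (a : ℕ → ℝ) (n : ℕ) :
    ctilA a n = ∑ P : Nat.Partition n, wgt a n P.parts := rfl

lemma parts_subset_Icc {n : ℕ} (P : Nat.Partition n) :
    P.parts.toFinset ⊆ Finset.Icc 1 n := by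
  intro i hi
  rw [Multiset.mem_toFinset] at hi
  exact Finset.mem_Icc.2 ⟨P.parts_pos hi,
    (Multiset.le_sum_of_mem hi).trans_eq P.parts_sum⟩

lemma wgt_mono (a : ℕ → ℝ) {m m' : ℕ} (h : m ≤ m') (s : Multiset ℕ)
    (hs : s.toFinset ⊆ Finset.Icc 1 m) : wgt a m s = wgt a m' s := by
  unfold wgt
  refine Finset.prod_subset (Finset.Icc_subset_Icc_right h) ?_
  intro i _ hi
  have hcount : Multiset.count i s = 0 := by
    by_contra hc
    exact hi (hs (Multiset.mem_toFinset.2 (Multiset.count_pos.1 (Nat.pos_of_ne_zero hc))))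
  simp [hcount]

lemma fact_scalar (x R : ℝ) (m : ℕ) :
    (((m + 1 : ℕ)) : ℝ) * (x ^ (m + 1) / (Nat.factorial (m + 1) : ℝ) * R)
      = x * (x ^ m / (Nat.factorial m : ℝ) * R) := by
  have h0 : (Nat.factorial m : ℝ) ≠ 0 := Nat.cast_ne_zero.2 (Nat.factorial_ne_zero m)
  have h1 : ((m : ℝ) + 1) ≠ 0 := by positivity
  rw [Nat.factorial_succ, pow_succ]
  push_cast
  field_simp

lemma wgt_erase (a : ℕ → ℝ) {n j : ℕ} (hj : j ∈ Finset.Icc 1 n) {s : Multiset ℕ}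
    (hmem : j ∈ s) :
    (Multiset.count j s : ℝ) * wgt a n s = a j * wgt a n (s.erase j) := by
  unfold wgt
  rw [← Finset.mul_prod_erase _ _ hj, ← Finset.mul_prod_erase _
    (fun i => a i ^ (Multiset.count i (s.erase j)) / (Nat.factorial (Multiset.count i (s.erase j)) : ℝ)) hj]
  have hR : ∏ i ∈ (Finset.Icc 1 n).erase j,
        a i ^ (Multiset.count i (s.erase j)) / (Nat.factorial (Multiset.count i (s.erase j)) : ℝ)
      = ∏ i ∈ (Finset.Icc 1 n).erase j,
        a i ^ (Multiset.count i s) / (Nat.factorial (Multiset.count i s) : ℝ) := by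
    refine Finset.prod_congr rfl fun i hi => ?_
    rw [Multiset.count_erase_of_ne (Finset.ne_of_mem_erase hi)]
  rw [hR, Multiset.count_erase_self]
  obtain ⟨m, hm⟩ : ∃ m, Multiset.count j s = m + 1 :=
    ⟨Multiset.count j s - 1, by have := Multiset.count_pos.2 hmem; omega⟩
  rw [hm, show m + 1 - 1 = m by omega]
  exact fact_scalar (a j) _ m

lemma key_bij (a : ℕ → ℝ) {n j : ℕ} (hj : j ∈ Finset.Icc 1 n) :
    ∑ P : Nat.Partition n, (Multiset.count j P.parts : ℝ) * wgt a n P.parts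
      = a j * ctilA a (n - j) := by
  obtain ⟨hj1, hjn⟩ := Finset.mem_Icc.1 hj
  rw [ctilA_eq_wgt, Finset.mul_sum]
  have hside : ∀ P ∈ (Finset.univ : Finset (Nat.Partition n)),
      (Multiset.count j P.parts : ℝ) * wgt a n P.parts ≠ 0 → j ∈ P.parts := by
    intro P _ hne
    by_contra hc
    rw [Multiset.count_eq_zero_of_notMem hc] at hne
    simp at hne
  rw [← Finset.sum_filter_of_ne hside]
  refine Finset.sum_bij' (i := fun P hP => (⟨P.parts.erase j, ?_, ?_⟩ : Nat.Partition (n - j)))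
    (j := fun Q _ => (⟨j ::ₘ Q.parts, ?_, ?_⟩ : Nat.Partition n)) ?_ ?_ ?_ ?_ ?_
  · intro i hi
    exact P.parts_pos (Multiset.mem_of_mem_erase hi)
  · have hmem : j ∈ P.parts := (Finset.mem_filter.1 hP).2
    have h1 : (j ::ₘ P.parts.erase j).sum = n := by
      rw [Multiset.cons_erase hmem]; exact P.parts_sum
    rw [Multiset.sum_cons] at h1
    omega
  · intro i hi
    rcases Multiset.mem_cons.1 hi with rfl | hi'
    · omega
    · exact Q.parts_pos hi'
  · rw [Multiset.sum_cons, Q.parts_sum]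
    omega
  · intro P hP
    exact Finset.mem_univ _
  · intro Q hQ
    refine Finset.mem_filter.2 ⟨Finset.mem_univ _, ?_⟩
    exact Multiset.mem_cons_self _ _
  · intro P hP
    apply Nat.Partition.ext
    simp only
    exact Multiset.cons_erase (Finset.mem_filter.1 hP).2
  · intro Q hQ
    apply Nat.Partition.ext
    simp only
    exact Multiset.erase_cons_head _ _
  · intro P hP
    have hmem : j ∈ P.parts := (Finset.mem_filter.1 hP).2
    rw [wgt_erase a hj hmem]
    congr 1
    exact (wgt_mono a (by omega) _ (parts_subset_Icc
      (⟨P.parts.erase j, fun {i} hi => P.parts_pos (Multiset.mem_of_mem_erase hi), by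
        have h1 : (j ::ₘ P.parts.erase j).sum = n := by
          rw [Multiset.cons_erase hmem]; exact P.parts_sum
        rw [Multiset.sum_cons] at h1
        omega⟩ : Nat.Partition (n - j)))).symm

lemma ctilA_rec (a : ℕ → ℝ) {n : ℕ} (hn : 1 ≤ n) :
    (n : ℝ) * ctilA a n = ∑ j ∈ Finset.Icc 1 n, (j : ℝ) * a j * ctilA a (n - j) := by
  rw [ctilA_eq_wgt, Finset.mul_sum]
  have h1 : ∀ P : Nat.Partition n, (n : ℝ) * wgt a n P.parts
      = ∑ j ∈ Finset.Icc 1 n, (j : ℝ) * ((Multiset.count j P.parts : ℝ) * wgt a n P.parts) := by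
    intro P
    have hnat : n = ∑ j ∈ Finset.Icc 1 n, Multiset.count j P.parts * j := by
      conv_lhs => rw [← P.parts_sum]
      rw [Finset.sum_multiset_count_of_subset P.parts _ (parts_subset_Icc P)]
      simp [smul_eq_mul]
    have hcast : (n : ℝ) = ∑ j ∈ Finset.Icc 1 n, (j : ℝ) * (Multiset.count j P.parts : ℝ) := by
      calc (n : ℝ) = ((∑ j ∈ Finset.Icc 1 n, Multiset.count j P.parts * j : ℕ) : ℝ) := by
            exact_mod_cast congrArg (Nat.cast (R := ℝ)) hnat
        _ = _ := by push_cast; exact Finset.sum_congr rfl fun j _ => mul_comm _ _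
    rw [hcast, Finset.sum_mul]
    exact Finset.sum_congr rfl fun j _ => by ring
  rw [Finset.sum_congr rfl fun P _ => h1 P, Finset.sum_comm]
  refine Finset.sum_congr rfl fun j hj => ?_
  rw [← Finset.mul_sum, key_bij a hj]
  ring

/-! ### The closed form -/

noncomputable def tseq (n : ℕ) : ℝ := ((4 : ℝ) ^ (1 + n / 2) - 1) / 3

lemma tseq_zero : tseq 0 = 1 := by norm_num [tseq]

lemma tseq_one : tseq 1 = 1 := by norm_num [tseq]

lemma tseq_step (n : ℕ) : tseq (n + 2) = 4 * tseq n + 1 := by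
  unfold tseq
  rw [show (n + 2) / 2 = n / 2 + 1 by omega, show 1 + (n/2 + 1) = (1 + n/2) + 1 by ring]
  rw [pow_succ]
  ring

lemma b_val {j : ℕ} (hj : 1 ≤ j) :
    (j : ℝ) * awild j = 1 + (if Even j then (2:ℝ) ^ (j + 1) else 0) := by
  have hj0 : (j : ℝ) ≠ 0 := by positivity
  unfold awild
  rcases Nat.even_or_odd j with he | ho
  · rw [if_neg (Nat.not_odd_iff_even.2 he), if_pos he]
    field_simp
  · rw [if_pos ho, if_neg (Nat.not_even_iff_odd.2 ho)]
    field_simp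
    norm_num

lemma B_val (n : ℕ) :
    ∑ j ∈ Finset.Icc 1 n, (j : ℝ) * awild j
      = n + 8 * ((4:ℝ) ^ (n / 2) - 1) / 3 := by
  induction n with
  | zero => simp
  | succ n ih =>
    rw [Finset.sum_Icc_succ_top (by omega : 1 ≤ n + 1), ih, b_val (by omega)]
    rcases Nat.even_or_odd n with he | ho
    · -- n even, n+1 odd
      obtain ⟨k, rfl⟩ := he
      rw [if_neg (by rw [Nat.even_iff]; omega)]
      rw [show (k + k + 1) / 2 = k by omega, show (k + k) / 2 = k by omega]
      push_cast
      ring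
    · -- n odd, n+1 even
      obtain ⟨k, rfl⟩ := ho
      rw [if_pos (by rw [Nat.even_iff]; omega : Even (2 * k + 1 + 1))]
      rw [show (2 * k + 1 + 1) / 2 = k + 1 by omega, show (2 * k + 1) / 2 = k by omega]
      have h2 : (2:ℝ) ^ (2 * k + 1 + 1 + 1) = 8 * 4 ^ k := by
        rw [show 2 * k + 1 + 1 + 1 = 2 * k + 3 by omega, pow_add, pow_mul]
        norm_num
        ring
      rw [h2, pow_succ]
      push_cast
      ring

lemma G_val : ∀ n : ℕ, 1 ≤ n →
    ∑ j ∈ Finset.Icc 1 n, ((j : ℝ) * awild j) * tseq (n - j) = n * tseq n := by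
  intro n
  induction n using Nat.strong_induction_on with
  | _ n ih =>
    intro hn
    obtain _ | _ | _ | n := n
    · omega
    · -- n = 1
      simp only [Finset.Icc_self, Finset.sum_singleton]
      rw [show 1 - 1 = 0 from rfl, tseq_zero, b_val le_rfl, tseq_one]
      norm_num
    · -- n = 2
      rw [show Finset.Icc 1 2 = {1, 2} from rfl, Finset.sum_insert (by decide),
        Finset.sum_singleton]
      rw [show 2 - 1 = 1 from rfl, show 2 - 2 = 0 from rfl, tseq_zero, tseq_one,
        b_val le_rfl, b_val (by norm_num)]
      rw [show tseq 2 = 5 by norm_num [tseq]]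
      norm_num
    · -- n + 3
      have hsplit : ∑ j ∈ Finset.Icc 1 (n + 3), ((j : ℝ) * awild j) * tseq (n + 3 - j)
          = (∑ j ∈ Finset.Icc 1 (n + 1), ((j : ℝ) * awild j) * tseq (n + 3 - j))
            + ((n + 2 : ℕ) : ℝ) * awild (n + 2) * tseq 1
            + ((n + 3 : ℕ) : ℝ) * awild (n + 3) * tseq 0 := by
        rw [Finset.sum_Icc_succ_top (by omega : (1 : ℕ) ≤ n + 3),
            Finset.sum_Icc_succ_top (by omega : (1 : ℕ) ≤ n + 2),
            show n + 3 - (n + 2) = 1 by omega, show n + 3 - (n + 3) = 0 by omega]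
      have hinner : ∑ j ∈ Finset.Icc 1 (n + 1), ((j : ℝ) * awild j) * tseq (n + 3 - j)
          = 4 * (((n + 1 : ℕ) : ℝ) * tseq (n + 1))
            + (∑ j ∈ Finset.Icc 1 (n + 1), (j : ℝ) * awild j) := by
        have hc : ∀ j ∈ Finset.Icc 1 (n + 1), ((j : ℝ) * awild j) * tseq (n + 3 - j)
            = 4 * (((j : ℝ) * awild j) * tseq (n + 1 - j)) + (j : ℝ) * awild j := by
          intro j hj
          have hj' := Finset.mem_Icc.1 hj
          rw [show n + 3 - j = (n + 1 - j) + 2 by omega, tseq_step]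
          ring
        rw [Finset.sum_congr rfl hc, Finset.sum_add_distrib, ← Finset.mul_sum,
            ih (n + 1) (by omega) (by omega)]
      rw [hsplit, hinner, B_val, b_val (by omega), b_val (by omega),
        tseq_zero, tseq_one, tseq_step (n + 1)]
      simp only [tseq]
      rcases Nat.even_or_odd n with he | ho
      · obtain ⟨k, rfl⟩ := he
        rw [if_pos (by rw [Nat.even_iff]; omega : Even (k + k + 2)),
            if_neg (by rw [Nat.even_iff]; omega : ¬ Even (k + k + 3))]
        rw [show (k + k + 1) / 2 = k by omega,
            show (2 : ℝ) ^ (k + k + 2 + 1) = 8 * 4 ^ k by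
              rw [show k + k + 2 + 1 = 2 * k + 3 by omega, pow_add, pow_mul]; norm_num; ring]
        rw [pow_add]
        push_cast
        ring
      · obtain ⟨k, rfl⟩ := ho
        rw [if_neg (by rw [Nat.even_iff]; omega : ¬ Even (2 * k + 1 + 2)),
            if_pos (by rw [Nat.even_iff]; omega : Even (2 * k + 1 + 3))]
        rw [show (2 * k + 1 + 1) / 2 = k + 1 by omega,
            show (2 : ℝ) ^ (2 * k + 1 + 3 + 1) = 8 * 4 ^ (k + 1) by
              rw [show 2 * k + 1 + 3 + 1 = 2 * (k + 1) + 3 by omega, pow_add, pow_mul]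
              norm_num; ring]
        rw [pow_add]
        push_cast
        ring

lemma ctilA_awild (n : ℕ) : ctilA awild n = tseq n := by
  induction n using Nat.strong_induction_on with
  | _ n ih =>
    rcases Nat.eq_zero_or_pos n with rfl | hn
    · rw [tseq_zero, ctilA_eq_wgt]
      simp [wgt]
    · have hrec := ctilA_rec awild hn
      have : ∑ j ∈ Finset.Icc 1 n, (j : ℝ) * awild j * ctilA awild (n - j)
          = ∑ j ∈ Finset.Icc 1 n, ((j : ℝ) * awild j) * tseq (n - j) := by
        refine Finset.sum_congr rfl fun j hj => ?_
        rw [ih (n - j) (by have := (Finset.mem_Icc.1 hj).1; omega)]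
      rw [this, G_val n hn] at hrec
      have hn0 : (n : ℝ) ≠ 0 := by positivity
      exact mul_left_cancel₀ hn0 hrec

/-- **A divergent assembly.** For the parameters `awild`, one has
`c̃_n = (4^{1+⌊n/2⌋} − 1)/3` for every `n ≥ 1`; consequently `c̃_{2n−1}/c̃_{2n} → 1/4`
and `c̃_{2n}/c̃_{2n+1} → 1` as `n → ∞`, so `(c̃_n)` belongs to no class `RT_ρ`,
`0 ≤ ρ ≤ ∞` (i.e. `c̃_n/c̃_{n+1}` converges to no finite limit nor tends to `∞`). -/
theorem stmt13 :
    (∀ n : ℕ, 1 ≤ n → ctilA awild n = ((4 : ℝ) ^ (1 + n / 2) - 1) / 3) ∧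
    Tendsto (fun n : ℕ => ctilA awild (2 * n + 1) / ctilA awild (2 * n + 2)) atTop
      (nhds (1 / 4)) ∧
    Tendsto (fun n : ℕ => ctilA awild (2 * n + 2) / ctilA awild (2 * n + 3)) atTop
      (nhds 1) ∧
    (¬ ∃ ρ : ℝ, Tendsto (fun n => ctilA awild n / ctilA awild (n + 1)) atTop (nhds ρ)) ∧
    ¬ Tendsto (fun n => ctilA awild n / ctilA awild (n + 1)) atTop atTop := by
  have hform := ctilA_awild
  have htpos : ∀ n : ℕ, 0 < tseq n := by
    intro n
    have h1 : (1:ℝ) < 4 ^ (1 + n / 2) := one_lt_pow₀ (by norm_num) (by omega)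
    exact div_pos (sub_pos.2 h1) (by norm_num)
  -- the key ratio computation
  have key1 : ∀ n : ℕ, tseq (2 * n + 1) / tseq (2 * n + 2)
      = (1 - (1/4 : ℝ) ^ (n + 1)) / (4 - (1/4 : ℝ) ^ (n + 1)) := by
    intro n
    unfold tseq
    rw [show (2 * n + 1) / 2 = n by omega, show (2 * n + 2) / 2 = n + 1 by omega,
      add_comm 1 n, show 1 + (n + 1) = (n + 1) + 1 by omega, pow_succ, div_pow, one_pow]
    set x : ℝ := (4:ℝ) ^ (n + 1) with hxdef
    have hx1 : (1:ℝ) ≤ x := one_le_pow₀ (by norm_num)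
    have hx0 : x ≠ 0 := by positivity
    have hd1 : x * 4 - 1 ≠ 0 := by nlinarith
    have hd2 : 4 - 1 / x ≠ 0 := by
      have : 1 / x ≤ 1 := by rw [div_le_one (by positivity)]; exact hx1
      nlinarith
    field_simp
    ring
  have key2 : ∀ n : ℕ, tseq (2 * n + 2) / tseq (2 * n + 3) = 1 := by
    intro n
    have he : tseq (2 * n + 2) = tseq (2 * n + 3) := by
      unfold tseq
      rw [show (2 * n + 2) / 2 = n + 1 by omega, show (2 * n + 3) / 2 = n + 1 by omega]
    rw [he, div_self (ne_of_gt (htpos (2 * n + 3)))]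
  have hy : Tendsto (fun n : ℕ => ((1/4 : ℝ)) ^ (n + 1)) atTop (nhds 0) := by
    exact (tendsto_pow_atTop_nhds_zero_of_lt_one (by norm_num) (by norm_num)).comp
      (tendsto_add_atTop_nat 1)
  have hT1 : Tendsto (fun n : ℕ => ctilA awild (2 * n + 1) / ctilA awild (2 * n + 2)) atTop
      (nhds (1 / 4)) := by
    have : (fun n : ℕ => ctilA awild (2 * n + 1) / ctilA awild (2 * n + 2))
        = fun n : ℕ => (1 - (1/4 : ℝ) ^ (n + 1)) / (4 - (1/4 : ℝ) ^ (n + 1)) := by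
      funext n; rw [hform, hform, key1]
    rw [this]
    have h1 : Tendsto (fun n : ℕ => (1:ℝ) - (1/4 : ℝ) ^ (n + 1)) atTop (nhds (1 - 0)) :=
      tendsto_const_nhds.sub hy
    have h4 : Tendsto (fun n : ℕ => (4:ℝ) - (1/4 : ℝ) ^ (n + 1)) atTop (nhds (4 - 0)) :=
      tendsto_const_nhds.sub hy
    have := h1.div h4 (by norm_num : (4:ℝ) - 0 ≠ 0)
    simpa [Pi.div_def] using this
  have hT2 : Tendsto (fun n : ℕ => ctilA awild (2 * n + 2) / ctilA awild (2 * n + 3)) atTop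
      (nhds 1) := by
    have : (fun n : ℕ => ctilA awild (2 * n + 2) / ctilA awild (2 * n + 3))
        = fun _ : ℕ => (1:ℝ) := by
      funext n; rw [hform, hform, key2]
    rw [this]
    exact tendsto_const_nhds
  refine ⟨fun n _ => by rw [hform n]; rfl, hT1, hT2, ?_, ?_⟩
  · rintro ⟨ρ, hρ⟩
    have ha : Tendsto (fun n : ℕ => 2 * n + 1) atTop atTop :=
      tendsto_atTop_mono (fun n => by simp only [id_eq]; omega) tendsto_id
    have hb : Tendsto (fun n : ℕ => 2 * n + 2) atTop atTop :=
      tendsto_atTop_mono (fun n => by simp only [id_eq]; omega) tendsto_id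
    have s1 : Tendsto (fun n : ℕ => ctilA awild (2 * n + 1) / ctilA awild (2 * n + 2)) atTop
        (nhds ρ) := by
      have := hρ.comp ha
      have he : ((fun n => ctilA awild n / ctilA awild (n + 1)) ∘ fun n : ℕ => 2 * n + 1)
          = fun n : ℕ => ctilA awild (2 * n + 1) / ctilA awild (2 * n + 2) := by
        funext n
        norm_num [Function.comp_apply]
      rwa [he] at this
    have s2 : Tendsto (fun n : ℕ => ctilA awild (2 * n + 2) / ctilA awild (2 * n + 3)) atTop
        (nhds ρ) := by
      have := hρ.comp hb
      have he : ((fun n => ctilA awild n / ctilA awild (n + 1)) ∘ fun n : ℕ => 2 * n + 2)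
          = fun n : ℕ => ctilA awild (2 * n + 2) / ctilA awild (2 * n + 3) := by
        funext n
        norm_num [Function.comp_apply]
      rwa [he] at this
    have e1 : ρ = 1 / 4 := tendsto_nhds_unique s1 hT1
    have e2 : ρ = 1 := tendsto_nhds_unique s2 hT2
    rw [e1] at e2
    norm_num at e2
  · intro hρ
    have hb : Tendsto (fun n : ℕ => 2 * n + 2) atTop atTop :=
      tendsto_atTop_mono (fun n => by simp only [id_eq]; omega) tendsto_id
    have s2 : Tendsto (fun n : ℕ => ctilA awild (2 * n + 2) / ctilA awild (2 * n + 3)) atTop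
        atTop := by
      have := hρ.comp hb
      have he : ((fun n => ctilA awild n / ctilA awild (n + 1)) ∘ fun n : ℕ => 2 * n + 2)
          = fun n : ℕ => ctilA awild (2 * n + 2) / ctilA awild (2 * n + 3) := by
        funext n
        norm_num [Function.comp_apply]
      rwa [he] at this
    exact not_tendsto_atTop_of_tendsto_nhds hT2 s2
end

section
/- (Multisets, convergent case) Suppose ã_k^{(j)} = C(m_j+k−1, k)·p^{jk}, where the m_j are positive integers and 0 < p < 1. If (c̃_n)_{n≥0} ∈ RT_ρ for some ρ with 0 ≤ ρ < p^{-1}, then for every l ≥ 1, T̃^{(l)}_n/c̃_n → ∏_{j=1}^l (1−(pρ)^j)^{m_j} ∈ (0,∞) as n → ∞, and for every tuple (k_1,…,k_l) ∈ ℕ^l, lim_{n→∞} P_n(k_1,…,k_l) = ∏_{j=1}^l C(m_j+k_j−1, k_j)·(pρ)^{j·k_j}·(1−(pρ)^j)^{m_j}, i.e., the small component counts converge to independent negative-binomial laws. -/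
open Finset Filter Topology

/-- The scaled partition function `c̃_n = ∑_{η ∈ Ω_n} ∏_{j=1}^n b_{k_j}^{(j)}` associated
with scaled weights `b j k = ã_k^{(j)}` (so `c̃_0 = 1`). -/
noncomputable def ctilOf (b : ℕ → ℕ → ℝ) (n : ℕ) : ℝ :=
  ∑ P : Nat.Partition n, ∏ j ∈ Finset.Icc 1 n, b j (Multiset.count j P.parts)

/-- The tail sums `T̃^{(l)}_m`: the sum over partitions of `m` with all parts `> l` of
`∏_{j=l+1}^m ã_{k_j}^{(j)}` (so `T̃^{(l)}_0 = 1`). -/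
noncomputable def TtilOf (b : ℕ → ℕ → ℝ) (l m : ℕ) : ℝ :=
  ∑ P : Nat.Partition m,
    if ∀ j ∈ P.parts, l < j
    then ∏ j ∈ Finset.Icc (l + 1) m, b j (Multiset.count j P.parts) else 0

/-- The marginal probability `P_n(k_1,…,k_l) = (∏_{j=1}^l ã_{k_j}^{(j)}) T̃^{(l)}_{n-M_l}/c̃_n`
where `M_l = ∑_{j=1}^l j k_j`. -/
noncomputable def PformOf (b : ℕ → ℕ → ℝ) (l : ℕ) (k : Fin l → ℕ) (n : ℕ) : ℝ :=
  (∏ i : Fin l, b ((i : ℕ) + 1) (k i))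
    * TtilOf b l (n - ∑ i : Fin l, ((i : ℕ) + 1) * k i) / ctilOf b n

/-- Scaled weights of a multiset: `ã_k^{(j)} = C(m_j+k−1, k) p^{jk}`
(negative-binomial case). -/
noncomputable def msWt (m : ℕ → ℕ) (p : ℝ) (j k : ℕ) : ℝ :=
  (Nat.choose (m j + k - 1) k : ℝ) * p ^ (j * k)

set_option maxRecDepth 8000

section Aux
open PowerSeries


lemma coeff_one_sub_X_pow (M i : ℕ) :
    (PowerSeries.coeff i) ((1 - PowerSeries.X : ℝ⟦X⟧) ^ M) = (-1) ^ i * (M.choose i : ℝ) := by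
  have h : ((1 - PowerSeries.X : ℝ⟦X⟧)) ^ M
      = ∑ b ∈ Finset.range (M + 1), PowerSeries.C ((-1) ^ b * (M.choose b : ℝ)) * PowerSeries.X ^ b := by
    have h0 : (1 - PowerSeries.X : ℝ⟦X⟧) = (- PowerSeries.X) + 1 := by ring
    rw [h0, add_pow]
    apply Finset.sum_congr rfl
    intro b _
    rw [neg_pow]
    simp only [map_mul, map_pow, map_neg, map_one, map_natCast]
    ring
  rw [h, map_sum]
  rw [Finset.sum_eq_single i]
  · rw [PowerSeries.coeff_C_mul, PowerSeries.coeff_X_pow, if_pos rfl, mul_one]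
  · intro b _ hb
    rw [PowerSeries.coeff_C_mul, PowerSeries.coeff_X_pow, if_neg hb.symm, mul_zero]
  · intro hi
    simp only [Finset.mem_range, not_lt] at hi
    rw [Nat.choose_eq_zero_of_lt hi]
    simp

lemma key_binom (M : ℕ) (hM : 1 ≤ M) (s : ℕ) :
    ∑ ik ∈ Finset.HasAntidiagonal.antidiagonal s,
      ((-1) ^ ik.1 * (M.choose ik.1 : ℝ)) * ((M + ik.2 - 1).choose ik.2 : ℝ)
      = if s = 0 then 1 else 0 := by
  have h1 : ((1 - PowerSeries.X : ℝ⟦X⟧) ^ M) * ((invOneSubPow ℝ M).val) = 1 := by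
    rw [← invOneSubPow_inv_eq_one_sub_pow]
    exact (invOneSubPow ℝ M).inv_val
  have h2 := congrArg (PowerSeries.coeff s) h1
  rw [PowerSeries.coeff_mul] at h2
  rw [invOneSubPow_val_eq_mk_sub_one_add_choose_of_pos ℝ M hM] at h2
  simp only [PowerSeries.coeff_mk, coeff_one_sub_X_pow, PowerSeries.coeff_one] at h2
  rw [← h2]
  apply Finset.sum_congr rfl
  rintro ⟨i, k⟩ _
  have hMk : M + k - 1 = M - 1 + k := by omega
  have h3 := Nat.choose_symm (Nat.le_add_left k (M - 1))
  rw [Nat.add_sub_cancel] at h3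
  rw [hMk, ← h3]

end Aux

lemma msum_le {s t : Multiset ℕ} (h : s ≤ t) : s.sum ≤ t.sum := by
  obtain ⟨u, rfl⟩ := Multiset.le_iff_exists_add.mp h
  simp

lemma forward (b : ℕ → ℕ → ℝ) (hb1 : ∀ j, b j 0 = 1) (l n : ℕ) :
    TtilOf b l n = ∑ k ∈ Finset.range (n + 1),
      if (l+1) * k ≤ n then b (l+1) k * TtilOf b (l+1) (n - (l+1)*k) else 0 := by
  set L := l + 1 with hL
  rw [TtilOf, ← Finset.sum_filter]
  rw [← Finset.sum_fiberwise_of_maps_to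
    (g := fun P : Nat.Partition n => Multiset.count L P.parts) (t := Finset.range (n+1))
    (fun P _ => by
      have h1 := Multiset.count_le_card L P.parts
      have h2 : (Multiset.card P.parts) • 1 ≤ P.parts.sum :=
        Multiset.card_nsmul_le_sum (fun x hx => P.parts_pos hx)
      simp only [smul_eq_mul, mul_one, P.parts_sum] at h2
      simp only [Finset.mem_range]
      omega)]
  apply Finset.sum_congr rfl
  intro k _
  rw [Finset.filter_filter]
  by_cases hLk : L * k ≤ n
  · rw [if_pos hLk, TtilOf, ← Finset.sum_filter, Finset.mul_sum]
    refine Finset.sum_bij'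
      (i := fun P hP => (⟨P.parts.filter (fun j => ¬ j = L), ?_, ?_⟩ : Nat.Partition (n - L * k)))
      (j := fun Q hQ => (⟨Q.parts + Multiset.replicate k L, ?_, ?_⟩ : Nat.Partition n))
      ?_ ?_ ?_ ?_ ?_
    · intro i hi
      exact P.parts_pos (Multiset.mem_of_mem_filter hi)
    · -- sum of filtered parts
      simp only [Finset.mem_filter] at hP
      have hsplit := Multiset.filter_add_not (fun j => j = L) P.parts
      have heq : P.parts.filter (fun j => j = L) = Multiset.replicate k L := by
        rw [Multiset.filter_eq']
        rw [hP.2.2]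
      have := congrArg Multiset.sum hsplit
      rw [Multiset.sum_add, heq, Multiset.sum_replicate, P.parts_sum] at this
      simp only [smul_eq_mul] at this
      have hcomm : L * k = k * L := mul_comm L k
      omega
    · intro i hi
      rcases Multiset.mem_add.mp hi with h | h
      · exact Q.parts_pos h
      · rw [Multiset.eq_of_mem_replicate h]; omega
    · rw [Multiset.sum_add, Multiset.sum_replicate, Q.parts_sum]
      simp only [smul_eq_mul]
      have hcomm : L * k = k * L := mul_comm L k
      omega
    · -- maps into target filter
      intro P hP
      simp only [Finset.mem_filter, Finset.mem_univ, true_and] at hP ⊢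
      intro j hj
      have h1 := Multiset.mem_of_mem_filter hj
      have h2 := Multiset.of_mem_filter hj
      have := hP.1 j h1
      omega
    · intro Q hQ
      simp only [Finset.mem_filter, Finset.mem_univ, true_and] at hQ ⊢
      constructor
      · intro j hj
        rcases Multiset.mem_add.mp hj with h | h
        · have := hQ j h; omega
        · rw [Multiset.eq_of_mem_replicate h]; omega
      · rw [Multiset.count_add, Multiset.count_replicate, if_pos rfl,
          Multiset.count_eq_zero.mpr (fun h => by have := hQ L h; omega), zero_add]
    · -- left inverse
      intro P hP
      simp only [Finset.mem_filter, Finset.mem_univ, true_and] at hP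
      apply Nat.Partition.ext
      simp only
      have heq : P.parts.filter (fun j => j = L) = Multiset.replicate k L := by
        rw [Multiset.filter_eq', hP.2]
      rw [add_comm, ← heq, Multiset.filter_add_not]
    · -- right inverse
      intro Q hQ
      simp only [Finset.mem_filter, Finset.mem_univ, true_and] at hQ
      apply Nat.Partition.ext
      simp only
      rw [Multiset.filter_add]
      rw [Multiset.filter_eq_self.mpr (fun a ha => by have := hQ a ha; omega)]
      rw [Multiset.filter_eq_nil.mpr (fun a ha => by rw [Multiset.eq_of_mem_replicate ha]; simp), add_zero]
    · -- values
      intro P hP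
      simp only [Finset.mem_filter, Finset.mem_univ, true_and] at hP
      obtain ⟨hgt, hcnt⟩ := hP
      have step1 : ∏ j ∈ Finset.Icc (l + 1) n, b j (Multiset.count j P.parts)
          = b L k * ∏ j ∈ Finset.Icc (L + 1) n, b j (Multiset.count j P.parts) := by
        by_cases hn : L ≤ n
        · rw [← Finset.mul_prod_erase (Finset.Icc L n) _ (Finset.mem_Icc.mpr ⟨le_refl L, hn⟩),
            Finset.Icc_erase_left, ← Finset.Icc_add_one_left_eq_Ioc, hcnt]
        · have hk0 : k = 0 := by nlinarith [hLk]
          rw [Finset.Icc_eq_empty (by omega), Finset.Icc_eq_empty (by omega), hk0, hb1]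
          simp
      rw [step1]
      congr 1
      have step2 : ∀ j ∈ Finset.Icc (L + 1) n,
          b j (Multiset.count j P.parts)
            = b j (Multiset.count j (Multiset.filter (fun j => ¬ j = L) P.parts)) := by
        intro j hj
        simp only [Finset.mem_Icc] at hj
        rw [Multiset.count_filter, if_pos (by omega)]
      rw [Finset.prod_congr rfl step2]
      symm
      apply Finset.prod_subset
      · apply Finset.Icc_subset_Icc_right; omega
      · intro x hx1 hx2
        simp only [Finset.mem_Icc] at hx1 hx2
        have hxn : Multiset.count x (Multiset.filter (fun j => ¬ j = L) P.parts) = 0 := by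
          rw [Multiset.count_eq_zero]
          intro hmem
          have hle : x ≤ (Multiset.filter (fun j => ¬ j = L) P.parts).sum :=
            Multiset.single_le_sum (fun y _ => Nat.zero_le y) x hmem
          have hsum : (Multiset.filter (fun j => ¬ j = L) P.parts).sum = n - L * k := by
            have hsplit := Multiset.filter_add_not (fun j => j = L) P.parts
            have heq : P.parts.filter (fun j => j = L) = Multiset.replicate k L := by
              rw [Multiset.filter_eq', hcnt]
            have h4 := congrArg Multiset.sum hsplit
            rw [Multiset.sum_add, heq, Multiset.sum_replicate, P.parts_sum] at h4
            simp only [smul_eq_mul] at h4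
            have hcomm : L * k = k * L := mul_comm L k
            omega
          omega
        rw [hxn, hb1]
  · rw [if_neg hLk]
    apply Finset.sum_eq_zero
    intro P hP
    simp only [Finset.mem_filter, Finset.mem_univ, true_and] at hP
    exfalso
    have hrep : Multiset.replicate k L ≤ P.parts :=
      Multiset.le_count_iff_replicate_le.mp (le_of_eq hP.2.symm)
    have := msum_le hrep
    rw [Multiset.sum_replicate, P.parts_sum] at this
    simp only [smul_eq_mul] at this
    have hcomm : L * k = k * L := mul_comm L k
    omega

lemma msWt_zero (m : ℕ → ℕ) (p : ℝ) (j : ℕ) : msWt m p j 0 = 1 := by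
  simp [msWt]

lemma inversion (m : ℕ → ℕ) (hm : ∀ j, 1 ≤ m j) (p : ℝ) (l n : ℕ) :
    TtilOf (msWt m p) (l+1) n = ∑ i ∈ Finset.range (m (l+1) + 1),
      if (l+1)*i ≤ n then
        (-1)^i * ((m (l+1)).choose i : ℝ) * p^((l+1)*i) * TtilOf (msWt m p) l (n - (l+1)*i)
      else 0 := by
  set L := l + 1 with hLdef
  set M := m L with hMdef
  set T := TtilOf (msWt m p) with hTdef
  have hL1 : 1 ≤ L := by omega
  set F : ℕ × ℕ → ℝ := fun x =>
    if L * (x.1 + x.2) ≤ n then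
      ((-1)^x.1 * (M.choose x.1 : ℝ)) * ((M + x.2 - 1).choose x.2 : ℝ)
        * p^(L*(x.1+x.2)) * T L (n - L*(x.1+x.2))
    else 0 with hFdef
  have claimA : (∑ i ∈ Finset.range (m L + 1),
      if L*i ≤ n then
        (-1)^i * (M.choose i : ℝ) * p^(L*i) * T l (n - L*i)
      else 0) = ∑ x ∈ Finset.range (n+1) ×ˢ Finset.range (n+1), F x := by
    have per_i : ∀ i, (if L*i ≤ n then
        (-1)^i * (M.choose i : ℝ) * p^(L*i) * T l (n - L*i) else 0)
        = ∑ k ∈ Finset.range (n+1), F (i, k) := by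
      intro i
      by_cases hi : L * i ≤ n
      · rw [if_pos hi, hTdef, forward (msWt m p) (msWt_zero m p) l (n - L*i), ← hTdef,
          Finset.mul_sum]
        simp only [← hLdef]
        have hsub : Finset.range (n - L*i + 1) ⊆ Finset.range (n + 1) :=
          Finset.range_subset_range.mpr (by omega)
        rw [Finset.sum_subset hsub (fun x hx1 hx2 => by
          simp only [Finset.mem_range] at hx1 hx2
          have hxx := Nat.le_mul_of_pos_left x (show 0 < L by omega)
          rw [if_neg (by omega), mul_zero])]
        apply Finset.sum_congr rfl
        intro k _
        simp only [hFdef]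
        have hd : L * (i+k) = L*i + L*k := by ring
        by_cases hk : L * k ≤ n - L * i
        · rw [if_pos hk, if_pos (by omega)]
          have h1 : n - L * i - L * k = n - L * (i + k) := by omega
          have h2 : p ^ (L*i) * p^(L*k) = p^(L*(i+k)) := by
            rw [← pow_add, Nat.mul_add]
          simp only [msWt, h1, ← hMdef]
          rw [← h2]
          ring
        · rw [if_neg hk, if_neg (by intro hc; apply hk; omega), mul_zero]
      · rw [if_neg hi]
        symm
        apply Finset.sum_eq_zero
        intro k _
        simp only [hFdef]
        rw [if_neg (by
          intro hc
          apply hi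
          have h : L * i ≤ L * (i+k) := Nat.mul_le_mul_left _ (by omega)
          omega)]
    -- combine per_i : extend outer range
    rw [Finset.sum_congr rfl (fun i _ => per_i i), Finset.sum_product]
    -- now LHS over range (M+1), RHS over range (n+1); both equal range (M+n+2)
    have hz1 : ∀ i, M + 1 ≤ i → (∑ k ∈ Finset.range (n+1), F (i,k)) = 0 := by
      intro i hi
      apply Finset.sum_eq_zero
      intro k _
      simp only [hFdef]
      split
      · rw [Nat.choose_eq_zero_of_lt (by omega)]
        simp
      · rfl
    have hz2 : ∀ i, n + 1 ≤ i → (∑ k ∈ Finset.range (n+1), F (i,k)) = 0 := by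
      intro i hi
      apply Finset.sum_eq_zero
      intro k _
      simp only [hFdef]
      have hxx := Nat.le_mul_of_pos_left (i+k) (show 0 < L by omega)
      rw [if_neg (by omega)]
    rw [Finset.sum_subset (Finset.range_subset_range.mpr (show M + 1 ≤ M + n + 2 by omega))
      (fun x hx1 hx2 => hz1 x (by simp only [Finset.mem_range] at hx2; omega))]
    rw [Finset.sum_subset (Finset.range_subset_range.mpr (show n + 1 ≤ M + n + 2 by omega))
      (fun x hx1 hx2 => hz2 x (by simp only [Finset.mem_range] at hx2; omega))]
  rw [claimA]
  -- regroup by s = i + k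
  rw [← Finset.sum_fiberwise_of_maps_to (g := fun x : ℕ × ℕ => x.1 + x.2)
    (t := Finset.range (2*n+1))
    (fun x hx => by
      simp only [Finset.mem_product, Finset.mem_range] at hx
      simp only [Finset.mem_range]
      omega) F]
  have hfib : ∀ s ∈ Finset.range (2*n+1),
      (∑ x ∈ (Finset.range (n+1) ×ˢ Finset.range (n+1)).filter (fun x => x.1 + x.2 = s), F x)
      = if s = 0 then T L n else 0 := by
    intro s _
    by_cases hs : L * s ≤ n
    · have hsn : s ≤ n := le_trans (Nat.le_mul_of_pos_left s (by omega)) hs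
      have hset : (Finset.range (n+1) ×ˢ Finset.range (n+1)).filter (fun x => x.1 + x.2 = s)
          = Finset.HasAntidiagonal.antidiagonal s := by
        ext ⟨i, k⟩
        simp only [Finset.mem_filter, Finset.mem_product, Finset.mem_range,
          Finset.HasAntidiagonal.mem_antidiagonal]
        omega
      rw [hset]
      have : ∀ x ∈ Finset.HasAntidiagonal.antidiagonal s, F x
          = ((-1)^x.1 * (M.choose x.1 : ℝ)) * ((M + x.2 - 1).choose x.2 : ℝ)
            * (p^(L*s) * T L (n - L*s)) := by
        rintro ⟨i, k⟩ hik
        simp only [Finset.HasAntidiagonal.mem_antidiagonal] at hik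
        simp only [hFdef, hik, if_pos hs]
        ring
      rw [Finset.sum_congr rfl this, ← Finset.sum_mul, key_binom M (hm L) s]
      by_cases hs0 : s = 0
      · subst hs0
        simp
      · rw [if_neg hs0, if_neg hs0, zero_mul]
    · have hs0 : s ≠ 0 := by
        intro h; subst h; simp at hs
      rw [if_neg hs0]
      apply Finset.sum_eq_zero
      intro x hx
      simp only [Finset.mem_filter] at hx
      simp only [hFdef, hx.2]
      rw [if_neg hs]
  rw [Finset.sum_congr rfl hfib, Finset.sum_ite_eq' (Finset.range (2*n+1)) 0 (fun _ => T L n)]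
  rw [if_pos (by simp)]

section basics
variable (m : ℕ → ℕ) (p : ℝ)

lemma msWt_pos (hm : ∀ j, 1 ≤ m j) (hp : 0 < p) (j k : ℕ) : 0 < msWt m p j k := by
  apply mul_pos _ (pow_pos hp _)
  have : 0 < (m j + k - 1).choose k := Nat.choose_pos (by have := hm j; omega)
  exact_mod_cast this

lemma Ttil_eq_ctil (b : ℕ → ℕ → ℝ) (n : ℕ) : TtilOf b 0 n = ctilOf b n := by
  rw [TtilOf, ctilOf]
  apply Finset.sum_congr rfl
  intro P _
  rw [if_pos (fun j hj => P.parts_pos hj)]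

lemma ctil_pos_s15 (hm : ∀ j, 1 ≤ m j) (hp : 0 < p) (n : ℕ) : 0 < ctilOf (msWt m p) n := by
  rw [ctilOf]
  have : Nonempty (Nat.Partition n) :=
    ⟨⟨Multiset.replicate n 1, fun h => by rw [Multiset.eq_of_mem_replicate h]; omega,
      by simp [Multiset.sum_replicate]⟩⟩
  apply Finset.sum_pos
  · intro P _
    exact Finset.prod_pos (fun j _ => msWt_pos m p hm hp j _)
  · exact Finset.univ_nonempty

lemma Ttil_nonneg (hm : ∀ j, 1 ≤ m j) (hp : 0 < p) (l n : ℕ) :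
    0 ≤ TtilOf (msWt m p) l n := by
  apply Finset.sum_nonneg
  intro P _
  split
  · exact le_of_lt (Finset.prod_pos (fun j _ => msWt_pos m p hm hp j _))
  · exact le_refl 0

end basics

lemma ratio_lim (c : ℕ → ℝ) (ρ : ℝ) (hc : ∀ n, 0 < c n) (hRT : RT c ρ) (s : ℕ) :
    Tendsto (fun n => c (n - s) / c n) atTop (nhds (ρ ^ s)) := by
  induction s with
  | zero =>
      simp only [Nat.sub_zero, pow_zero]
      exact Tendsto.congr (fun n => (div_self (hc n).ne').symm) tendsto_const_nhds
  | succ s ih =>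
      have h1 : Tendsto (fun n => c (n - (s+1)) / c (n - s)) atTop (nhds ρ) := by
        apply Tendsto.congr' _ (hRT.comp (tendsto_sub_atTop_nat (s+1)))
        filter_upwards [eventually_ge_atTop (s+1)] with n hn
        simp only [Function.comp_apply]
        congr 2
        omega
      have h2 := h1.mul ih
      rw [← pow_succ'] at h2
      apply h2.congr
      intro n
      have hn1 : n - (s+1) = n - (s+1) := rfl
      exact div_mul_div_cancel₀ (hc (n - s)).ne'

lemma alt_sum (M : ℕ) (x : ℝ) :
    ∑ i ∈ Finset.range (M+1), (-1)^i * (M.choose i : ℝ) * x^i = (1 - x)^M := by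
  have h : (1 - x) = -x + 1 := by ring
  rw [h, add_pow]
  apply Finset.sum_congr rfl
  intro i _
  rw [neg_pow]
  ring

lemma main_lim (m : ℕ → ℕ) (hm : ∀ j, 1 ≤ m j) (p : ℝ) (hp0 : 0 < p) (ρ : ℝ)
    (hRT : RT (ctilOf (msWt m p)) ρ) (l : ℕ) :
    Tendsto (fun n => TtilOf (msWt m p) l n / ctilOf (msWt m p) n) atTop
      (nhds (∏ j ∈ Finset.Icc 1 l, (1 - (p * ρ) ^ j) ^ (m j))) := by
  set c := ctilOf (msWt m p) with hcdef
  set T := TtilOf (msWt m p) with hTdef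
  have hc : ∀ n, 0 < c n := ctil_pos_s15 m p hm hp0
  induction l with
  | zero =>
      simp only [Finset.Icc_eq_empty (by omega : ¬ (1:ℕ) ≤ 0), Finset.prod_empty]
      apply Tendsto.congr (fun n => by rw [hTdef, Ttil_eq_ctil, ← hcdef, div_self (hc n).ne'])
      exact tendsto_const_nhds
  | succ l ih =>
      set L := l + 1 with hLdef
      set M := m L with hMdef
      set Lim := ∏ j ∈ Finset.Icc 1 l, (1 - (p * ρ) ^ j) ^ (m j) with hLimdef
      have step : ∀ i ∈ Finset.range (M + 1),
          Tendsto (fun n => (if L*i ≤ n then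
              (-1)^i * (M.choose i : ℝ) * p^(L*i) * T l (n - L*i) else 0) / c n) atTop
            (nhds ((-1)^i * (M.choose i : ℝ) * p^(L*i) * Lim * ρ^(L*i))) := by
        intro i _
        have h1 : Tendsto (fun n => T l (n - L*i) / c (n - L*i)) atTop (nhds Lim) := by
          apply (ih.comp (tendsto_sub_atTop_nat (L*i))).congr
          intro n; rfl
        have h2 := ratio_lim c ρ hc hRT (L*i)
        have h3 := ((h1.mul h2).const_mul ((-1)^i * (M.choose i : ℝ) * p^(L*i)))
        rw [show (-1)^i * (M.choose i : ℝ) * p^(L*i) * (Lim * ρ^(L*i))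
            = (-1)^i * (M.choose i : ℝ) * p^(L*i) * Lim * ρ^(L*i) by ring] at h3
        apply h3.congr'
        filter_upwards [eventually_ge_atTop (L*i)] with n hn
        rw [if_pos hn]
        have e1 := (hc (n - L*i)).ne'
        have e2 := (hc n).ne'
        field_simp
      have hsum := tendsto_finset_sum (Finset.range (M+1)) step
      have heq : (fun n => T L n / c n) = (fun n => ∑ i ∈ Finset.range (M+1),
          (if L*i ≤ n then (-1)^i * (M.choose i : ℝ) * p^(L*i) * T l (n - L*i) else 0) / c n) := by
        funext n
        rw [hTdef, hLdef, inversion m hm p l n, Finset.sum_div]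
      rw [heq]
      have hval : ∑ i ∈ Finset.range (M+1), (-1)^i * (M.choose i : ℝ) * p^(L*i) * Lim * ρ^(L*i)
          = ∏ j ∈ Finset.Icc 1 L, (1 - (p * ρ) ^ j) ^ (m j) := by
        rw [hLdef, Finset.prod_Icc_succ_top (by omega), ← hLdef, ← hLimdef, ← hMdef]
        rw [show ∀ x : ℝ, Lim * x = x * Lim from fun x => mul_comm _ _]
        rw [← alt_sum M ((p*ρ)^L), Finset.sum_mul]
        apply Finset.sum_congr rfl
        intro i _
        rw [← pow_mul, mul_pow, mul_comm L i]
        ring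
      rw [← hval]
      exact hsum

lemma Icc_prod_shift (l : ℕ) (f : ℕ → ℝ) :
    ∏ j ∈ Finset.Icc 1 l, f j = ∏ j ∈ Finset.range l, f (j+1) := by
  induction l with
  | zero => simp
  | succ l ih => rw [Finset.prod_Icc_succ_top (by omega), ih, Finset.prod_range_succ]


/-- **Multisets, convergent case.** If `ã_k^{(j)} = C(m_j+k−1,k) p^{jk}` with `m_j ≥ 1`
integers, `0 < p < 1`, and `(c̃_n) ∈ RT_ρ` for some `0 ≤ ρ < p⁻¹`, then for every
`l ≥ 1`, `T̃^{(l)}_n/c̃_n → ∏_{j=1}^l (1−(pρ)^j)^{m_j} ∈ (0,∞)`, and for every tuple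
`(k_1,…,k_l) ∈ ℕ^l`,
`lim P_n(k_1,…,k_l) = ∏_{j=1}^l C(m_j+k_j−1,k_j)(pρ)^{j k_j}(1−(pρ)^j)^{m_j}`:
the small component counts converge to independent negative-binomial laws. -/
theorem stmt15 (m : ℕ → ℕ) (hm : ∀ j, 1 ≤ m j)
    (p : ℝ) (hp0 : 0 < p) (hp1 : p < 1)
    (ρ : ℝ) (hρ0 : 0 ≤ ρ) (hρ1 : ρ < p⁻¹)
    (hRT : RT (ctilOf (msWt m p)) ρ) :
    ∀ l, 1 ≤ l →
      (0 < ∏ j ∈ Finset.Icc 1 l, (1 - (p * ρ) ^ j) ^ (m j) ∧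
        Tendsto (fun n => TtilOf (msWt m p) l n / ctilOf (msWt m p) n) atTop
          (nhds (∏ j ∈ Finset.Icc 1 l, (1 - (p * ρ) ^ j) ^ (m j)))) ∧
      ∀ k : Fin l → ℕ,
        Tendsto (fun n => PformOf (msWt m p) l k n) atTop
          (nhds (∏ i : Fin l,
            (Nat.choose (m ((i : ℕ) + 1) + k i - 1) (k i) : ℝ)
              * (p * ρ) ^ (((i : ℕ) + 1) * k i)
              * (1 - (p * ρ) ^ ((i : ℕ) + 1)) ^ (m ((i : ℕ) + 1)))) := by
  have hpρ0 : 0 ≤ p * ρ := mul_nonneg hp0.le hρ0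
  have hpρ1 : p * ρ < 1 := by
    calc p * ρ < p * p⁻¹ := by exact mul_lt_mul_of_pos_left hρ1 hp0
    _ = 1 := mul_inv_cancel₀ hp0.ne'
  have hfac : ∀ j, 1 ≤ j → 0 < (1 - (p * ρ) ^ j) ^ (m j) := by
    intro j hj
    apply pow_pos
    have : (p * ρ) ^ j < 1 := pow_lt_one₀ hpρ0 hpρ1 (by omega)
    linarith
  intro l hl
  have hc : ∀ n, 0 < ctilOf (msWt m p) n := ctil_pos_s15 m p hm hp0
  set c := ctilOf (msWt m p) with hcdef
  set T := TtilOf (msWt m p) with hTdef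
  set Lim := ∏ j ∈ Finset.Icc 1 l, (1 - (p * ρ) ^ j) ^ (m j) with hLimdef
  have hLimpos : 0 < Lim := Finset.prod_pos (fun j hj => hfac j (Finset.mem_Icc.mp hj).1)
  refine ⟨⟨hLimpos, main_lim m hm p hp0 ρ hRT l⟩, ?_⟩
  intro k
  set Msum := ∑ i : Fin l, ((i : ℕ) + 1) * k i with hMsumdef
  set A := ∏ i : Fin l, msWt m p ((i : ℕ) + 1) (k i) with hAdef
  have h1 : Tendsto (fun n => T l (n - Msum) / c (n - Msum)) atTop (nhds Lim) :=
    (main_lim m hm p hp0 ρ hRT l).comp (tendsto_sub_atTop_nat Msum)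
  have h2 := ratio_lim c ρ hc hRT Msum
  have h3 := (h1.mul h2).const_mul A
  have h4 : Tendsto (fun n => PformOf (msWt m p) l k n) atTop (nhds (A * (Lim * ρ ^ Msum))) := by
    apply h3.congr
    intro n
    rw [PformOf, ← hcdef, ← hTdef, ← hMsumdef, ← hAdef,
      div_mul_div_cancel₀ (hc (n - Msum)).ne', mul_div_assoc]
  have hval : A * (Lim * ρ ^ Msum) = ∏ i : Fin l,
      (Nat.choose (m ((i : ℕ) + 1) + k i - 1) (k i) : ℝ)
        * (p * ρ) ^ (((i : ℕ) + 1) * k i)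
        * (1 - (p * ρ) ^ ((i : ℕ) + 1)) ^ (m ((i : ℕ) + 1)) := by
    rw [Finset.prod_mul_distrib]
    have e1 : Lim = ∏ i : Fin l, (1 - (p * ρ) ^ ((i : ℕ) + 1)) ^ (m ((i : ℕ) + 1)) := by
      rw [hLimdef, Icc_prod_shift, ← Fin.prod_univ_eq_prod_range]
    have e2 : A * ρ ^ Msum = ∏ i : Fin l,
        (Nat.choose (m ((i : ℕ) + 1) + k i - 1) (k i) : ℝ) * (p * ρ) ^ (((i : ℕ) + 1) * k i) := by
      rw [hMsumdef, ← Finset.prod_pow_eq_pow_sum, hAdef, ← Finset.prod_mul_distrib]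
      apply Finset.prod_congr rfl
      intro i _
      rw [msWt, mul_pow]
      ring
    rw [e1, ← e2]
    ring
  rw [← hval]
  exact h4
end

section
/- (Selections) Suppose ã_k^{(j)} = C(m_j, k)·p^{jk} for 0 ≤ k ≤ m_j and ã_k^{(j)} = 0 for k > m_j, where the m_j are positive integers, p > 0, and C denotes the binomial coefficient (the binomial/selection case). If (c̃_n)_{n≥0} ∈ RT_ρ for some ρ with 0 ≤ ρ ≤ p^{-1}, then for every l ≥ 1, T̃^{(l)}_n/c̃_n → ∏_{j=1}^l (1+(pρ)^j)^{−m_j} ∈ (0,∞) as n → ∞, and for every tuple (k_1,…,k_l) with 0 ≤ k_j ≤ m_j, lim_{n→∞} P_n(k_1,…,k_l) = ∏_{j=1}^l C(m_j, k_j)·(pρ)^{j·k_j}·(1+(pρ)^j)^{−m_j}; in particular the selection is convergent with independent binomial limit laws. -/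
open Finset Filter Topology

/-- Scaled weights of a selection: `ã_k^{(j)} = C(m_j, k) p^{jk}` for `0 ≤ k ≤ m_j` and
`ã_k^{(j)} = 0` for `k > m_j` (binomial case). -/
noncomputable def selWt (m : ℕ → ℕ) (p : ℝ) (j k : ℕ) : ℝ :=
  if k ≤ m j then (Nat.choose (m j) k : ℝ) * p ^ (j * k) else 0

namespace Sel18

/-- Toeplitz action of a polynomial on a sequence. -/
noncomputable def app (q : Polynomial ℂ) (f : ℕ → ℂ) (i : ℕ) : ℂ :=
  q.sum fun κ a => a * f (i + κ)

lemma app_monomial (t : ℕ) (a : ℂ) (f : ℕ → ℂ) (i : ℕ) :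
    app (Polynomial.monomial t a) f i = a * f (i + t) := by
  unfold app
  rw [Polynomial.sum_monomial_index]
  simp

lemma app_add (q r : Polynomial ℂ) (f : ℕ → ℂ) (i : ℕ) :
    app (q + r) f i = app q f i + app r f i := by
  unfold app
  rw [Polynomial.sum_add_index]
  · intro κ; simp
  · intro a b₁ b₂; ring

lemma app_zero (f : ℕ → ℂ) (i : ℕ) : app 0 f i = 0 := by
  unfold app; simp

lemma app_mul (q r : Polynomial ℂ) (f : ℕ → ℂ) (i : ℕ) :
    app (q * r) f i = app q (app r f) i := by
  induction q using Polynomial.induction_on' generalizing i with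
  | add s t hs ht => rw [add_mul, app_add, app_add, hs, ht]
  | monomial n a =>
    induction r using Polynomial.induction_on' generalizing i with
    | add s t hs ht =>
      rw [mul_add, app_add, hs, ht, app_monomial, app_monomial, app_monomial, app_add]
      ring
    | monomial n' a' =>
      rw [Polynomial.monomial_mul_monomial, app_monomial, app_monomial, app_monomial,
        add_assoc]
      ring

lemma app_one (f : ℕ → ℂ) (i : ℕ) : app 1 f i = f i := by
  rw [← Polynomial.monomial_zero_one, app_monomial]
  simp

lemma app_C (a : ℂ) (f : ℕ → ℂ) (i : ℕ) : app (Polynomial.C a) f i = a * f i := by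
  rw [← Polynomial.monomial_zero_left, app_monomial]
  simp

lemma app_neg (q : Polynomial ℂ) (f : ℕ → ℂ) (i : ℕ) : app (-q) f i = - app q f i := by
  have h := app_add q (-q) f i
  simp only [add_neg_cancel, app_zero] at h
  exact eq_neg_of_add_eq_zero_right h.symm

lemma app_sub (q r : Polynomial ℂ) (f : ℕ → ℂ) (i : ℕ) :
    app (q - r) f i = app q f i - app r f i := by
  rw [sub_eq_add_neg, app_add, app_neg, sub_eq_add_neg]

lemma app_X_sub_C (r : ℂ) (f : ℕ → ℂ) (i : ℕ) :
    app (Polynomial.X - Polynomial.C r) f i = f (i + 1) - r * f i := by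
  rw [app_sub, app_C, ← Polynomial.monomial_one_one_eq_X, app_monomial, one_mul]

lemma app_const (q : Polynomial ℂ) (e : ℂ) (i : ℕ) :
    app q (fun _ => e) i = q.eval 1 * e := by
  induction q using Polynomial.induction_on' generalizing i with
  | add s t hs ht => rw [app_add, hs i, ht i, Polynomial.eval_add]; ring
  | monomial n a => rw [app_monomial, Polynomial.eval_monomial]; simp

lemma app_finset_sum {α : Type*} (s : Finset α) (q : α → Polynomial ℂ) (f : ℕ → ℂ) (i : ℕ) :
    app (∑ x ∈ s, q x) f i = ∑ x ∈ s, app (q x) f i := by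
  classical
  induction s using Finset.induction_on with
  | empty => simp [app_zero]
  | insert _ _ hx ih => rw [Finset.sum_insert hx, app_add, ih, Finset.sum_insert hx]

/-- Boundedness of a sequence. -/
def Bdd (f : ℕ → ℂ) : Prop := ∃ M : ℝ, ∀ i, ‖f i‖ ≤ M

lemma Bdd.app {f : ℕ → ℂ} (hf : Bdd f) (q : Polynomial ℂ) : Bdd (app q f) := by
  obtain ⟨M, hM⟩ := hf
  induction q using Polynomial.induction_on' with
  | add s t hs ht =>
    obtain ⟨Ms, hMs⟩ := hs
    obtain ⟨Mt, hMt⟩ := ht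
    exact ⟨Ms + Mt, fun i => by
      rw [app_add]
      exact (norm_add_le _ _).trans (add_le_add (hMs i) (hMt i))⟩
  | monomial n a =>
    exact ⟨‖a‖ * M, fun i => by
      rw [app_monomial, norm_mul]
      exact mul_le_mul_of_nonneg_left (hM _) (norm_nonneg a)⟩

lemma app_binom (s : ℂ) (j mm : ℕ) (f : ℕ → ℂ) (i : ℕ) :
    app ((1 + Polynomial.C s * Polynomial.X ^ j) ^ mm) f i
      = ∑ k ∈ Finset.range (mm + 1), (mm.choose k : ℂ) * s ^ k * f (i + j * k) := by
  have hexp : (1 + Polynomial.C s * Polynomial.X ^ j) ^ mm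
      = ∑ k ∈ Finset.range (mm + 1),
          Polynomial.C ((mm.choose k : ℂ) * s ^ k) * Polynomial.X ^ (j * k) := by
    rw [add_comm (1 : Polynomial ℂ), add_pow]
    apply Finset.sum_congr rfl
    intro k hk
    rw [one_pow, mul_one, mul_pow, ← Polynomial.C_pow, ← pow_mul]
    rw [Polynomial.C_mul, mul_comm j k, Polynomial.C_eq_natCast]
    ring
  rw [hexp, app_finset_sum]
  apply Finset.sum_congr rfl
  intro k hk
  rw [Polynomial.C_mul_X_pow_eq_monomial, app_monomial]



lemma Bdd.shift {f : ℕ → ℂ} (hf : Bdd f) (t : ℕ) : Bdd (fun i => f (i + t)) := by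
  obtain ⟨M, hM⟩ := hf; exact ⟨M, fun i => hM (i + t)⟩

noncomputable def avg (f : ℕ → ℂ) (N : ℕ) : ℂ := (∑ i ∈ Finset.range N, f i) / (N : ℂ)

lemma avg_bound {f : ℕ → ℂ} {M : ℝ} (hM : ∀ i, ‖f i‖ ≤ M) (N : ℕ) : ‖avg f N‖ ≤ M := by
  have hM0 : 0 ≤ M := (norm_nonneg (f 0)).trans (hM 0)
  rcases Nat.eq_zero_or_pos N with h | h
  · subst h; simp [avg, hM0]
  · have hN : (0:ℝ) < (N:ℝ) := by exact_mod_cast h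
    unfold avg
    rw [norm_div, Complex.norm_natCast, div_le_iff₀ hN]
    calc ‖∑ i ∈ Finset.range N, f i‖ ≤ ∑ i ∈ Finset.range N, ‖f i‖ := norm_sum_le _ _
      _ ≤ ∑ _i ∈ Finset.range N, M := Finset.sum_le_sum (fun i _ => hM i)
      _ = M * N := by simp [mul_comm]

open scoped Classical in
noncomputable def BL (V : Ultrafilter ℕ) (f : ℕ → ℂ) : ℂ :=
  if h : ∃ z, Tendsto (avg f) (V : Filter ℕ) (nhds z) then h.choose else 0

lemma BL_tendsto (V : Ultrafilter ℕ) {f : ℕ → ℂ} (hf : Bdd f) :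
    Tendsto (avg f) (V : Filter ℕ) (nhds (BL V f)) := by
  classical
  obtain ⟨M, hM⟩ := hf
  have hmem : ∀ N, avg f N ∈ Metric.closedBall (0:ℂ) M := by
    intro N; simpa [Metric.mem_closedBall, dist_eq_norm] using avg_bound hM N
  have hle : ↑(V.map (avg f)) ≤ 𝓟 (Metric.closedBall (0:ℂ) M) := by
    rw [Ultrafilter.coe_map, Filter.le_principal_iff, Filter.mem_map]
    exact Filter.univ_mem' hmem
  obtain ⟨z, _, hz⟩ := (isCompact_closedBall (0:ℂ) M).ultrafilter_le_nhds (V.map (avg f)) hle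
  have hex : ∃ z, Tendsto (avg f) (V : Filter ℕ) (nhds z) := ⟨z, by
    rwa [Ultrafilter.coe_map] at hz⟩
  rw [BL, dif_pos hex]
  exact hex.choose_spec

section BLsec
variable (V : Ultrafilter ℕ)

lemma BL_add {f g : ℕ → ℂ} (hf : Bdd f) (hg : Bdd g) :
    BL V (fun i => f i + g i) = BL V f + BL V g := by
  have h1 : Tendsto (avg (fun i => f i + g i)) (V : Filter ℕ) (nhds (BL V f + BL V g)) := by
    have he : avg (fun i => f i + g i) = fun N => avg f N + avg g N := by
      funext N; unfold avg; rw [Finset.sum_add_distrib, add_div]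
    rw [he]
    exact (BL_tendsto V hf).add (BL_tendsto V hg)
  have hfg : Bdd (fun i => f i + g i) := by
    obtain ⟨M, hM⟩ := hf; obtain ⟨M', hM'⟩ := hg
    exact ⟨M + M', fun i => (norm_add_le _ _).trans (add_le_add (hM i) (hM' i))⟩
  exact tendsto_nhds_unique (BL_tendsto V hfg) h1

lemma BL_smul (a : ℂ) {f : ℕ → ℂ} (hf : Bdd f) :
    BL V (fun i => a * f i) = a * BL V f := by
  have h1 : Tendsto (avg (fun i => a * f i)) (V : Filter ℕ) (nhds (a * BL V f)) := by
    have he : avg (fun i => a * f i) = fun N => a * avg f N := by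
      funext N; unfold avg; rw [← Finset.mul_sum, mul_div_assoc]
    rw [he]
    exact (BL_tendsto V hf).const_mul a
  have haf : Bdd (fun i => a * f i) := by
    obtain ⟨M, hM⟩ := hf
    exact ⟨‖a‖ * M, fun i => by
      rw [norm_mul]; exact mul_le_mul_of_nonneg_left (hM i) (norm_nonneg a)⟩
  exact tendsto_nhds_unique (BL_tendsto V haf) h1

variable (hV : (V : Filter ℕ) ≤ atTop)
include hV

lemma BL_const (c : ℂ) : BL V (fun _ => c) = c := by
  have h1 : Tendsto (avg (fun _ => c)) (V : Filter ℕ) (nhds c) := by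
    apply Tendsto.congr' _ tendsto_const_nhds
    filter_upwards [hV (Filter.eventually_ge_atTop 1)] with N hN
    unfold avg
    rw [Finset.sum_const, Finset.card_range, nsmul_eq_mul, mul_comm,
      mul_div_assoc, div_self (by exact_mod_cast Nat.one_le_iff_ne_zero.mp hN), mul_one]
  exact tendsto_nhds_unique (BL_tendsto V ⟨‖c‖, fun _ => le_refl _⟩) h1

lemma BL_shift {f : ℕ → ℂ} (hf : Bdd f) : BL V (fun i => f (i + 1)) = BL V f := by
  obtain ⟨M, hM⟩ := hf
  have hM0 : 0 ≤ M := (norm_nonneg (f 0)).trans (hM 0)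
  have hdiff : Tendsto (fun N => avg (fun i => f (i + 1)) N - avg f N) atTop (nhds 0) := by
    refine squeeze_zero_norm ?_ (tendsto_const_div_atTop_nhds_zero_nat (2 * M))
    intro N
    rcases Nat.eq_zero_or_pos N with h | h
    · subst h; simp [avg]
    · have heq : avg (fun i => f (i + 1)) N - avg f N = (f N - f 0) / N := by
        unfold avg
        rw [div_sub_div_same]
        congr 1
        have h1 : ∑ i ∈ Finset.range N, f (i + 1)
            = (∑ i ∈ Finset.range (N + 1), f i) - f 0 := by
          rw [Finset.sum_range_succ']
          ring
        rw [h1, Finset.sum_range_succ]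
        ring
      rw [heq, norm_div, Complex.norm_natCast]
      have hN : (0:ℝ) < (N:ℝ) := by exact_mod_cast h
      gcongr
      exact (norm_sub_le _ _).trans (by linarith [hM N, hM 0])
  have h1 : Tendsto (avg (fun i => f (i + 1))) (V : Filter ℕ) (nhds (BL V f)) := by
    have he : avg (fun i => f (i + 1))
        = fun N => avg f N + (avg (fun i => f (i + 1)) N - avg f N) := by
      funext N; ring
    rw [he]
    simpa using (BL_tendsto V ⟨M, hM⟩).add (hdiff.mono_left hV)
  exact tendsto_nhds_unique (BL_tendsto V (Bdd.shift ⟨M, hM⟩ 1)) h1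

lemma BL_shift_t {f : ℕ → ℂ} (hf : Bdd f) (t : ℕ) : BL V (fun i => f (i + t)) = BL V f := by
  induction t with
  | zero => simp
  | succ t ih =>
    have he : (fun i => f (i + (t + 1))) = fun i => (fun i' => f (i' + t)) (i + 1) := by
      funext i; simp only []; congr 1; omega
    rw [he, BL_shift V hV (hf.shift t), ih]

lemma BL_geom {z : ℂ} (hz : ‖z‖ = 1) (hz1 : z ≠ 1) : BL V (fun i => z ^ i) = 0 := by
  have hbdd : Bdd (fun i => z ^ i) := ⟨1, fun i => by rw [norm_pow, hz, one_pow]⟩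
  have h1 : BL V (fun i => z ^ (i + 1)) = BL V (fun i => z ^ i) := BL_shift V hV hbdd
  have h2 : BL V (fun i => z ^ (i + 1)) = z * BL V (fun i => z ^ i) := by
    have he : (fun i => z ^ (i + 1)) = fun i => z * z ^ i := by
      funext i; rw [pow_succ]; ring
    rw [he, BL_smul V z hbdd]
  have h3 : (z - 1) * BL V (fun i => z ^ i) = 0 := by
    rw [sub_mul, one_mul, ← h2, h1, sub_self]
  rcases mul_eq_zero.mp h3 with h | h
  · exact absurd (sub_eq_zero.mp h) hz1
  · exact h

end BLsec



lemma bdd_char {z : ℂ} (hz : ‖z‖ = 1) {f : ℕ → ℂ} (hf : Bdd f) :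
    Bdd (fun i => z ^ i * f i) := by
  obtain ⟨M, hM⟩ := hf
  exact ⟨M, fun i => by rw [norm_mul, norm_pow, hz, one_pow, one_mul]; exact hM i⟩

lemma BL_char_app (V : Ultrafilter ℕ) (hV : (V : Filter ℕ) ≤ atTop)
    {z : ℂ} (hz : ‖z‖ = 1) (E : Polynomial ℂ) {f : ℕ → ℂ} (hf : Bdd f) :
    BL V (fun i => z ^ i * app E f i) = E.eval z⁻¹ * BL V (fun i => z ^ i * f i) := by
  have hz0 : z ≠ 0 := by intro h; rw [h, norm_zero] at hz; norm_num at hz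
  induction E using Polynomial.induction_on' with
  | add s t hs ht =>
    have he : (fun i => z ^ i * app (s + t) f i)
        = fun i => z ^ i * app s f i + z ^ i * app t f i := by
      funext i; rw [app_add]; ring
    rw [he, BL_add V (bdd_char hz (hf.app s)) (bdd_char hz (hf.app t)), hs, ht,
      Polynomial.eval_add]
    ring
  | monomial n a =>
    have he : (fun i => z ^ i * app (Polynomial.monomial n a) f i)
        = fun i => (a * (z⁻¹) ^ n) * ((fun i' => z ^ i' * f i') (i + n)) := by
      funext i
      rw [app_monomial]
      field_simp
      have hzn : z ^ n * z⁻¹ ^ n = 1 := by rw [← mul_pow, mul_inv_cancel₀ hz0, one_pow]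
      linear_combination (-(z ^ i * a * f (i + n))) * hzn
    rw [he, BL_smul V _ ((bdd_char hz hf).shift n), BL_shift_t V hV (bdd_char hz hf) n,
      Polynomial.eval_monomial]

lemma peel (Rep : (ℕ → ℂ) → Prop)
    (rep_bdd : ∀ g, Rep g → Bdd g)
    (rep_app : ∀ q g, Rep g → Rep (app q g))
    (R : Multiset ℂ) :
    (∀ r ∈ R, r ≠ 1 ∧ (1 < ‖r‖ ∨
        (∀ g, Rep g → ∀ u A₀ : ℂ, (∀ i, g i = u + A₀ * r ^ i) → A₀ = 0))) →
    ∀ g, Rep g → ∀ d : ℂ,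
      (∀ i, app (R.map (fun a => Polynomial.X - Polynomial.C a)).prod g i = d) →
      ∃ e, ∀ i, g i = e := by
  induction R using Multiset.induction_on with
  | empty =>
    intro _ g hg d happ
    exact ⟨d, fun i => by
      have := happ i
      rwa [Multiset.map_zero, Multiset.prod_zero, app_one] at this⟩
  | cons r R' ih =>
    intro hR g hg d happ
    set g' := app (R'.map (fun a => Polynomial.X - Polynomial.C a)).prod g with hg'def
    have hg' : Rep g' := rep_app _ _ hg
    have hstep : ∀ i, g' (i + 1) - r * g' i = d := by
      intro i
      have h := happ i
      rwa [Multiset.map_cons, Multiset.prod_cons, app_mul, app_X_sub_C] at h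
    have hr1 : r ≠ 1 := (hR r (Multiset.mem_cons_self r R')).1
    have h1r : (1 : ℂ) - r ≠ 0 := by
      intro h; exact hr1 (sub_eq_zero.mp h).symm
    set u := d / (1 - r) with hudef
    have hu : d = u * (1 - r) := (div_mul_cancel₀ d h1r).symm
    have hsol : ∀ i, g' i = u + (g' 0 - u) * r ^ i := by
      intro i
      induction i with
      | zero => simp
      | succ i ihs =>
        have h2 : g' (i + 1) = d + r * g' i := by linear_combination hstep i
        rw [h2, ihs, pow_succ]
        linear_combination hu
    have hA : g' 0 - u = 0 := by
      rcases (hR r (Multiset.mem_cons_self r R')).2 with hgt | hkill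
      · by_contra hA0
        obtain ⟨M, hM⟩ := rep_bdd g' hg'
        have hub : ∀ i, ‖g' 0 - u‖ * ‖r‖ ^ i ≤ M + ‖u‖ := by
          intro i
          have h3 : (g' 0 - u) * r ^ i = g' i - u := by rw [hsol i]; ring
          calc ‖g' 0 - u‖ * ‖r‖ ^ i = ‖(g' 0 - u) * r ^ i‖ := by rw [norm_mul, norm_pow]
            _ = ‖g' i - u‖ := by rw [h3]
            _ ≤ ‖g' i‖ + ‖u‖ := norm_sub_le _ _
            _ ≤ M + ‖u‖ := by linarith [hM i]
        have hten : Tendsto (fun i => ‖g' 0 - u‖ * ‖r‖ ^ i) atTop atTop :=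
          Tendsto.const_mul_atTop (norm_pos_iff.mpr hA0)
            (tendsto_pow_atTop_atTop_of_one_lt hgt)
        obtain ⟨i, hi⟩ := (hten.eventually_gt_atTop (M + ‖u‖)).exists
        exact absurd (hub i) (not_le.mpr hi)
      · exact hkill g' hg' u (g' 0 - u) hsol
    have hconst : ∀ i, app (R'.map (fun a => Polynomial.X - Polynomial.C a)).prod g i = u := by
      intro i
      rw [← hg'def]  -- may be defeq
      rw [hsol i, hA]
      ring
    exact ih (fun r' hr' => hR r' (Multiset.mem_cons_of_mem hr')) g hg u hconst




lemma part_le {n : ℕ} (P : Nat.Partition n) {j : ℕ} (hj : j ∈ P.parts) : j ≤ n := by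
  conv_rhs => rw [← P.parts_sum]
  exact Multiset.single_le_sum (fun x _ => Nat.zero_le x) j hj

lemma ctil_eq_T0 (b : ℕ → ℕ → ℝ) (n : ℕ) : ctilOf b n = TtilOf b 0 n := by
  unfold ctilOf TtilOf
  apply Finset.sum_congr rfl
  intro P _
  rw [if_pos (fun j hj => P.parts_pos hj)]

/-- Remove all parts equal to `a` from a partition. -/
def removePart (a : ℕ) {n : ℕ} (P : Nat.Partition n) :
    Nat.Partition (n - a * Multiset.count a P.parts) where
  parts := P.parts.filter (fun x => ¬ x = a)
  parts_pos := fun hj => P.parts_pos (Multiset.mem_of_mem_filter hj)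
  parts_sum := by
    have hsplit := Multiset.filter_add_not (fun x => x = a) P.parts
    have hsum : (P.parts.filter (fun x => x = a)).sum
        + (P.parts.filter (fun x => ¬ x = a)).sum = n := by
      rw [← Multiset.sum_add, hsplit, P.parts_sum]
    rw [Multiset.filter_eq', Multiset.sum_replicate, smul_eq_mul, mul_comm] at hsum
    omega

lemma count_mul_le {n : ℕ} (P : Nat.Partition n) (a : ℕ) :
    a * Multiset.count a P.parts ≤ n := by
  have hle : (P.parts.filter (fun x => x = a)) ≤ P.parts := Multiset.filter_le _ _
  obtain ⟨u, hu⟩ := Multiset.le_iff_exists_add.mp hle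
  have : (P.parts.filter (fun x => x = a)).sum + u.sum = n := by
    rw [← Multiset.sum_add, ← hu, P.parts_sum]
  rw [Multiset.filter_eq', Multiset.sum_replicate, smul_eq_mul, mul_comm] at this
  omega

/-- The trivial partition into parts of size 1. -/
def trivPart (n : ℕ) : Nat.Partition n where
  parts := Multiset.replicate n 1
  parts_pos := fun hj => by rw [Multiset.eq_of_mem_replicate hj]; omega
  parts_sum := by rw [Multiset.sum_replicate, smul_eq_mul, mul_one]

lemma partition_heq {a b : ℕ} (h : a = b) (P : Nat.Partition a) (Q : Nat.Partition b)
    (hp : P.parts = Q.parts) : HEq P Q := by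
  subst h
  exact heq_of_eq (Nat.Partition.ext hp)

lemma Ttil_rec (b : ℕ → ℕ → ℝ) (hb0 : ∀ j, b j 0 = 1) (l n : ℕ) :
    TtilOf b l n = ∑ k ∈ Finset.range (n / (l + 1) + 1),
      b (l + 1) k * TtilOf b (l + 1) (n - (l + 1) * k) := by
  classical
  have hL : TtilOf b l n
      = ∑ P ∈ Finset.univ.filter (fun P : Nat.Partition n => ∀ j ∈ P.parts, l < j),
          ∏ j ∈ Finset.Icc (l + 1) n, b j (Multiset.count j P.parts) :=
    (Finset.sum_filter _ _).symm
  have hRin : ∀ s : ℕ, TtilOf b (l + 1) s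
      = ∑ P ∈ Finset.univ.filter (fun P : Nat.Partition s => ∀ j ∈ P.parts, l + 1 < j),
          ∏ j ∈ Finset.Icc (l + 2) s, b j (Multiset.count j P.parts) :=
    fun s => (Finset.sum_filter _ _).symm
  have hstep : ∀ s : ℕ, ∀ c : ℝ, c * TtilOf b (l + 1) s
      = ∑ P ∈ Finset.univ.filter (fun P : Nat.Partition s => ∀ j ∈ P.parts, l + 1 < j),
          c * ∏ j ∈ Finset.Icc (l + 2) s, b j (Multiset.count j P.parts) := by
    intro s c; rw [hRin s, Finset.mul_sum]
  have hdiv : ∀ k : ℕ, k ∈ Finset.range (n / (l + 1) + 1) → (l + 1) * k ≤ n := by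
    intro k hk
    have h1 := Finset.mem_range.mp hk
    rw [Nat.lt_succ_iff, Nat.le_div_iff_mul_le (show 0 < l + 1 by omega),
      Nat.mul_comm] at h1
    exact h1
  have hR2 : (∑ k ∈ Finset.range (n / (l + 1) + 1),
        b (l + 1) k * TtilOf b (l + 1) (n - (l + 1) * k))
      = ∑ x ∈ (Finset.range (n / (l + 1) + 1)).sigma
          (fun k => Finset.univ.filter
            (fun P : Nat.Partition (n - (l + 1) * k) => ∀ j ∈ P.parts, l + 1 < j)),
          b (l + 1) x.1 * ∏ j ∈ Finset.Icc (l + 2) (n - (l + 1) * x.1),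
            b j (Multiset.count j x.2.parts) := by
    rw [Finset.sum_sigma]
    exact Finset.sum_congr rfl (fun k _ => hstep _ _)
  rw [hL, hR2]
  refine Finset.sum_nbij'
    (fun P => (⟨Multiset.count (l + 1) P.parts, removePart (l + 1) P⟩ :
      (k : ℕ) × Nat.Partition (n - (l + 1) * k)))
    (fun x => if h : (l + 1) * x.1 ≤ n then
        ⟨Multiset.replicate x.1 (l + 1) + x.2.parts,
         fun hj => by
           rcases Multiset.mem_add.mp hj with hj | hj
           · rw [Multiset.eq_of_mem_replicate hj]; omega
           · exact x.2.parts_pos hj,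
         by rw [Multiset.sum_add, Multiset.sum_replicate, smul_eq_mul, x.2.parts_sum, Nat.mul_comm x.1 (l + 1)]; omega⟩
      else trivPart n)
    ?_ ?_ ?_ ?_ ?_
  · -- maps into sigma set
    intro P hP
    have hP' := (Finset.mem_filter.mp hP).2
    rw [Finset.mem_sigma]
    constructor
    · rw [Finset.mem_range, Nat.lt_succ_iff, Nat.le_div_iff_mul_le (show 0 < l + 1 by omega),
        Nat.mul_comm]
      exact count_mul_le P (l + 1)
    · rw [Finset.mem_filter]
      refine ⟨Finset.mem_univ _, ?_⟩
      intro j hj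
      have h1 := Multiset.mem_filter.mp hj
      have h2 := hP' j h1.1
      have h3 := h1.2
      omega
  · -- reverse maps into filter set
    intro x hx
    rw [Finset.mem_sigma] at hx
    have hk : (l + 1) * x.1 ≤ n := hdiv _ hx.1
    rw [dif_pos hk, Finset.mem_filter]
    refine ⟨Finset.mem_univ _, ?_⟩
    intro j hj
    rcases Multiset.mem_add.mp hj with hj | hj
    · rw [Multiset.eq_of_mem_replicate hj]; omega
    · have := ((Finset.mem_filter.mp hx.2).2) j hj
      omega
  · -- left inverse
    intro P hP
    have hk : (l + 1) * Multiset.count (l + 1) P.parts ≤ n := count_mul_le P (l + 1)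
    dsimp only
    rw [dif_pos hk]
    apply Nat.Partition.ext
    show Multiset.replicate (Multiset.count (l + 1) P.parts) (l + 1)
        + P.parts.filter (fun x => ¬ x = l + 1) = P.parts
    rw [← Multiset.filter_eq']
    exact Multiset.filter_add_not _ _
  · -- right inverse
    intro x hx
    rw [Finset.mem_sigma] at hx
    have hk : (l + 1) * x.1 ≤ n := hdiv _ hx.1
    have hnotmem : (l + 1) ∉ x.2.parts := by
      intro hmem
      have := ((Finset.mem_filter.mp hx.2).2) (l + 1) hmem
      omega
    rw [dif_pos hk]
    have hcnt : Multiset.count (l + 1)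
        (Multiset.replicate x.1 (l + 1) + x.2.parts) = x.1 := by
      rw [Multiset.count_add, Multiset.count_replicate, if_pos rfl,
        Multiset.count_eq_zero.mpr hnotmem, add_zero]
    refine Sigma.ext hcnt ?_
    show HEq (removePart (l + 1) _) x.2
    apply partition_heq
    · rw [hcnt]
    · show (Multiset.replicate x.1 (l + 1) + x.2.parts).filter (fun y => ¬ y = l + 1)
        = x.2.parts
      rw [Multiset.filter_add]
      rw [Multiset.filter_eq_nil.mpr (fun a ha => by
        rw [Multiset.eq_of_mem_replicate ha]; simp), zero_add]
      exact Multiset.filter_eq_self.mpr (fun a ha => by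
        intro h; exact hnotmem (h ▸ ha))
  · -- weights agree
    intro P hP
    have hP' := (Finset.mem_filter.mp hP).2
    set k := Multiset.count (l + 1) P.parts with hkdef
    show (∏ j ∈ Finset.Icc (l + 1) n, b j (Multiset.count j P.parts))
      = b (l + 1) k * ∏ j ∈ Finset.Icc (l + 2) (n - (l + 1) * k),
          b j (Multiset.count j ((removePart (l + 1) P).parts))
    by_cases hn : l + 1 ≤ n
    · have hmem : l + 1 ∈ Finset.Icc (l + 1) n := Finset.mem_Icc.mpr ⟨le_refl _, hn⟩
      rw [← Finset.mul_prod_erase _ _ hmem, Finset.Icc_erase_left, ← Finset.Icc_add_one_left_eq_Ioc]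
      congr 1
      have hsub : Finset.Icc (l + 2) (n - (l + 1) * k) ⊆ Finset.Icc (l + 1 + 1) n :=
        Finset.Icc_subset_Icc_right (by omega)
      rw [← Finset.prod_subset hsub ?_]
      · apply Finset.prod_congr rfl
        intro j hj
        have hj2 := Finset.mem_Icc.mp hj
        congr 1
        show Multiset.count j P.parts
          = Multiset.count j (P.parts.filter (fun x => ¬ x = l + 1))
        rw [Multiset.count_filter, if_pos (by omega)]
      · intro j hjt hjs
        have hj2 := Finset.mem_Icc.mp hjt
        have hcnt0 : Multiset.count j P.parts = 0 := by
          rw [Multiset.count_eq_zero]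
          intro hmemj
          have hjfil : j ∈ (removePart (l + 1) P).parts := by
            show j ∈ P.parts.filter (fun x => ¬ x = l + 1)
            rw [Multiset.mem_filter]
            exact ⟨hmemj, by omega⟩
          have hle := part_le (removePart (l + 1) P) hjfil
          rw [← hkdef] at hle
          apply hjs
          rw [Finset.mem_Icc]
          omega
        rw [hcnt0, hb0]
    · have hk0 : k = 0 := by
        rw [hkdef, Multiset.count_eq_zero]
        intro hmem
        have := part_le P hmem
        omega
      rw [hk0, hb0, one_mul, mul_zero, Nat.sub_zero]
      rw [Finset.Icc_eq_empty (by omega), Finset.Icc_eq_empty (by omega)]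
      simp


lemma selWt_zero (m : ℕ → ℕ) (p : ℝ) (j : ℕ) : selWt m p j 0 = 1 := by
  unfold selWt
  rw [if_pos (Nat.zero_le _)]
  simp

lemma selWt_nonneg (m : ℕ → ℕ) {p : ℝ} (hp : 0 ≤ p) (j k : ℕ) : 0 ≤ selWt m p j k := by
  unfold selWt
  split
  · positivity
  · exact le_refl _

lemma selWt_big (m : ℕ → ℕ) (p : ℝ) {j k : ℕ} (h : m j < k) : selWt m p j k = 0 := by
  unfold selWt
  rw [if_neg (by omega)]

lemma Ttil_nonneg (b : ℕ → ℕ → ℝ) (hb : ∀ j k, 0 ≤ b j k) (l n : ℕ) :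
    0 ≤ TtilOf b l n := by
  unfold TtilOf
  apply Finset.sum_nonneg
  intro P _
  split
  · exact Finset.prod_nonneg (fun j _ => hb _ _)
  · exact le_refl _

lemma Ttil_mono (b : ℕ → ℕ → ℝ) (hb : ∀ j k, 0 ≤ b j k) (hb0 : ∀ j, b j 0 = 1) (l n : ℕ) :
    TtilOf b (l + 1) n ≤ TtilOf b l n := by
  have h := Ttil_rec b hb0 l n
  have h0 : b (l + 1) 0 * TtilOf b (l + 1) (n - (l + 1) * 0) = TtilOf b (l + 1) n := by
    rw [hb0, one_mul, Nat.mul_zero, Nat.sub_zero]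
  rw [h, ← h0]
  apply Finset.single_le_sum (f := fun k => b (l + 1) k * TtilOf b (l + 1) (n - (l + 1) * k))
  · intro k _
    exact mul_nonneg (hb _ _) (Ttil_nonneg b hb _ _)
  · exact Finset.mem_range.mpr (Nat.succ_pos _)

lemma Ttil_le_ctil (b : ℕ → ℕ → ℝ) (hb : ∀ j k, 0 ≤ b j k) (hb0 : ∀ j, b j 0 = 1) (l n : ℕ) :
    TtilOf b l n ≤ ctilOf b n := by
  rw [ctil_eq_T0]
  induction l with
  | zero => exact le_refl _
  | succ l ih => exact (Ttil_mono b hb hb0 l n).trans ih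

lemma prod_Icc_one_eq_range (f : ℕ → ℝ) (l : ℕ) :
    ∏ j ∈ Finset.Icc 1 l, f j = ∏ i ∈ Finset.range l, f (i + 1) := by
  induction l with
  | zero => rw [Finset.Icc_eq_empty (by omega), Finset.prod_empty, Finset.range_zero,
      Finset.prod_empty]
  | succ l ih => rw [Finset.prod_Icc_succ_top (by omega), ih, Finset.prod_range_succ]

section Main

variable (m : ℕ → ℕ) (hm : ∀ j, 1 ≤ m j) (p : ℝ) (hp0 : 0 < p)
  (hcpos : ∀ n, 0 < ctilOf (selWt m p) n)
  (ρ : ℝ) (hρ0 : 0 ≤ ρ) (hρ1 : ρ ≤ p⁻¹)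
  (hRT : RT (ctilOf (selWt m p)) ρ)

include hm hp0 hcpos hρ0 hρ1 hRT

lemma ratio_tendsto : ∀ i : ℕ,
    Tendsto (fun n => ctilOf (selWt m p) (n - i) / ctilOf (selWt m p) n) atTop (nhds (ρ ^ i)) := by
  intro i
  induction i with
  | zero =>
    apply Tendsto.congr (f₁ := fun _ => (1:ℝ))
    · intro n
      rw [Nat.sub_zero, div_self (hcpos n).ne']
    · rw [pow_zero]
      exact tendsto_const_nhds
  | succ i ih =>
    have h1 : Tendsto (fun n => ctilOf (selWt m p) (n - 1 - i) / ctilOf (selWt m p) (n - 1))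
        atTop (nhds (ρ ^ i)) := ih.comp (tendsto_sub_atTop_nat 1)
    have h2 : Tendsto (fun n => ctilOf (selWt m p) (n - 1) / ctilOf (selWt m p) n)
        atTop (nhds ρ) := by
      have h3 := hRT.comp (tendsto_sub_atTop_nat 1)
      apply Tendsto.congr' _ h3
      filter_upwards [eventually_ge_atTop 1] with n hn
      have : n - 1 + 1 = n := by omega
      simp only [Function.comp_apply, this]
    have h4 := h1.mul h2
    rw [← pow_succ] at h4
    apply Tendsto.congr' _ h4
    filter_upwards [eventually_ge_atTop 1] with n hn
    rw [div_mul_div_cancel₀ (hcpos (n - 1)).ne']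
    congr 2
    omega

lemma ratio_shift (i j : ℕ) :
    Tendsto (fun n => ctilOf (selWt m p) (n - (i + j)) / ctilOf (selWt m p) (n - i))
      atTop (nhds (ρ ^ j)) := by
  have h := (ratio_tendsto m hm p hp0 hcpos ρ hρ0 hρ1 hRT j).comp (tendsto_sub_atTop_nat i)
  apply h.congr
  intro n
  simp only [Function.comp_apply, Nat.sub_sub]

lemma main_T (l : ℕ) :
    Tendsto (fun n => TtilOf (selWt m p) l n / ctilOf (selWt m p) n) atTop
      (nhds (∏ j ∈ Finset.Icc 1 l, ((1 + (p * ρ) ^ j) ^ (m j))⁻¹)) := by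
  classical
  obtain ⟨V, hV⟩ := Filter.exists_ultrafilter_le (atTop : Filter ℕ)
  set b := selWt m p with hbdef
  set c := ctilOf b with hcdef
  set T : ℕ → ℕ → ℝ := fun l' n => TtilOf b l' n with hTdef
  have hbnn : ∀ j k, 0 ≤ b j k := selWt_nonneg m hp0.le
  have hb0 : ∀ j, b j 0 = 1 := selWt_zero m p
  have hpρ0 : 0 ≤ p * ρ := mul_nonneg hp0.le hρ0
  have hpρ1 : p * ρ ≤ 1 := by
    have := mul_le_mul_of_nonneg_left hρ1 hp0.le
    rwa [mul_inv_cancel₀ hp0.ne'] at this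
  have hmem01 : ∀ l' i n, T l' (n - i) / c (n - i) ∈ Set.Icc (0:ℝ) 1 := by
    intro l' i n
    constructor
    · exact div_nonneg (Ttil_nonneg b hbnn _ _) (hcpos _).le
    · rw [div_le_one (hcpos _)]
      exact Ttil_le_ctil b hbnn hb0 _ _
  rw [tendsto_iff_ultrafilter]
  intro U hU
  -- choose the limits w
  have hex : ∀ l' i : ℕ, ∃ z : ℝ, z ∈ Set.Icc (0:ℝ) 1 ∧
      Tendsto (fun n => T l' (n - i) / c (n - i)) (U : Filter ℕ) (nhds z) := by
    intro l' i
    have hle : ↑(U.map (fun n => T l' (n - i) / c (n - i))) ≤ 𝓟 (Set.Icc (0:ℝ) 1) := by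
      rw [Ultrafilter.coe_map, Filter.le_principal_iff, Filter.mem_map]
      exact Filter.univ_mem' (fun n => hmem01 l' i n)
    obtain ⟨z, hz1, hz2⟩ := (isCompact_Icc (a := (0:ℝ)) (b := 1)).ultrafilter_le_nhds _ hle
    exact ⟨z, hz1, by rwa [Ultrafilter.coe_map] at hz2⟩
  choose w hwmem hwten using hex
  have hw0 : ∀ i, w 0 i = 1 := by
    intro i
    refine tendsto_nhds_unique (hwten 0 i) ?_
    apply Tendsto.congr (f₁ := fun _ => (1:ℝ))
    · intro n
      show (1:ℝ) = T 0 (n - i) / c (n - i)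
      rw [hTdef]
      show (1:ℝ) = TtilOf b 0 (n - i) / c (n - i)
      rw [← ctil_eq_T0, div_self (hcpos _).ne']
    · exact tendsto_const_nhds
  -- the one-step relation
  have hrel : ∀ l' i, w l' i = ∑ k ∈ Finset.range (m (l' + 1) + 1),
      (Nat.choose (m (l' + 1)) k : ℝ) * (p * ρ) ^ ((l' + 1) * k) * w (l' + 1) (i + (l' + 1) * k) := by
    intro l' i
    refine tendsto_nhds_unique (hwten l' i) ?_
    have hterm : ∀ k ∈ Finset.range (m (l' + 1) + 1),
        Tendsto (fun n => b (l' + 1) k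
            * (T (l' + 1) (n - (i + (l' + 1) * k)) / c (n - (i + (l' + 1) * k)))
            * (c (n - (i + (l' + 1) * k)) / c (n - i))) (U : Filter ℕ)
          (nhds (b (l' + 1) k * w (l' + 1) (i + (l' + 1) * k) * ρ ^ ((l' + 1) * k))) := by
      intro k _
      exact (tendsto_const_nhds.mul (hwten (l' + 1) (i + (l' + 1) * k))).mul
        ((ratio_shift m hm p hp0 hcpos ρ hρ0 hρ1 hRT i ((l' + 1) * k)).mono_left hU)
    have hsum := tendsto_finset_sum _ hterm
    have hval : (∑ k ∈ Finset.range (m (l' + 1) + 1),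
        b (l' + 1) k * w (l' + 1) (i + (l' + 1) * k) * ρ ^ ((l' + 1) * k))
        = ∑ k ∈ Finset.range (m (l' + 1) + 1),
          (Nat.choose (m (l' + 1)) k : ℝ) * (p * ρ) ^ ((l' + 1) * k)
            * w (l' + 1) (i + (l' + 1) * k) := by
      apply Finset.sum_congr rfl
      intro k hk
      have hkm : k ≤ m (l' + 1) := by
        have := Finset.mem_range.mp hk; omega
      rw [hbdef]
      show selWt m p (l' + 1) k * _ * _ = _
      rw [selWt, if_pos hkm, mul_pow]
      ring
    rw [hval] at hsum
    apply Tendsto.congr' _ hsum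
    -- eventual equality
    have hev : ∀ᶠ n in atTop, (∑ k ∈ Finset.range (m (l' + 1) + 1),
        b (l' + 1) k * (T (l' + 1) (n - (i + (l' + 1) * k)) / c (n - (i + (l' + 1) * k)))
          * (c (n - (i + (l' + 1) * k)) / c (n - i)))
        = T l' (n - i) / c (n - i) := by
      filter_upwards [eventually_ge_atTop (i + (l' + 1) * (m (l' + 1)))] with n hn
      have hdivle : m (l' + 1) ≤ (n - i) / (l' + 1) := by
        rw [Nat.le_div_iff_mul_le (show 0 < l' + 1 by omega), Nat.mul_comm]
        omega
      have hrec := Ttil_rec b hb0 l' (n - i)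
      have hres : TtilOf b l' (n - i) = ∑ k ∈ Finset.range (m (l' + 1) + 1),
          b (l' + 1) k * TtilOf b (l' + 1) (n - i - (l' + 1) * k) := by
        rw [hrec]
        refine (Finset.sum_subset (Finset.range_subset_range.mpr (by omega)) ?_).symm
        intro k _ hk
        have : m (l' + 1) < k := by
          rw [Finset.mem_range, not_lt] at hk
          omega
        rw [hbdef]
        show selWt m p (l' + 1) k * _ = 0
        rw [selWt_big m p this, zero_mul]
      show _ = T l' (n - i) / c (n - i)
      rw [hTdef]
      show _ = TtilOf b l' (n - i) / c (n - i)
      rw [hres, Finset.sum_div]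
      apply Finset.sum_congr rfl
      intro k _
      rw [mul_assoc, div_mul_div_cancel₀ (hcpos (n - (i + (l' + 1) * k))).ne']
      rw [Nat.sub_sub]
      ring
    exact hU hev
  -- complexification
  set wc : ℕ → ℕ → ℂ := fun l' i => ((w l' i : ℝ) : ℂ) with hwcdef
  have hwcbdd : ∀ l', Bdd (wc l') := by
    intro l'
    refine ⟨1, fun i => ?_⟩
    rw [hwcdef]
    show ‖((w l' i : ℝ) : ℂ)‖ ≤ 1
    rw [Complex.norm_real]
    rw [Real.norm_eq_abs, abs_le]
    have := hwmem l' i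
    constructor <;> [linarith [this.1]; exact this.2]
  set sρ : ℕ → ℝ := fun j => (p * ρ) ^ j with hsdef
  set PP : ℕ → Polynomial ℂ := fun j =>
    ((1 : Polynomial ℂ) + Polynomial.C ((sρ j : ℝ) : ℂ) * Polynomial.X ^ j) ^ (m j) with hPPdef
  have hrelC : ∀ l', wc l' = app (PP (l' + 1)) (wc (l' + 1)) := by
    intro l'
    funext i
    rw [hPPdef]
    show wc l' i = app (((1 : Polynomial ℂ)
      + Polynomial.C ((sρ (l' + 1) : ℝ) : ℂ) * Polynomial.X ^ (l' + 1)) ^ (m (l' + 1))) _ i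
    rw [app_binom]
    show ((w l' i : ℝ) : ℂ) = _
    rw [hrel l' i]
    push_cast
    apply Finset.sum_congr rfl
    intro k _
    rw [hsdef]
    show _ = (Nat.choose (m (l' + 1)) k : ℂ) * (((((p * ρ) ^ (l' + 1) : ℝ)) : ℂ)) ^ k
      * ((w (l' + 1) (i + (l' + 1) * k) : ℝ) : ℂ)
    push_cast
    rw [← pow_mul]
  set BB : ℕ → ℕ → Polynomial ℂ := fun l' L => ∏ j ∈ Finset.Icc (l' + 1) L, PP j with hBBdef
  have hrep : ∀ l' L, l' ≤ L → wc l' = fun i => app (BB l' L) (wc L) i := by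
    intro l' L
    induction L with
    | zero =>
      intro h
      have h0 : l' = 0 := Nat.le_zero.mp h
      subst h0
      have hBB1 : BB 0 0 = 1 := by
        rw [hBBdef]
        show ∏ j ∈ Finset.Icc 1 0, PP j = 1
        rw [Finset.Icc_eq_empty (by omega), Finset.prod_empty]
      rw [hBB1]
      funext i
      rw [app_one]
    | succ L ihL =>
      intro h
      rcases Nat.lt_or_ge l' (L + 1) with hlt | hge
      · have hle : l' ≤ L := by omega
        have hprod : BB l' (L + 1) = BB l' L * PP (L + 1) := by
          rw [hBBdef]
          exact Finset.prod_Icc_succ_top (by omega) _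
        funext i
        rw [hprod, app_mul]
        have hfun : (app (PP (L + 1)) (wc (L + 1))) = wc L := by
          funext i'
          rw [hrelC L]
        rw [hfun]
        have := ihL hle
        rw [this]
      · have h0 : l' = L + 1 := by omega
        subst h0
        have hBB1 : BB (L + 1) (L + 1) = 1 := by
          rw [hBBdef]
          show ∏ j ∈ Finset.Icc (L + 2) (L + 1), PP j = 1
          rw [Finset.Icc_eq_empty (by omega), Finset.prod_empty]
        rw [hBB1]
        funext i
        rw [app_one]
  set A : Polynomial ℂ := BB 0 l with hAdef
  have hA1 : ∀ i, app A (wc l) i = 1 := by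
    intro i
    rw [hAdef, ← congrFun (hrep 0 l (Nat.zero_le l)) i]
    show ((w 0 i : ℝ) : ℂ) = 1
    rw [hw0 i]
    norm_num
  -- roots of A
  have hAfact : ∀ r : ℂ, A.eval r = 0 → ∃ j, 1 ≤ j ∧ j ≤ l ∧ 1 + ((sρ j : ℝ) : ℂ) * r ^ j = 0 := by
    intro r hr
    rw [hAdef, hBBdef] at hr
    have : ∏ j ∈ Finset.Icc (0 + 1) l, (PP j).eval r = 0 := by
      rw [← Polynomial.eval_prod]; exact hr
    obtain ⟨j, hjmem, hj0⟩ := Finset.prod_eq_zero_iff.mp this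
    have hjIcc := Finset.mem_Icc.mp hjmem
    refine ⟨j, by omega, by omega, ?_⟩
    rw [hPPdef] at hj0
    have hj0' : ((1 + Polynomial.C ((sρ j : ℝ) : ℂ) * Polynomial.X ^ j).eval r) ^ (m j) = 0 := by
      rw [← Polynomial.eval_pow]; exact hj0
    have := pow_eq_zero_iff (by have := hm j; omega : m j ≠ 0) |>.mp hj0'
    simpa using this
  have hAne : A ≠ 0 := by
    intro h
    have h0 := hA1 0
    rw [h] at h0
    rw [app_zero] at h0
    norm_num at h0
  have hroots : ∀ r ∈ A.roots, r ≠ 1 ∧ 1 ≤ ‖r‖ ∧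
      (‖r‖ = 1 → ∃ j', l < j' ∧ ((sρ j' : ℝ) : ℂ) = 1 ∧ r ^ j' = -1) := by
    intro r hr
    have hev : A.eval r = 0 := (Polynomial.mem_roots'.mp hr).2
    obtain ⟨j, hj1, hjl, heq⟩ := hAfact r hev
    have hsjnn : 0 ≤ sρ j := by rw [hsdef]; positivity
    have hsjne : sρ j ≠ 0 := by
      intro h0
      rw [h0] at heq
      norm_num at heq
    have hsj1 : sρ j ≤ 1 := by
      rw [hsdef]
      exact pow_le_one₀ hpρ0 hpρ1
    have hnorm : sρ j * ‖r‖ ^ j = 1 := by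
      have h2 : ((sρ j : ℝ) : ℂ) * r ^ j = -1 := by linear_combination heq
      have h3 := congrArg norm h2
      rw [norm_mul, Complex.norm_real, Real.norm_eq_abs, abs_of_nonneg hsjnn,
        norm_pow, norm_neg, norm_one] at h3
      exact h3
    have hspos : 0 < sρ j := lt_of_le_of_ne hsjnn (Ne.symm hsjne)
    have hrnorm : 1 ≤ ‖r‖ := by
      have h4 : 1 ≤ ‖r‖ ^ j := by nlinarith [hspos, hsj1, hnorm]
      exact (one_le_pow_iff_of_nonneg (norm_nonneg r) (by omega)).mp h4
    refine ⟨?_, hrnorm, ?_⟩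
    · intro h1
      rw [h1, one_pow, mul_one] at heq
      have : (1 + sρ j : ℝ) = 0 := by exact_mod_cast heq
      have : 0 < sρ j := lt_of_le_of_ne hsjnn (Ne.symm hsjne)
      linarith
    · intro hre1
      have hsj : sρ j = 1 := by
        rw [hre1, one_pow, mul_one] at hnorm
        exact hnorm
      have hpρeq : p * ρ = 1 := by
        by_contra hne
        have hlt : p * ρ < 1 := lt_of_le_of_ne hpρ1 hne
        have : sρ j < 1 := by
          rw [hsdef]
          exact pow_lt_one₀ hpρ0 hlt (by omega)
        linarith
      have hrj : r ^ j = -1 := by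
        rw [hsj] at heq
        push_cast at heq
        linear_combination heq
      refine ⟨j * (2 * l + 1), ?_, ?_, ?_⟩
      · have : 2 * l + 1 ≤ j * (2 * l + 1) := Nat.le_mul_of_pos_left _ (by omega)
        omega
      · rw [hsdef]
        show (((p * ρ) ^ (j * (2 * l + 1)) : ℝ) : ℂ) = 1
        rw [hpρeq, one_pow]
        norm_num
      · rw [pow_mul, hrj]
        exact Odd.neg_one_pow ⟨l, by ring⟩
  -- representability predicate
  set Rep : (ℕ → ℂ) → Prop := fun g => Bdd g ∧ ∀ L, l ≤ L → ∃ Q, g = fun i => app (Q * BB l L) (wc L) i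
    with hRepdef
  have rep_bdd : ∀ g, Rep g → Bdd g := fun g hg => hg.1
  have rep_app : ∀ q g, Rep g → Rep (app q g) := by
    intro q g hg
    refine ⟨hg.1.app q, ?_⟩
    intro L hL
    obtain ⟨Q, hQ⟩ := hg.2 L hL
    refine ⟨q * Q, ?_⟩
    funext i
    rw [hQ]
    show app q (fun i' => app (Q * BB l L) (wc L) i') i = app (q * Q * BB l L) (wc L) i
    rw [mul_assoc, app_mul]
  have rep_base : Rep (wc l) := by
    refine ⟨hwcbdd l, ?_⟩
    intro L hL
    refine ⟨1, ?_⟩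
    rw [one_mul]
    exact hrep l L hL
  -- peel
  have hRfacts : ∀ r ∈ A.roots, r ≠ 1 ∧ (1 < ‖r‖ ∨
      (∀ g, Rep g → ∀ u A₀ : ℂ, (∀ i, g i = u + A₀ * r ^ i) → A₀ = 0)) := by
    intro r hr
    obtain ⟨hr1, hrge, hbound⟩ := hroots r hr
    refine ⟨hr1, ?_⟩
    rcases lt_or_eq_of_le hrge with hgt | heq1
    · exact Or.inl hgt
    · right
      obtain ⟨j', hj'l, hsj', hrj'⟩ := hbound heq1.symm
      intro g hg u A₀ hgi
      obtain ⟨Q, hQ⟩ := hg.2 j' (le_of_lt hj'l)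
      have hBj' : (BB l j').eval r = 0 := by
        rw [hBBdef]
        show Polynomial.eval r (∏ j ∈ Finset.Icc (l + 1) j', PP j) = 0
        rw [Polynomial.eval_prod]
        apply Finset.prod_eq_zero (Finset.mem_Icc.mpr ⟨by omega, le_refl j'⟩)
        rw [hPPdef]
        show Polynomial.eval r (((1 : Polynomial ℂ)
          + Polynomial.C ((sρ j' : ℝ) : ℂ) * Polynomial.X ^ j') ^ (m j')) = 0
        rw [Polynomial.eval_pow]
        have : Polynomial.eval r ((1 : Polynomial ℂ)
            + Polynomial.C ((sρ j' : ℝ) : ℂ) * Polynomial.X ^ j') = 0 := by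
          simp only [Polynomial.eval_add, Polynomial.eval_one, Polynomial.eval_mul,
            Polynomial.eval_C, Polynomial.eval_pow, Polynomial.eval_X]
          rw [hsj', hrj']
          ring
        rw [this]
        exact zero_pow (by have := hm j'; omega)
      have hr0 : r ≠ 0 := by
        intro h0
        rw [h0, norm_zero] at heq1
        norm_num at heq1
      have hzn : ‖r⁻¹‖ = 1 := by rw [norm_inv, ← heq1]; norm_num
      have hEz : (Q * BB l j').eval r = 0 := by
        rw [Polynomial.eval_mul, hBj', mul_zero]
      -- compute BL of the character two ways
      have hgapp : g = app (Q * BB l j') (wc j') := by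
        funext i
        rw [hQ]
      have hBL1 : BL V (fun i => (r⁻¹) ^ i * g i) = 0 := by
        rw [hgapp]
        rw [BL_char_app V hV hzn (Q * BB l j') (hwcbdd j')]
        rw [inv_inv, hEz, zero_mul]
      have hgbdd : Bdd g := hg.1
      have hBL2 : BL V (fun i => (r⁻¹) ^ i * g i) = A₀ := by
        have hexp : (fun i => (r⁻¹) ^ i * g i)
            = fun i => u * (r⁻¹) ^ i + A₀ * (1:ℂ) := by
          funext i
          rw [hgi i]
          have : (r⁻¹) ^ i * r ^ i = 1 := by
            rw [← mul_pow, inv_mul_cancel₀ hr0, one_pow]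
          linear_combination A₀ * this
        rw [hexp]
        have hb1 : Bdd (fun i => u * (r⁻¹) ^ i) := by
          refine ⟨‖u‖, fun i => ?_⟩
          rw [norm_mul, norm_pow, hzn, one_pow, mul_one]
        have hb2 : Bdd (fun i => A₀ * (1:ℂ)) := ⟨‖A₀‖, fun i => by simp⟩
        rw [BL_add V hb1 hb2]
        have hg1 : BL V (fun i => u * (r⁻¹) ^ i) = 0 := by
          rw [BL_smul V u ⟨1, fun i => by rw [norm_pow, hzn, one_pow]⟩]
          rw [BL_geom V hV hzn (by simp only [ne_eq, inv_eq_one]; exact hr1), mul_zero]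
        rw [hg1, zero_add]
        have := BL_const V hV (A₀ * 1)
        rw [mul_one] at this ⊢
        exact this
      rw [hBL1] at hBL2
      exact hBL2.symm
  -- factor A and apply peel
  have hsplit : A = Polynomial.C A.leadingCoeff
      * (A.roots.map (fun a => Polynomial.X - Polynomial.C a)).prod :=
    Polynomial.Splits.eq_prod_roots (IsAlgClosed.splits A)
  have hlcne : A.leadingCoeff ≠ 0 := Polynomial.leadingCoeff_ne_zero.mpr hAne
  have happrod : ∀ i, app ((A.roots.map (fun a => Polynomial.X - Polynomial.C a)).prod)
      (wc l) i = (A.leadingCoeff)⁻¹ := by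
    intro i
    have h := hA1 i
    rw [hsplit, app_mul, app_C] at h
    field_simp at h ⊢
    linear_combination h
  obtain ⟨e, he⟩ := peel Rep rep_bdd rep_app A.roots hRfacts (wc l) rep_base
    (A.leadingCoeff)⁻¹ happrod
  -- identify e
  have hwcl : wc l = fun _ => e := funext he
  have heval : A.eval 1 * e = 1 := by
    have h := hA1 0
    rw [hwcl, app_const] at h
    exact h
  have hAeval1 : A.eval 1 = ((∏ j ∈ Finset.Icc 1 l, (1 + (p * ρ) ^ j) ^ (m j) : ℝ) : ℂ) := by
    rw [hAdef, hBBdef]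
    show Polynomial.eval 1 (∏ j ∈ Finset.Icc (0 + 1) l, PP j) = _
    rw [Polynomial.eval_prod]
    push_cast
    apply Finset.prod_congr rfl
    intro j _
    rw [hPPdef]
    show Polynomial.eval 1 (((1 : Polynomial ℂ)
      + Polynomial.C ((sρ j : ℝ) : ℂ) * Polynomial.X ^ j) ^ (m j)) = _
    rw [Polynomial.eval_pow]
    simp only [Polynomial.eval_add, Polynomial.eval_one, Polynomial.eval_mul,
      Polynomial.eval_C, Polynomial.eval_pow, Polynomial.eval_X, one_pow, mul_one]
    rw [hsdef]
    push_cast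
    ring
  have hprodne : ((∏ j ∈ Finset.Icc 1 l, (1 + (p * ρ) ^ j) ^ (m j) : ℝ)) ≠ 0 := by
    apply ne_of_gt
    apply Finset.prod_pos
    intro j _
    positivity
  have hefin : e = ((∏ j ∈ Finset.Icc 1 l, ((1 + (p * ρ) ^ j) ^ (m j))⁻¹ : ℝ) : ℂ) := by
    have h1 : e = (((∏ j ∈ Finset.Icc 1 l, (1 + (p * ρ) ^ j) ^ (m j) : ℝ)) : ℂ)⁻¹ := by
      rw [hAeval1] at heval
      exact eq_inv_of_mul_eq_one_right heval
    rw [h1, Finset.prod_inv_distrib]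
    norm_cast
  have hwl0 : w l 0 = ∏ j ∈ Finset.Icc 1 l, ((1 + (p * ρ) ^ j) ^ (m j))⁻¹ := by
    have h := congrFun hwcl 0
    rw [hefin] at h
    have h' : ((w l 0 : ℝ) : ℂ)
        = ((∏ j ∈ Finset.Icc 1 l, ((1 + (p * ρ) ^ j) ^ (m j))⁻¹ : ℝ) : ℂ) := h
    exact_mod_cast h'
  have hfinal := hwten l 0
  rw [hwl0] at hfinal
  apply hfinal.congr
  intro n
  rw [Nat.sub_zero]

end Main

end Sel18

/-- **Selections.** If `ã_k^{(j)} = C(m_j,k) p^{jk}` (for `k ≤ m_j`) with `m_j ≥ 1`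
integers, `p > 0`, and `(c̃_n) ∈ RT_ρ` for some `0 ≤ ρ ≤ p⁻¹`, then for every `l ≥ 1`,
`T̃^{(l)}_n/c̃_n → ∏_{j=1}^l (1+(pρ)^j)^{−m_j} ∈ (0,∞)`, and for every tuple
`(k_1,…,k_l)` with `0 ≤ k_j ≤ m_j`,
`lim P_n(k_1,…,k_l) = ∏_{j=1}^l C(m_j,k_j)(pρ)^{j k_j}(1+(pρ)^j)^{−m_j}`:
the selection is convergent with independent binomial limit laws. -/
theorem stmt18 (m : ℕ → ℕ) (hm : ∀ j, 1 ≤ m j)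
    (p : ℝ) (hp0 : 0 < p)
    (hcpos : ∀ n, 0 < ctilOf (selWt m p) n)
    (ρ : ℝ) (hρ0 : 0 ≤ ρ) (hρ1 : ρ ≤ p⁻¹)
    (hRT : RT (ctilOf (selWt m p)) ρ) :
    ∀ l, 1 ≤ l →
      (0 < ∏ j ∈ Finset.Icc 1 l, ((1 + (p * ρ) ^ j) ^ (m j))⁻¹ ∧
        Tendsto (fun n => TtilOf (selWt m p) l n / ctilOf (selWt m p) n) atTop
          (nhds (∏ j ∈ Finset.Icc 1 l, ((1 + (p * ρ) ^ j) ^ (m j))⁻¹))) ∧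
      ∀ k : Fin l → ℕ, (∀ i : Fin l, k i ≤ m ((i : ℕ) + 1)) →
        Tendsto (fun n => PformOf (selWt m p) l k n) atTop
          (nhds (∏ i : Fin l,
            (Nat.choose (m ((i : ℕ) + 1)) (k i) : ℝ)
              * (p * ρ) ^ (((i : ℕ) + 1) * k i)
              * ((1 + (p * ρ) ^ ((i : ℕ) + 1)) ^ (m ((i : ℕ) + 1)))⁻¹)) := by
  intro l _hl
  have hpρ0 : 0 ≤ p * ρ := mul_nonneg hp0.le hρ0
  have hΛpos : 0 < ∏ j ∈ Finset.Icc 1 l, ((1 + (p * ρ) ^ j) ^ (m j))⁻¹ := by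
    apply Finset.prod_pos
    intro j _
    have h1 : 0 ≤ (p * ρ) ^ j := pow_nonneg hpρ0 j
    have h2 : 0 < 1 + (p * ρ) ^ j := by linarith
    exact inv_pos.mpr (pow_pos h2 _)
  refine ⟨⟨hΛpos, Sel18.main_T m hm p hp0 hcpos ρ hρ0 hρ1 hRT l⟩, ?_⟩
  intro k hk
  set M := ∑ i : Fin l, ((i : ℕ) + 1) * k i with hMdef
  have h1 := (Sel18.main_T m hm p hp0 hcpos ρ hρ0 hρ1 hRT l).comp (tendsto_sub_atTop_nat M)
  have h2 : Tendsto (fun n => ctilOf (selWt m p) (n - M) / ctilOf (selWt m p) n) atTop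
      (nhds (ρ ^ M)) := by
    apply (Sel18.ratio_shift m hm p hp0 hcpos ρ hρ0 hρ1 hRT 0 M).congr
    intro n
    rw [Nat.zero_add, Nat.sub_zero]
  have hTM : Tendsto (fun n => TtilOf (selWt m p) l (n - M) / ctilOf (selWt m p) n) atTop
      (nhds ((∏ j ∈ Finset.Icc 1 l, ((1 + (p * ρ) ^ j) ^ (m j))⁻¹) * ρ ^ M)) := by
    apply (h1.mul h2).congr
    intro n
    simp only [Function.comp_apply]
    rw [div_mul_div_cancel₀ (hcpos (n - M)).ne']
  have hval : (∏ i : Fin l, selWt m p ((i : ℕ) + 1) (k i))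
      * ((∏ j ∈ Finset.Icc 1 l, ((1 + (p * ρ) ^ j) ^ (m j))⁻¹) * ρ ^ M)
      = ∏ i : Fin l, ((Nat.choose (m ((i : ℕ) + 1)) (k i) : ℝ)
          * (p * ρ) ^ (((i : ℕ) + 1) * k i)
          * ((1 + (p * ρ) ^ ((i : ℕ) + 1)) ^ (m ((i : ℕ) + 1)))⁻¹) := by
    have e1 : (∏ i : Fin l, selWt m p ((i : ℕ) + 1) (k i))
        = ∏ i : Fin l, ((Nat.choose (m ((i : ℕ) + 1)) (k i) : ℝ)
            * p ^ (((i : ℕ) + 1) * k i)) := by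
      apply Finset.prod_congr rfl
      intro i _
      rw [selWt, if_pos (hk i)]
    have e2 : (ρ : ℝ) ^ M = ∏ i : Fin l, ρ ^ (((i : ℕ) + 1) * k i) := by
      rw [hMdef, ← Finset.prod_pow_eq_pow_sum]
    have e3 : (∏ j ∈ Finset.Icc 1 l, ((1 + (p * ρ) ^ j) ^ (m j))⁻¹)
        = ∏ i : Fin l, ((1 + (p * ρ) ^ ((i : ℕ) + 1)) ^ (m ((i : ℕ) + 1)))⁻¹ := by
      rw [Sel18.prod_Icc_one_eq_range (fun j => ((1 + (p * ρ) ^ j) ^ (m j))⁻¹) l]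
      exact (Fin.prod_univ_eq_prod_range (fun i => ((1 + (p * ρ) ^ (i + 1)) ^ (m (i + 1)))⁻¹) l).symm
    rw [e1, e2, e3, ← Finset.prod_mul_distrib, ← Finset.prod_mul_distrib]
    apply Finset.prod_congr rfl
    intro i _
    rw [mul_pow]
    ring
  rw [← hval]
  apply (tendsto_const_nhds.mul hTM).congr
  intro n
  rw [PformOf, mul_div_assoc]
end
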